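/- arXiv:2401.08437 — 4 statements merged into one kernel-verified Lean document; each statement's English description precedes it below -/
import Mathlib

section
/- (Fuchsian ODE existence and uniqueness from the singular time.) Let N ≥ 1 be an integer, ε > 0, T > 0. Let A be an N×N real matrix with sup_{σ∈(0,1)} ‖σ^A‖ < ∞, and let F : [0,T) × ℝ^N → ℝ^N be continuous and locally Lipschitz in its second argument. Let v ∈ ℝ^N satisfy Av = 0. Then there exist T_* ∈ (0,T] and a continuous function V : [0,T_*) → ℝ^N, differentiable on (0,T_*), with V(0) = v and t·V′(t) + A·V(t) = t^ε·F(t, V(t)) for all t ∈ (0,T_*); V is the unique continuous function on [0,T_*) with these properties; and there exists C ≥ 0 such that |V(t) − v| ≤ C·t^ε for all t ∈ [0,T_*). -/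
open Real Set Filter Topology MeasureTheory Metric
open scoped NNReal

/-!
With `Y t = t ^ L V t` (`opPow`), the equation becomes `Y' = t ^ (ε - 1) t ^ L F(t, V t)`, so for
`v ∈ ker L` the solutions with `V 0 = v` are exactly the fixed points of the Picard operator
`V ↦ v + ∫₀ᵗ s ^ (ε - 1) (s / t) ^ L F(s, V s) ds` (`fuchsianPicard`). Since `‖(s / t) ^ L‖ ≤ M`
for `s ≤ t`, the integral is `O(t ^ ε)`: on a short interval `[0, τ]` the operator maps a ball
around `v` into itself and is a contraction there, which gives existence and `‖V t - v‖ ≤ C t ^ ε`.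
Two solutions that agree on `[0, b]` differ on `[b, c]` only by an integral over `(b, c]`; near `b`
the local Lipschitz constant of `F` makes this a contraction, so they agree a little further, and a
supremum argument gives uniqueness on all of `[0, τ)`.
-/

section Generic

variable {E : Type*} [NormedAddCommGroup E] [NormedSpace ℝ E]

omit [NormedSpace ℝ E] in
lemma integrableOn_Ioc_of_norm_le_mul_rpow {f : ℝ → E} {a b C ε : ℝ} (hε : 0 < ε)
    (hf : AEStronglyMeasurable f (volume.restrict (Ioc a b)))
    (hfC : ∀ s ∈ Ioc a b, ‖f s‖ ≤ C * s ^ (ε - 1)) : IntegrableOn f (Ioc a b) :=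
  ((intervalIntegral.intervalIntegrable_rpow' (by linarith)).1.const_mul C).mono' hf
    ((ae_restrict_iff' measurableSet_Ioc).2 (Eventually.of_forall hfC))

lemma norm_setIntegral_Ioc_le_of_norm_le_mul_rpow {f : ℝ → E} {a b C ε : ℝ} (hε : 0 < ε)
    (hab : a ≤ b) (hfC : ∀ s ∈ Ioc a b, ‖f s‖ ≤ C * s ^ (ε - 1)) :
    ‖∫ s in Ioc a b, f s‖ ≤ C * ((b ^ ε - a ^ ε) / ε) := by
  calc ‖∫ s in Ioc a b, f s‖ ≤ ∫ s in Ioc a b, C * s ^ (ε - 1) :=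
        norm_integral_le_of_norm_le
          ((intervalIntegral.intervalIntegrable_rpow' (by linarith)).1.const_mul C)
          ((ae_restrict_iff' measurableSet_Ioc).2 (Eventually.of_forall hfC))
    _ = C * ((b ^ ε - a ^ ε) / ε) := by
        rw [integral_const_mul, ← intervalIntegral.integral_of_le hab,
          integral_rpow (Or.inl (by linarith)), sub_add_cancel]

lemma tendsto_mul_rpow_sub_rpow_div (b : ℝ) {ε : ℝ} (hε : 0 < ε) (C : ℝ) :
    Tendsto (fun s => C * ((s ^ ε - b ^ ε) / ε)) (𝓝 b) (𝓝 0) := by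
  have : ContinuousAt (fun s => C * ((s ^ ε - b ^ ε) / ε)) b :=
    (((continuousAt_id.rpow_const (Or.inr hε.le)).sub continuousAt_const).div_const _).const_mul _
  simpa using this.tendsto

lemma hasDerivAt_setIntegral_Ioc [CompleteSpace E] {f : ℝ → E} {a t : ℝ} (hat : a < t)
    (hf : IntegrableOn f (Ioc a t)) (hmeas : StronglyMeasurableAtFilter f (𝓝 t))
    (hcont : ContinuousAt f t) :
    HasDerivAt (fun u => ∫ s in Ioc a u, f s) (f t) t := by
  refine (intervalIntegral.integral_hasDerivAt_right
    ((intervalIntegrable_iff_integrableOn_Ioc_of_le hat.le).2 hf) hmeas hcont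
    ).congr_of_eventuallyEq ?_
  filter_upwards [Ioi_mem_nhds hat] with u hu
  exact (intervalIntegral.integral_of_le hu.le).symm

lemma smul_add_eq_rpow_smul_iff {D w y : E} {s ε : ℝ} (hs : 0 < s) :
    s • D + w = s ^ ε • y ↔ D + s⁻¹ • w = s ^ (ε - 1) • y := by
  rw [← (smul_right_injective E (inv_ne_zero hs.ne')).eq_iff]
  simp only [smul_add, smul_smul, inv_mul_cancel₀ hs.ne', one_smul, rpow_sub_one hs.ne',
    div_eq_inv_mul]

omit [NormedSpace ℝ E] in
lemma eqOn_of_forall_norm_sub_le_mul {X : Type*} [TopologicalSpace X] {S : Set X}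
    (hS : IsCompact S) {f g : X → E} (hf : ContinuousOn f S) (hg : ContinuousOn g S) {q : ℝ}
    (hq : q < 1) (h : ∀ m, (∀ x ∈ S, ‖f x - g x‖ ≤ m) → ∀ x ∈ S, ‖f x - g x‖ ≤ q * m) :
    EqOn f g S := by
  rcases S.eq_empty_or_nonempty with rfl | hne
  · exact eqOn_empty f g
  obtain ⟨x₀, hx₀, hmax⟩ := hS.exists_isMaxOn hne (hf.sub hg).norm
  have hm := h _ (isMaxOn_iff.1 hmax) x₀ hx₀
  have hm0 : ‖f x₀ - g x₀‖ ≤ 0 := by nlinarith [norm_nonneg (f x₀ - g x₀)]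
  intro x hx
  rw [← sub_eq_zero, ← norm_le_zero_iff]
  exact (isMaxOn_iff.1 hmax x hx).trans hm0

omit [NormedSpace ℝ E] in
lemma exists_forall_norm_le_of_lipschitzOnWith {F : ℝ → E → E} {v : E} {a b r ρ : ℝ} {K : ℝ≥0}
    (hFv : ContinuousOn (fun t => F t v) (Icc a b))
    (hK : ∀ t ∈ Icc a b, LipschitzOnWith K (F t) (ball v r)) (hρ : ρ < r) :
    ∃ B, ∀ t ∈ Icc a b, ∀ x ∈ closedBall v ρ, ‖F t x‖ ≤ B := by
  obtain ⟨B₀, hB₀⟩ := isCompact_Icc.exists_bound_of_continuousOn hFv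
  refine ⟨B₀ + K * ρ, fun t ht x hx => (norm_le_insert' _ _).trans (add_le_add (hB₀ t ht) ?_)⟩
  rw [← dist_eq_norm]
  exact ((hK t ht).dist_le_mul x (closedBall_subset_ball hρ hx) v
    (mem_ball_self ((dist_nonneg.trans hx).trans_lt hρ))).trans (mul_le_mul_of_nonneg_left hx K.2)

end Generic

lemma eqOn_Icc_of_forall_exists_eqOn_Icc {X : Type*} [TopologicalSpace X] [T2Space X]
    {f g : ℝ → X} {a t : ℝ} (hat : a ≤ t) (hf : ContinuousOn f (Icc a t))
    (hg : ContinuousOn g (Icc a t)) (ha : f a = g a)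
    (hstep : ∀ b ∈ Ico a t, EqOn f g (Icc a b) → ∃ c ∈ Ioc b t, EqOn f g (Icc b c)) :
    EqOn f g (Icc a t) := by
  set S := {x ∈ Icc a t | EqOn f g (Icc a x)}
  have haS : a ∈ S := ⟨left_mem_Icc.2 hat, by rw [Icc_self]; exact eqOn_singleton.2 ha⟩
  have hbdd : BddAbove S := ⟨t, fun x hx => hx.1.2⟩
  have hab : a ≤ sSup S := le_csSup hbdd haS
  have hbt : sSup S ≤ t := csSup_le ⟨a, haS⟩ fun x hx => hx.1.2
  have hIco : EqOn f g (Ico a (sSup S)) := fun y hy => by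
    obtain ⟨x, hx, hyx⟩ := exists_lt_of_lt_csSup ⟨a, haS⟩ hy.2
    exact hx.2 ⟨hy.1, hyx.le⟩
  have hIcc : EqOn f g (Icc a (sSup S)) := by
    rcases hab.eq_or_lt with hab | hab
    · rw [← hab, Icc_self]
      exact eqOn_singleton.2 ha
    exact hIco.of_subset_closure (hf.mono (Icc_subset_Icc_right hbt))
      (hg.mono (Icc_subset_Icc_right hbt)) Ico_subset_Icc_self (closure_Ico hab.ne).ge
  rcases hbt.eq_or_lt with hbt | hbt
  · exact hbt ▸ hIcc
  obtain ⟨c, hc, hcEq⟩ := hstep _ ⟨hab, hbt⟩ hIcc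
  have hcS : c ∈ S := ⟨⟨hab.trans hc.1.le, hc.2⟩, fun y hy =>
    (le_total y (sSup S)).elim (fun h => hIcc ⟨hy.1, h⟩) fun h => hcEq ⟨h, hy.2⟩⟩
  exact absurd (le_csSup hbdd hcS) (not_le.2 hc.1)

lemma exists_fixed_on_Icc_of_dist_le_half {X : Type*} [MetricSpace X] [CompleteSpace X] {a b : ℝ}
    (hab : a ≤ b) {S : Set X} (hS : IsClosed S) (hSne : S.Nonempty) (Φ : (ℝ → X) → ℝ → X)
    (hΦ : ∀ u, ContinuousOn u (Icc a b) → MapsTo u (Icc a b) S →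
      ContinuousOn (Φ u) (Icc a b) ∧ MapsTo (Φ u) (Icc a b) S)
    (hlip : ∀ u w, ContinuousOn u (Icc a b) → MapsTo u (Icc a b) S →
      ContinuousOn w (Icc a b) → MapsTo w (Icc a b) S → ∀ d,
      (∀ s ∈ Icc a b, dist (u s) (w s) ≤ d) → ∀ s ∈ Icc a b, dist (Φ u s) (Φ w s) ≤ d / 2) :
    ∃ u, Continuous u ∧ MapsTo u (Icc a b) S ∧ EqOn (Φ u) u (Icc a b) := by
  have : CompactSpace (Icc a b) := isCompact_iff_compactSpace.mp isCompact_Icc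
  set 𝒮 : Set C(Icc a b, X) := {f | ∀ x, f x ∈ S}
  have h𝒮 : IsClosed 𝒮 := by
    simp only [𝒮, ofPred_forall]
    exact isClosed_iInter fun x => hS.preimage (continuous_eval_const x)
  have : CompleteSpace 𝒮 := h𝒮.completeSpace_coe
  obtain ⟨x₀, hx₀⟩ := hSne
  have : Nonempty 𝒮 := ⟨⟨ContinuousMap.const _ x₀, fun _ => hx₀⟩⟩
  set ext : 𝒮 → ℝ → X := fun f => IccExtend hab f.1
  have hext_mem : ∀ f : 𝒮, ∀ s (hs : s ∈ Icc a b), ext f s = f.1 ⟨s, hs⟩ :=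
    fun f s hs => IccExtend_of_mem hab _ hs
  have hext : ∀ f : 𝒮, ContinuousOn (ext f) (Icc a b) ∧ MapsTo (ext f) (Icc a b) S :=
    fun f => ⟨f.1.continuous.Icc_extend'.continuousOn, fun s hs => hext_mem f s hs ▸ f.2 _⟩
  set P : 𝒮 → 𝒮 := fun f =>
    ⟨⟨fun s => Φ (ext f) s, (hΦ _ (hext f).1 (hext f).2).1.domRestrict⟩,
      fun s => (hΦ _ (hext f).1 (hext f).2).2 s.2⟩
  have hP : ContractingWith (1 / 2) P := by
    refine ⟨by norm_num, LipschitzWith.of_dist_le_mul fun f g => ?_⟩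
    rw [Subtype.dist_eq, ContinuousMap.dist_le (by positivity)]
    intro s
    have := hlip _ _ (hext f).1 (hext f).2 (hext g).1 (hext g).2 (dist f g)
      (fun s hs => by
        rw [hext_mem f s hs, hext_mem g s hs]
        exact ContinuousMap.dist_apply_le_dist _) s s.2
    exact this.trans_eq (by push_cast; ring)
  set f := ContractingWith.fixedPoint P hP
  refine ⟨ext f, f.1.continuous.Icc_extend', (hext f).2, fun s hs => ?_⟩
  have := congrArg (fun g : 𝒮 => g.1 ⟨s, hs⟩) hP.fixedPoint_isFixedPt
  rw [hext_mem f s hs]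
  exact this

section OpPow

variable {E : Type*} [NormedAddCommGroup E] [NormedSpace ℝ E] [CompleteSpace E] (L : E →L[ℝ] E)

/-- `σ ^ L`. Since `Real.log 0 = 0`, `opPow L 0 = 1`. -/
noncomputable def opPow (σ : ℝ) : E →L[ℝ] E := NormedSpace.exp (Real.log σ • L)

omit [CompleteSpace E] in
@[simp]
lemma opPow_zero : opPow L 0 = 1 := by simp [opPow]

omit [CompleteSpace E] in
@[simp]
lemma opPow_one : opPow L 1 = 1 := by simp [opPow]

lemma opPow_mul {σ ρ : ℝ} (hσ : σ ≠ 0) (hρ : ρ ≠ 0) :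
    opPow L (σ * ρ) = opPow L σ * opPow L ρ := by
  let : NormedAlgebra ℚ (E →L[ℝ] E) := .restrictScalars ℚ ℝ _
  rw [opPow, Real.log_mul hσ hρ, add_smul,
    NormedSpace.exp_add_of_commute (((Commute.refl L).smul_left _).smul_right _)]
  rfl

lemma opPow_inv_apply_opPow_apply (σ : ℝ) (x : E) : opPow L σ⁻¹ (opPow L σ x) = x := by
  let : NormedAlgebra ℚ (E →L[ℝ] E) := .restrictScalars ℚ ℝ _
  have h := NormedSpace.exp_add_of_commute ((Commute.refl (Real.log σ • L)).neg_left)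
  rw [neg_add_cancel, NormedSpace.exp_zero] at h
  rw [← mul_apply_eq_comp, opPow, opPow, Real.log_inv, neg_smul, ← h]
  rfl

lemma opPow_apply_of_map_eq_zero {v : E} (hv : L v = 0) (σ : ℝ) : opPow L σ v = v := by
  have hderiv : ∀ c : ℝ, HasDerivAt (fun c : ℝ => NormedSpace.exp (c • L) v) 0 c := fun c => by
    simpa [hv] using (hasDerivAt_exp_smul_const L c).clm_apply (hasDerivAt_const c v)
  simpa [opPow] using is_const_of_deriv_eq_zero (fun c => (hderiv c).differentiableAt)
    (fun c => (hderiv c).deriv) (Real.log σ) 0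

omit [CompleteSpace E] in
lemma map_opPow_apply (σ : ℝ) (x : E) : L (opPow L σ x) = opPow L σ (L x) :=
  DFunLike.congr_fun ((Commute.refl L).smul_right (Real.log σ)).exp_right.eq x

lemma continuousOn_opPow : ContinuousOn (opPow L) {0}ᶜ :=
  let : NormedAlgebra ℚ (E →L[ℝ] E) := .restrictScalars ℚ ℝ _
  NormedSpace.exp_continuous.comp_continuousOn (continuousOn_log.smul continuousOn_const)

lemma hasDerivAt_opPow {t : ℝ} (ht : t ≠ 0) :
    HasDerivAt (opPow L) (t⁻¹ • (opPow L t * L)) t :=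
  (hasDerivAt_exp_smul_const L (Real.log t)).scomp t (hasDerivAt_log ht)

lemma hasDerivAt_opPow_inv {t : ℝ} (ht : t ≠ 0) :
    HasDerivAt (fun σ => opPow L σ⁻¹) (-t⁻¹ • (opPow L t⁻¹ * L)) t :=
  ((hasDerivAt_opPow L (inv_ne_zero ht)).scomp t (hasDerivAt_inv ht)).congr_deriv <| by
    rw [smul_smul, inv_inv]
    congr 1
    field_simp

omit [CompleteSpace E] in
lemma norm_opPow_le_max {M : ℝ} (hM : ∀ σ ∈ Ioo (0 : ℝ) 1, ‖opPow L σ‖ ≤ M) :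
    ∀ σ ∈ Icc (0 : ℝ) 1, ‖opPow L σ‖ ≤ max M 1 := by
  have hone : ‖(1 : E →L[ℝ] E)‖ ≤ max M 1 :=
    ContinuousLinearMap.norm_id_le.trans (le_max_right M 1)
  rintro σ ⟨hσ0, hσ1⟩
  rcases hσ0.eq_or_lt with rfl | hσ0
  · rwa [opPow_zero]
  rcases hσ1.eq_or_lt with rfl | hσ1
  · rwa [opPow_one]
  exact (hM σ ⟨hσ0, hσ1⟩).trans (le_max_left M 1)

variable {L} {M : ℝ}

lemma continuousOn_opPow_apply (hM : ∀ σ ∈ Icc (0 : ℝ) 1, ‖opPow L σ‖ ≤ M) {W : ℝ → E}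
    {v : E} {t : ℝ} (ht1 : t ≤ 1) (hv : L v = 0) (hW : ContinuousOn W (Icc 0 t))
    (hW0 : W 0 = v) : ContinuousOn (fun s => opPow L s (W s)) (Icc 0 t) := by
  intro s hs
  rcases hs.1.eq_or_lt with rfl | hs0
  · have hlim : Tendsto (fun s => M * ‖W s - v‖) (𝓝[Icc 0 t] 0) (𝓝 0) := by
      simpa [hW0] using (((hW 0 hs).tendsto.sub_const v).norm.const_mul M)
    have hsmall : Tendsto (fun s => opPow L s (W s - v)) (𝓝[Icc 0 t] 0) (𝓝 0) := by
      refine squeeze_zero_norm' ?_ hlim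
      filter_upwards [self_mem_nhdsWithin] with s hs
      exact (ContinuousLinearMap.le_opNorm _ _).trans
        (mul_le_mul_of_nonneg_right (hM s ⟨hs.1, hs.2.trans ht1⟩) (norm_nonneg _))
    simpa [ContinuousWithinAt, hW0, opPow_apply_of_map_eq_zero L hv] using hsmall.add_const v
  exact ((continuousOn_opPow L).continuousAt (isOpen_compl_singleton.mem_nhds hs0.ne')
    ).continuousWithinAt.clm_apply (hW s hs)

lemma hasDerivAt_opPow_apply {W : ℝ → E} {W' y : E} {s ε : ℝ} (hs : 0 < s)
    (hW : HasDerivAt W W' s) (hode : s • W' + L (W s) = s ^ ε • y) :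
    HasDerivAt (fun σ => opPow L σ (W σ)) (s ^ (ε - 1) • opPow L s y) s := by
  refine ((hasDerivAt_opPow L hs.ne').clm_apply hW).congr_deriv ?_
  rw [← map_smul, ← (smul_add_eq_rpow_smul_iff hs).1 hode, map_add, smul_apply,
    mul_apply_eq_comp, map_smul, add_comm]

end OpPow

section Duhamel

variable {E : Type*} [NormedAddCommGroup E] [NormedSpace ℝ E] [CompleteSpace E]

variable (L : E →L[ℝ] E) (ε : ℝ)

noncomputable def duhamelIntegrand (g : ℝ → E) (t s : ℝ) : E :=
  s ^ (ε - 1) • opPow L (s / t) (g s)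

/-- Variation of constants for `t V' + L V = t ^ ε g`, `V 0 = 0`. -/
noncomputable def duhamel (g : ℝ → E) (t : ℝ) : E := ∫ s in Ioc 0 t, duhamelIntegrand L ε g t s

variable {L ε} {M : ℝ}

omit [CompleteSpace E] in
@[simp]
lemma duhamel_zero (g : ℝ → E) : duhamel L ε g 0 = 0 := by simp [duhamel]

lemma continuousOn_duhamelIntegrand {g : ℝ → E} {a b t : ℝ} (ha : 0 ≤ a) (ht : t ≠ 0)
    (hg : ContinuousOn g (Ioc a b)) : ContinuousOn (duhamelIntegrand L ε g t) (Ioc a b) := by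
  have hs : ∀ s ∈ Ioc a b, s ≠ 0 := fun s hs => (ha.trans_lt hs.1).ne'
  refine (continuousOn_id.rpow_const fun s hs' => Or.inl (hs s hs')).smul ?_
  exact ((continuousOn_opPow L).comp (continuousOn_id.div_const t)
    fun s hs' => div_ne_zero (hs s hs') ht).clm_apply hg

omit [CompleteSpace E] in
lemma norm_duhamelIntegrand_le (hM : ∀ σ ∈ Icc (0 : ℝ) 1, ‖opPow L σ‖ ≤ M) {g : ℝ → E}
    {c s t : ℝ} (hs : s ∈ Ioc 0 t) (hgc : ‖g s‖ ≤ c) :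
    ‖duhamelIntegrand L ε g t s‖ ≤ M * c * s ^ (ε - 1) := by
  have hM0 : 0 ≤ M := (norm_nonneg _).trans (hM 1 ⟨zero_le_one, le_rfl⟩)
  have hst : s / t ∈ Icc (0 : ℝ) 1 :=
    ⟨div_nonneg hs.1.le (hs.1.le.trans hs.2), div_le_one_of_le₀ hs.2 (hs.1.le.trans hs.2)⟩
  rw [duhamelIntegrand, norm_smul, norm_of_nonneg (rpow_nonneg hs.1.le _), mul_comm]
  exact mul_le_mul_of_nonneg_right ((ContinuousLinearMap.le_opNorm _ _).trans
    (mul_le_mul (hM _ hst) hgc (norm_nonneg _) hM0)) (rpow_nonneg hs.1.le _)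

omit [CompleteSpace E] in
lemma norm_integral_duhamelIntegrand_le (hM : ∀ σ ∈ Icc (0 : ℝ) 1, ‖opPow L σ‖ ≤ M)
    (hε : 0 < ε) {g : ℝ → E} {a b t c : ℝ} (ha : 0 ≤ a) (hab : a ≤ b) (hbt : b ≤ t)
    (hgc : ∀ s ∈ Ioc a b, ‖g s‖ ≤ c) :
    ‖∫ s in Ioc a b, duhamelIntegrand L ε g t s‖ ≤ M * c * ((b ^ ε - a ^ ε) / ε) :=
  norm_setIntegral_Ioc_le_of_norm_le_mul_rpow hε hab fun s hs =>
    norm_duhamelIntegrand_le hM ⟨ha.trans_lt hs.1, hs.2.trans hbt⟩ (hgc s hs)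

omit [CompleteSpace E] in
lemma norm_duhamel_le (hM : ∀ σ ∈ Icc (0 : ℝ) 1, ‖opPow L σ‖ ≤ M) (hε : 0 < ε) {g : ℝ → E}
    {t c : ℝ} (ht : 0 ≤ t) (hgc : ∀ s ∈ Ioc 0 t, ‖g s‖ ≤ c) :
    ‖duhamel L ε g t‖ ≤ M * c * (t ^ ε / ε) := by
  simpa [duhamel, zero_rpow hε.ne'] using
    norm_integral_duhamelIntegrand_le hM hε le_rfl ht le_rfl hgc

lemma integrableOn_duhamelIntegrand (hM : ∀ σ ∈ Icc (0 : ℝ) 1, ‖opPow L σ‖ ≤ M) (hε : 0 < ε)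
    {g : ℝ → E} {t t' : ℝ} (ht : 0 ≤ t) (htt' : t ≤ t') (hg : ContinuousOn g (Icc 0 t)) :
    IntegrableOn (duhamelIntegrand L ε g t') (Ioc 0 t) := by
  rcases ht.eq_or_lt with rfl | ht
  · simp
  obtain ⟨c, hc⟩ := isCompact_Icc.exists_bound_of_continuousOn hg
  refine integrableOn_Ioc_of_norm_le_mul_rpow hε ?_ fun s hs =>
    norm_duhamelIntegrand_le hM ⟨hs.1, hs.2.trans htt'⟩ (hc s (Ioc_subset_Icc_self hs))
  exact (continuousOn_duhamelIntegrand le_rfl (ht.trans_le htt').ne'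
    (hg.mono Ioc_subset_Icc_self)).aestronglyMeasurable measurableSet_Ioc

lemma norm_duhamel_sub_duhamel_le (hM : ∀ σ ∈ Icc (0 : ℝ) 1, ‖opPow L σ‖ ≤ M) (hε : 0 < ε)
    {g₁ g₂ : ℝ → E} {b t c : ℝ} (hb : 0 ≤ b) (hbt : b ≤ t) (hg₁ : ContinuousOn g₁ (Icc 0 t))
    (hg₂ : ContinuousOn g₂ (Icc 0 t)) (h : EqOn g₁ g₂ (Ioc 0 b))
    (hc : ∀ s ∈ Ioc b t, ‖g₁ s - g₂ s‖ ≤ c) :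
    ‖duhamel L ε g₁ t - duhamel L ε g₂ t‖ ≤ M * c * ((t ^ ε - b ^ ε) / ε) := by
  have ht := hb.trans hbt
  rw [duhamel, duhamel, ← integral_sub (integrableOn_duhamelIntegrand hM hε ht le_rfl hg₁)
    (integrableOn_duhamelIntegrand hM hε ht le_rfl hg₂)]
  have hsub : ∀ s, duhamelIntegrand L ε g₁ t s - duhamelIntegrand L ε g₂ t s =
      duhamelIntegrand L ε (g₁ - g₂) t s := fun s => by
    simp [duhamelIntegrand, smul_sub]
  simp_rw [hsub]
  have hzero : ∀ s ∈ Ioc 0 t \ Ioc b t, duhamelIntegrand L ε (g₁ - g₂) t s = 0 := by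
    rintro s ⟨hs, hsb⟩
    have hsb : s ≤ b := not_lt.1 fun h => hsb ⟨h, hs.2⟩
    simp [duhamelIntegrand, h ⟨hs.1, hsb⟩]
  rw [setIntegral_eq_of_subset_of_forall_sdiff_eq_zero measurableSet_Ioc
    (Ioc_subset_Ioc_left hb) hzero]
  exact norm_integral_duhamelIntegrand_le hM hε hb hbt le_rfl hc

lemma integrableOn_rpow_smul_opPow_apply (hM : ∀ σ ∈ Icc (0 : ℝ) 1, ‖opPow L σ‖ ≤ M)
    (hε : 0 < ε) {g : ℝ → E} {t : ℝ} (ht : 0 ≤ t) (ht1 : t ≤ 1) (hg : ContinuousOn g (Icc 0 t)) :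
    IntegrableOn (fun s => s ^ (ε - 1) • opPow L s (g s)) (Ioc 0 t) :=
  (integrableOn_duhamelIntegrand hM hε ht ht1 hg).congr_fun
    (fun s _ => by simp [duhamelIntegrand]) measurableSet_Ioc

lemma eqOn_duhamel_opPow_inv (hM : ∀ σ ∈ Icc (0 : ℝ) 1, ‖opPow L σ‖ ≤ M) (hε : 0 < ε)
    {g : ℝ → E} {τ : ℝ} (hτ1 : τ ≤ 1) (hg : ContinuousOn g (Icc 0 τ)) :
    EqOn (duhamel L ε g)
      (fun t => opPow L t⁻¹ (∫ s in Ioc 0 t, s ^ (ε - 1) • opPow L s (g s))) (Icc 0 τ) := by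
  intro t ht
  dsimp only
  rw [duhamel, ← ContinuousLinearMap.integral_comp_comm _ <| integrableOn_rpow_smul_opPow_apply
    hM hε ht.1 (ht.2.trans hτ1) (hg.mono (Icc_subset_Icc_right ht.2))]
  refine setIntegral_congr_fun measurableSet_Ioc fun s hs => ?_
  rw [duhamelIntegrand, map_smul, ← mul_apply_eq_comp,
    ← opPow_mul L (inv_ne_zero (hs.1.trans_le hs.2).ne') hs.1.ne', inv_mul_eq_div]

lemma continuousOn_duhamel (hM : ∀ σ ∈ Icc (0 : ℝ) 1, ‖opPow L σ‖ ≤ M) (hε : 0 < ε)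
    {g : ℝ → E} {τ : ℝ} (hτ1 : τ ≤ 1) (hg : ContinuousOn g (Icc 0 τ)) :
    ContinuousOn (duhamel L ε g) (Icc 0 τ) := by
  intro t ht
  rcases ht.1.eq_or_lt with rfl | ht0
  · obtain ⟨c, hc⟩ := isCompact_Icc.exists_bound_of_continuousOn hg
    have hlim : Tendsto (fun t => M * c * ((t ^ ε - 0 ^ ε) / ε)) (𝓝[Icc 0 τ] 0) (𝓝 0) :=
      (tendsto_mul_rpow_sub_rpow_div 0 hε _).mono_left nhdsWithin_le_nhds
    rw [ContinuousWithinAt, duhamel_zero]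
    refine squeeze_zero_norm' ?_ hlim
    filter_upwards [self_mem_nhdsWithin] with s hs
    simpa [zero_rpow hε.ne'] using
      norm_duhamel_le hM hε hs.1 fun s' hs' => hc s' ⟨hs'.1.le, hs'.2.trans hs.2⟩
  have hG : ContinuousOn (fun t => ∫ s in Ioc 0 t, s ^ (ε - 1) • opPow L s (g s)) (Icc 0 τ) :=
    intervalIntegral.continuousOn_primitive <| (integrableOn_Icc_iff_integrableOn_Ioc).2 <|
      integrableOn_rpow_smul_opPow_apply hM hε (ht.1.trans ht.2) hτ1 hg
  have hinv : ContinuousAt (fun t => opPow L t⁻¹) t :=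
    ((continuousOn_opPow L).continuousAt (isOpen_compl_singleton.mem_nhds
      (inv_ne_zero ht0.ne'))).comp (continuousAt_inv₀ ht0.ne')
  have hfac := eqOn_duhamel_opPow_inv hM hε hτ1 hg
  exact (hinv.continuousWithinAt.clm_apply (hG t ht)).congr hfac (hfac ht)

lemma hasDerivAt_duhamel (hM : ∀ σ ∈ Icc (0 : ℝ) 1, ‖opPow L σ‖ ≤ M) (hε : 0 < ε)
    {g : ℝ → E} {τ t : ℝ} (hτ1 : τ ≤ 1) (hg : ContinuousOn g (Icc 0 τ)) (ht : t ∈ Ioo 0 τ) :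
    ∃ D, HasDerivAt (duhamel L ε g) D t ∧ t • D + L (duhamel L ε g t) = t ^ ε • g t := by
  set h := fun s => s ^ (ε - 1) • opPow L s (g s)
  have hτ : Ioc 0 τ ∈ 𝓝 t := Ioc_mem_nhds ht.1 ht.2
  have hhc : ContinuousOn h (Ioc 0 τ) :=
    (continuousOn_duhamelIntegrand (L := L) (ε := ε) le_rfl one_ne_zero
      (hg.mono Ioc_subset_Icc_self)).congr fun s _ => by simp [h, duhamelIntegrand]
  have hG : HasDerivAt (fun u => ∫ s in Ioc 0 u, h s) (h t) t :=
    hasDerivAt_setIntegral_Ioc ht.1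
      (integrableOn_rpow_smul_opPow_apply hM hε ht.1.le (ht.2.le.trans hτ1)
        (hg.mono (Icc_subset_Icc_right ht.2.le)))
      ⟨_, hτ, hhc.aestronglyMeasurable measurableSet_Ioc⟩ (hhc.continuousAt hτ)
  have hfac : duhamel L ε g =ᶠ[𝓝 t] fun u => opPow L u⁻¹ (∫ s in Ioc 0 u, h s) :=
    eventually_of_mem (Icc_mem_nhds ht.1 ht.2) (eqOn_duhamel_opPow_inv hM hε hτ1 hg)
  refine ⟨_, ((hasDerivAt_opPow_inv L ht.1.ne').clm_apply hG).congr_of_eventuallyEq hfac, ?_⟩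
  rw [hfac.eq_of_nhds, smul_add_eq_rpow_smul_iff ht.1]
  simp only [h, neg_smul, neg_apply, smul_apply, mul_apply_eq_comp, map_smul,
    opPow_inv_apply_opPow_apply, map_opPow_apply]
  abel

end Duhamel

section Solution

variable {E : Type*} [NormedAddCommGroup E] [NormedSpace ℝ E] [CompleteSpace E]

structure IsFuchsianSolution (L : E →L[ℝ] E) (ε : ℝ) (F : ℝ → E → E) (v : E) (τ : ℝ)
    (W : ℝ → E) : Prop where
  continuousOn : ContinuousOn W (Ico 0 τ)
  apply_zero : W 0 = v
  hasDerivAt : ∀ t ∈ Ioo 0 τ, ∃ W' : E, HasDerivAt W W' t ∧ t • W' + L (W t) = t ^ ε • F t (W t)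

noncomputable def fuchsianPicard (L : E →L[ℝ] E) (ε : ℝ) (F : ℝ → E → E) (v : E) (W : ℝ → E)
    (t : ℝ) : E :=
  v + duhamel L ε (fun s => F s (W s)) t

variable {L : E →L[ℝ] E} {ε M τ : ℝ} {F : ℝ → E → E} {v : E} {W V : ℝ → E}

lemma IsFuchsianSolution.eqOn_fuchsianPicard (hM : ∀ σ ∈ Icc (0 : ℝ) 1, ‖opPow L σ‖ ≤ M)
    (hε : 0 < ε) (hτ1 : τ ≤ 1) (hv : L v = 0) (hW : IsFuchsianSolution L ε F v τ W)
    (hg : ContinuousOn (fun s => F s (W s)) (Ico 0 τ)) :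
    EqOn W (fuchsianPicard L ε F v W) (Ico 0 τ) := by
  intro t ht
  have hsub : Icc 0 t ⊆ Ico 0 τ := Icc_subset_Ico_right ht.2
  have ht1 : t ≤ 1 := ht.2.le.trans hτ1
  have hFTC : ∫ s in Ioc 0 t, s ^ (ε - 1) • opPow L s (F s (W s)) = opPow L t (W t) - v := by
    rw [← intervalIntegral.integral_of_le ht.1,
      intervalIntegral.integral_eq_sub_of_hasDerivAt_of_le ht.1
        (continuousOn_opPow_apply hM ht1 hv (hW.continuousOn.mono hsub) hW.apply_zero)
        (fun s hs => ?_) ((intervalIntegrable_iff_integrableOn_Ioc_of_le ht.1).2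
          (integrableOn_rpow_smul_opPow_apply hM hε ht.1 ht1 (hg.mono hsub))),
      opPow_zero, one_apply_eq_self, hW.apply_zero]
    obtain ⟨W', hW', hode⟩ := hW.hasDerivAt s ⟨hs.1, hs.2.trans ht.2⟩
    exact hasDerivAt_opPow_apply hs.1 hW' hode
  rw [fuchsianPicard, eqOn_duhamel_opPow_inv hM hε ht1 (hg.mono hsub) ⟨ht.1, le_rfl⟩]
  dsimp only
  rw [hFTC, map_sub, opPow_inv_apply_opPow_apply, opPow_apply_of_map_eq_zero L hv,
    add_sub_cancel]

lemma IsFuchsianSolution.of_eqOn_fuchsianPicard (hM : ∀ σ ∈ Icc (0 : ℝ) 1, ‖opPow L σ‖ ≤ M)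
    (hε : 0 < ε) (hτ0 : 0 ≤ τ) (hτ1 : τ ≤ 1) (hv : L v = 0)
    (hg : ContinuousOn (fun s => F s (W s)) (Icc 0 τ))
    (hW : EqOn W (fuchsianPicard L ε F v W) (Icc 0 τ)) :
    IsFuchsianSolution L ε F v τ W where
  continuousOn :=
    ((continuousOn_const.add (continuousOn_duhamel hM hε hτ1 hg)).congr hW).mono
      Ico_subset_Icc_self
  apply_zero := by simpa [fuchsianPicard] using hW ⟨le_rfl, hτ0⟩
  hasDerivAt t ht := by
    obtain ⟨D, hD, hode⟩ := hasDerivAt_duhamel hM hε hτ1 hg ht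
    refine ⟨D, (hD.const_add v).congr_of_eventuallyEq
      (eventually_of_mem (Icc_mem_nhds ht.1 ht.2) hW), ?_⟩
    have hLW : L (W t) = L (duhamel L ε (fun s => F s (W s)) t) := by
      rw [hW (Ioo_subset_Icc_self ht), fuchsianPicard, map_add, hv, zero_add]
    rw [hLW, hode]

omit [CompleteSpace E] in
lemma norm_fuchsianPicard_sub_le (hM : ∀ σ ∈ Icc (0 : ℝ) 1, ‖opPow L σ‖ ≤ M) (hε : 0 < ε)
    {t B : ℝ} (ht : 0 ≤ t) (hB : ∀ s ∈ Ioc 0 t, ‖F s (W s)‖ ≤ B) :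
    ‖fuchsianPicard L ε F v W t - v‖ ≤ M * B * (t ^ ε / ε) := by
  rw [fuchsianPicard, add_sub_cancel_left]
  exact norm_duhamel_le hM hε ht hB

lemma dist_fuchsianPicard_le (hM : ∀ σ ∈ Icc (0 : ℝ) 1, ‖opPow L σ‖ ≤ M) (hε : 0 < ε)
    {b t c : ℝ} (hb : 0 ≤ b) (hbt : b ≤ t) (hgW : ContinuousOn (fun s => F s (W s)) (Icc 0 t))
    (hgV : ContinuousOn (fun s => F s (V s)) (Icc 0 t)) (hWV : EqOn W V (Ioc 0 b))
    (hc : ∀ s ∈ Ioc b t, dist (F s (W s)) (F s (V s)) ≤ c) :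
    dist (fuchsianPicard L ε F v W t) (fuchsianPicard L ε F v V t) ≤
      M * c * ((t ^ ε - b ^ ε) / ε) := by
  rw [fuchsianPicard, fuchsianPicard, dist_add_left, dist_eq_norm]
  exact norm_duhamel_sub_duhamel_le hM hε hb hbt hgW hgV (fun s hs => by simp only [hWV hs])
    fun s hs => dist_eq_norm (F s (W s)) _ ▸ hc s hs

lemma eqOn_Icc_of_lipschitzOnWith (hM : ∀ σ ∈ Icc (0 : ℝ) 1, ‖opPow L σ‖ ≤ M) (hε : 0 < ε)
    {S : Set E} {K : ℝ≥0} {b c : ℝ} (hb : 0 ≤ b) (hbc : b ≤ c)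
    (hWc : ContinuousOn W (Icc 0 c)) (hVc : ContinuousOn V (Icc 0 c))
    (hgW : ContinuousOn (fun s => F s (W s)) (Icc 0 c))
    (hgV : ContinuousOn (fun s => F s (V s)) (Icc 0 c))
    (hW : EqOn W (fuchsianPicard L ε F v W) (Icc 0 c))
    (hV : EqOn V (fuchsianPicard L ε F v V) (Icc 0 c))
    (hK : ∀ s ∈ Icc b c, LipschitzOnWith K (F s) S) (hWS : MapsTo W (Icc b c) S)
    (hVS : MapsTo V (Icc b c) S) (hq : M * K * ((c ^ ε - b ^ ε) / ε) < 1)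
    (hWV : EqOn W V (Icc 0 b)) : EqOn W V (Icc b c) := by
  have hM0 : 0 ≤ M := (norm_nonneg _).trans (hM 1 ⟨zero_le_one, le_rfl⟩)
  have hbc' : Icc b c ⊆ Icc 0 c := Icc_subset_Icc_left hb
  refine eqOn_of_forall_norm_sub_le_mul isCompact_Icc (hWc.mono hbc') (hVc.mono hbc') hq
    fun m hm s hs => ?_
  have hm0 : 0 ≤ m := (norm_nonneg _).trans (hm b (left_mem_Icc.2 hbc))
  have hsub : Icc 0 s ⊆ Icc 0 c := Icc_subset_Icc_right hs.2
  have hlip : ∀ s' ∈ Ioc b s, dist (F s' (W s')) (F s' (V s')) ≤ K * m := fun s' hs' => by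
    have hs'' : s' ∈ Icc b c := ⟨hs'.1.le, hs'.2.trans hs.2⟩
    refine ((hK s' hs'').dist_le_mul _ (hWS hs'') _ (hVS hs'')).trans ?_
    rw [dist_eq_norm]
    exact mul_le_mul_of_nonneg_left (hm s' hs'') K.2
  rw [hW (hbc' hs), hV (hbc' hs), ← dist_eq_norm]
  calc _ ≤ M * (K * m) * ((s ^ ε - b ^ ε) / ε) :=
        dist_fuchsianPicard_le hM hε hb hs.1 (hgW.mono hsub) (hgV.mono hsub)
          (hWV.mono Ioc_subset_Icc_self) hlip
    _ = M * K * ((s ^ ε - b ^ ε) / ε) * m := by ring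
    _ ≤ M * K * ((c ^ ε - b ^ ε) / ε) * m := by
        have hsc : s ^ ε ≤ c ^ ε := rpow_le_rpow (hb.trans hs.1) hs.2 hε.le
        gcongr

lemma exists_eqOn_Icc_of_eqOn_Icc (hM : ∀ σ ∈ Icc (0 : ℝ) 1, ‖opPow L σ‖ ≤ M) (hε : 0 < ε)
    {b t : ℝ} (hb : 0 ≤ b) (hbt : b < t)
    (hWc : ContinuousOn W (Icc 0 t)) (hVc : ContinuousOn V (Icc 0 t))
    (hgW : ContinuousOn (fun s => F s (W s)) (Icc 0 t))
    (hgV : ContinuousOn (fun s => F s (V s)) (Icc 0 t))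
    (hW : EqOn W (fuchsianPicard L ε F v W) (Icc 0 t))
    (hV : EqOn V (fuchsianPicard L ε F v V) (Icc 0 t))
    (hF : ∀ x, ∃ (K : ℝ≥0) (r : ℝ), 0 < r ∧ ∀ s ∈ Icc 0 t, LipschitzOnWith K (F s) (ball x r))
    (hWV : EqOn W V (Icc 0 b)) :
    ∃ c ∈ Ioc b t, EqOn W V (Icc b c) := by
  obtain ⟨K, r, hr, hK⟩ := hF (W b)
  have hb' : b ∈ Icc 0 t := ⟨hb, hbt.le⟩
  have hIcc : Icc 0 t ∈ 𝓝[≥] b := mem_of_superset (Icc_mem_nhdsGE hbt) (Icc_subset_Icc_left hb)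
  have hWnear : ∀ᶠ c in 𝓝[≥] b, W c ∈ ball (W b) r :=
    ((hWc b hb').mono_of_mem_nhdsWithin hIcc).eventually (ball_mem_nhds _ hr)
  have hVnear : ∀ᶠ c in 𝓝[≥] b, V c ∈ ball (W b) r := by
    rw [hWV ⟨hb, le_rfl⟩]
    exact ((hVc b hb').mono_of_mem_nhdsWithin hIcc).eventually (ball_mem_nhds _ hr)
  have hsmall : ∀ᶠ c in 𝓝[≥] b, M * K * ((c ^ ε - b ^ ε) / ε) < 1 :=
    ((tendsto_mul_rpow_sub_rpow_div b hε _).mono_left nhdsWithin_le_nhds).eventually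
      (gt_mem_nhds one_pos)
  obtain ⟨u, hbu, hu⟩ := mem_nhdsGE_iff_exists_Icc_subset.1
    ((eventually_mem_set.2 hIcc).and (hWnear.and (hVnear.and hsmall)))
  have hbc : b < min u t := lt_min hbu hbt
  have hcu : Icc b (min u t) ⊆ Icc b u := Icc_subset_Icc_right (min_le_left _ _)
  have hct : Icc 0 (min u t) ⊆ Icc 0 t := Icc_subset_Icc_right (min_le_right _ _)
  refine ⟨min u t, ⟨hbc, min_le_right _ _⟩, eqOn_Icc_of_lipschitzOnWith hM hε hb hbc.le
    (hWc.mono hct) (hVc.mono hct) (hgW.mono hct) (hgV.mono hct) (hW.mono hct) (hV.mono hct)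
    (fun s hs => hK s (hu (hcu hs)).1) (fun s hs => (hu (hcu hs)).2.1)
    (fun s hs => (hu (hcu hs)).2.2.1) (hu (hcu (right_mem_Icc.2 hbc.le))).2.2.2 hWV⟩

theorem IsFuchsianSolution.eqOn (hM : ∀ σ ∈ Icc (0 : ℝ) 1, ‖opPow L σ‖ ≤ M) (hε : 0 < ε)
    {T : ℝ} (hτ1 : τ ≤ 1) (hτT : τ ≤ T)
    (hFcont : ContinuousOn (fun q : ℝ × E => F q.1 q.2) (Ico 0 T ×ˢ univ))
    (hFlip : ∀ x : E, ∃ (K : ℝ≥0) (r : ℝ), 0 < r ∧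
      ∀ t ∈ Ico (0 : ℝ) T, LipschitzOnWith K (F t) (ball x r))
    (hv : L v = 0) (hW : IsFuchsianSolution L ε F v τ W)
    (hV : IsFuchsianSolution L ε F v τ V) : EqOn W V (Ico 0 τ) := by
  have hF : ∀ {U : ℝ → E}, ContinuousOn U (Ico 0 τ) →
      ContinuousOn (fun s => F s (U s)) (Ico 0 τ) := fun hU =>
    hFcont.comp (continuousOn_id.prodMk hU) fun s hs => ⟨⟨hs.1, hs.2.trans_le hτT⟩, trivial⟩
  have hWeq := hW.eqOn_fuchsianPicard hM hε hτ1 hv (hF hW.continuousOn)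
  have hVeq := hV.eqOn_fuchsianPicard hM hε hτ1 hv (hF hV.continuousOn)
  intro t ht
  have hsub : Icc 0 t ⊆ Ico 0 τ := Icc_subset_Ico_right ht.2
  refine eqOn_Icc_of_forall_exists_eqOn_Icc ht.1 (hW.continuousOn.mono hsub)
    (hV.continuousOn.mono hsub) (hW.apply_zero.trans hV.apply_zero.symm)
    (fun b hb hWV => ?_) ⟨ht.1, le_rfl⟩
  refine exists_eqOn_Icc_of_eqOn_Icc hM hε hb.1 hb.2 (hW.continuousOn.mono hsub)
    (hV.continuousOn.mono hsub) ((hF hW.continuousOn).mono hsub) ((hF hV.continuousOn).mono hsub)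
    (hWeq.mono hsub) (hVeq.mono hsub) (fun x => ?_) hWV
  obtain ⟨K, r, hr, hK⟩ := hFlip x
  exact ⟨K, r, hr, fun s hs => hK s ⟨hs.1, (hsub hs).2.trans_le hτT⟩⟩

omit [CompleteSpace E] in
lemma mapsTo_fuchsianPicard (hM : ∀ σ ∈ Icc (0 : ℝ) 1, ‖opPow L σ‖ ≤ M) (hε : 0 < ε)
    {r B : ℝ} (hFB : ∀ t ∈ Icc 0 τ, ∀ x ∈ closedBall v r, ‖F t x‖ ≤ B)
    (hBr : M * B * (τ ^ ε / ε) ≤ r) (hWS : MapsTo W (Icc 0 τ) (closedBall v r)) :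
    MapsTo (fuchsianPicard L ε F v W) (Icc 0 τ) (closedBall v r) := by
  intro t ht
  have hM0 : 0 ≤ M := (norm_nonneg _).trans (hM 1 ⟨zero_le_one, le_rfl⟩)
  have hB0 : 0 ≤ B := (norm_nonneg _).trans (hFB t ht _ (hWS ht))
  rw [mem_closedBall, dist_eq_norm]
  calc _ ≤ M * B * (t ^ ε / ε) := norm_fuchsianPicard_sub_le hM hε ht.1 fun s hs =>
          hFB s ⟨hs.1.le, hs.2.trans ht.2⟩ _ (hWS ⟨hs.1.le, hs.2.trans ht.2⟩)
    _ ≤ M * B * (τ ^ ε / ε) := by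
        have : t ^ ε ≤ τ ^ ε := rpow_le_rpow ht.1 ht.2 hε.le
        gcongr
    _ ≤ r := hBr

lemma dist_fuchsianPicard_le_half (hM : ∀ σ ∈ Icc (0 : ℝ) 1, ‖opPow L σ‖ ≤ M) (hε : 0 < ε)
    {S : Set E} {K : ℝ≥0} {d : ℝ} (hFK : ∀ t ∈ Icc 0 τ, LipschitzOnWith K (F t) S)
    (hKτ : M * K * (τ ^ ε / ε) ≤ 1 / 2) (hgW : ContinuousOn (fun s => F s (W s)) (Icc 0 τ))
    (hgV : ContinuousOn (fun s => F s (V s)) (Icc 0 τ)) (hWS : MapsTo W (Icc 0 τ) S)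
    (hVS : MapsTo V (Icc 0 τ) S) (hd : ∀ s ∈ Icc 0 τ, dist (W s) (V s) ≤ d) :
    ∀ t ∈ Icc 0 τ, dist (fuchsianPicard L ε F v W t) (fuchsianPicard L ε F v V t) ≤ d / 2 := by
  intro t ht
  have hM0 : 0 ≤ M := (norm_nonneg _).trans (hM 1 ⟨zero_le_one, le_rfl⟩)
  have hd0 : 0 ≤ d := dist_nonneg.trans (hd t ht)
  have hsub : Icc 0 t ⊆ Icc 0 τ := Icc_subset_Icc_right ht.2
  have hlip : ∀ s ∈ Ioc 0 t, dist (F s (W s)) (F s (V s)) ≤ K * d := fun s hs => by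
    have hs' := hsub (Ioc_subset_Icc_self hs)
    exact ((hFK s hs').dist_le_mul _ (hWS hs') _ (hVS hs')).trans
      (mul_le_mul_of_nonneg_left (hd s hs') K.2)
  calc _ ≤ M * (K * d) * ((t ^ ε - 0 ^ ε) / ε) :=
        dist_fuchsianPicard_le hM hε le_rfl ht.1 (hgW.mono hsub) (hgV.mono hsub) (by simp) hlip
    _ = M * K * (t ^ ε / ε) * d := by rw [zero_rpow hε.ne', sub_zero]; ring
    _ ≤ M * K * (τ ^ ε / ε) * d := by
        have : t ^ ε ≤ τ ^ ε := rpow_le_rpow ht.1 ht.2 hε.le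
        gcongr
    _ ≤ d / 2 := by nlinarith

lemma exists_eqOn_fuchsianPicard (hM : ∀ σ ∈ Icc (0 : ℝ) 1, ‖opPow L σ‖ ≤ M) (hε : 0 < ε)
    {r B : ℝ} {K : ℝ≥0} (hτ0 : 0 ≤ τ) (hτ1 : τ ≤ 1) (hr : 0 ≤ r)
    (hFc : ContinuousOn (fun q : ℝ × E => F q.1 q.2) (Icc 0 τ ×ˢ univ))
    (hFB : ∀ t ∈ Icc 0 τ, ∀ x ∈ closedBall v r, ‖F t x‖ ≤ B)
    (hFK : ∀ t ∈ Icc 0 τ, LipschitzOnWith K (F t) (closedBall v r))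
    (hBr : M * B * (τ ^ ε / ε) ≤ r) (hKτ : M * K * (τ ^ ε / ε) ≤ 1 / 2) :
    ∃ V : ℝ → E, Continuous V ∧ MapsTo V (Icc 0 τ) (closedBall v r) ∧
      EqOn V (fuchsianPicard L ε F v V) (Icc 0 τ) := by
  have hg : ∀ {u : ℝ → E}, ContinuousOn u (Icc 0 τ) →
      ContinuousOn (fun s => F s (u s)) (Icc 0 τ) := fun hu =>
    hFc.comp (continuousOn_id.prodMk hu) fun s hs => ⟨hs, trivial⟩
  obtain ⟨V, hVc, hVS, hV⟩ := exists_fixed_on_Icc_of_dist_le_half hτ0 isClosed_closedBall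
    ⟨v, mem_closedBall_self hr⟩ (fuchsianPicard L ε F v)
    (fun u hu huS => ⟨continuousOn_const.add (continuousOn_duhamel hM hε hτ1 (hg hu)),
      mapsTo_fuchsianPicard hM hε hFB hBr huS⟩)
    fun u w hu huS hw hwS d hd =>
      dist_fuchsianPicard_le_half hM hε hFK hKτ (hg hu) (hg hw) huS hwS hd
  exact ⟨V, hVc, hVS, hV.symm⟩

lemma eventually_mul_rpow_div_le (hε : 0 < ε) (C : ℝ) {δ : ℝ} (hδ : 0 < δ) :
    ∀ᶠ τ in 𝓝[>] 0, C * (τ ^ ε / ε) ≤ δ := by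
  simpa [zero_rpow hε.ne'] using ((tendsto_mul_rpow_sub_rpow_div 0 hε C).mono_left
    nhdsWithin_le_nhds).eventually (ge_mem_nhds hδ)

theorem exists_isFuchsianSolution (hM : ∀ σ ∈ Icc (0 : ℝ) 1, ‖opPow L σ‖ ≤ M) (hε : 0 < ε)
    {T : ℝ} (hT : 0 < T)
    (hFcont : ContinuousOn (fun q : ℝ × E => F q.1 q.2) (Ico 0 T ×ˢ univ))
    (hFlip : ∀ x : E, ∃ (K : ℝ≥0) (r : ℝ), 0 < r ∧
      ∀ t ∈ Ico (0 : ℝ) T, LipschitzOnWith K (F t) (ball x r))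
    (hv : L v = 0) :
    ∃ τ, 0 < τ ∧ τ ≤ T ∧ τ ≤ 1 ∧ ∃ V : ℝ → E, IsFuchsianSolution L ε F v τ V ∧
      ∃ C, 0 ≤ C ∧ ∀ t ∈ Ico 0 τ, ‖V t - v‖ ≤ C * t ^ ε := by
  obtain ⟨K, r, hr, hK⟩ := hFlip v
  set T₀ := min (T / 2) 1
  have hT₀0 : 0 < T₀ := lt_min (half_pos hT) one_pos
  have hT₀ : Icc 0 T₀ ⊆ Ico 0 T := fun t ht =>
    ⟨ht.1, ht.2.trans_lt ((min_le_left _ _).trans_lt (half_lt_self hT))⟩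
  obtain ⟨B, hFB⟩ := exists_forall_norm_le_of_lipschitzOnWith (F := F)
    (hFcont.comp (continuousOn_id.prodMk continuousOn_const) fun t ht => ⟨hT₀ ht, trivial⟩)
    (fun t ht => hK t (hT₀ ht)) (half_lt_self hr)
  obtain ⟨τ, hBτ, hKτ, hτT₀, hτ0⟩ := ((eventually_mul_rpow_div_le hε _ (half_pos hr)).and
    ((eventually_mul_rpow_div_le hε _ one_half_pos).and
      (((ge_mem_nhds hT₀0).filter_mono nhdsWithin_le_nhds).and self_mem_nhdsWithin))).exists
  have hτ1 : τ ≤ 1 := hτT₀.trans (min_le_right _ _)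
  have hτT : Icc 0 τ ⊆ Icc 0 T₀ := Icc_subset_Icc_right hτT₀
  obtain ⟨V, hVc, hVS, hV⟩ := exists_eqOn_fuchsianPicard hM hε (le_of_lt hτ0) hτ1
    (half_pos hr).le (hFcont.mono (prod_mono (hτT.trans hT₀) subset_rfl))
    (fun t ht => hFB t (hτT ht))
    (fun t ht => (hK t (hT₀ (hτT ht))).mono (closedBall_subset_ball (half_lt_self hr))) hBτ hKτ
  have hg : ContinuousOn (fun s => F s (V s)) (Icc 0 τ) :=
    hFcont.comp (continuousOn_id.prodMk hVc.continuousOn) fun s hs => ⟨hT₀ (hτT hs), trivial⟩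
  have hM0 : 0 ≤ M := (norm_nonneg _).trans (hM 1 ⟨zero_le_one, le_rfl⟩)
  have hB0 : 0 ≤ B :=
    (norm_nonneg _).trans (hFB 0 ⟨le_rfl, hT₀0.le⟩ v (mem_closedBall_self (half_pos hr).le))
  refine ⟨τ, hτ0, hτT₀.trans ((min_le_left _ _).trans (half_le_self hT.le)), hτ1, V,
    IsFuchsianSolution.of_eqOn_fuchsianPicard hM hε (le_of_lt hτ0) hτ1 hv hg hV, M * B / ε,
    by positivity, fun t ht => ?_⟩
  rw [hV (Ico_subset_Icc_self ht)]
  calc _ ≤ M * B * (t ^ ε / ε) := norm_fuchsianPicard_sub_le hM hε ht.1 fun s hs =>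
          hFB s (hτT ⟨hs.1.le, hs.2.trans ht.2.le⟩) _ (hVS ⟨hs.1.le, hs.2.trans ht.2.le⟩)
    _ = M * B / ε * t ^ ε := by ring

end Solution

theorem fuchsian_ode_existence_uniqueness_general (N : ℕ) (ε : ℝ) (hε : 0 < ε)
    (T : ℝ) (hT : 0 < T) (A : Matrix (Fin N) (Fin N) ℝ)
    (hA : ∃ M : ℝ, ∀ σ ∈ Set.Ioo (0:ℝ) 1,
      ‖NormedSpace.exp (Real.log σ • (Matrix.toEuclideanCLM (𝕜 := ℝ) A))‖ ≤ M)
    (F : ℝ → EuclideanSpace ℝ (Fin N) → EuclideanSpace ℝ (Fin N))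
    (hFcont : ContinuousOn (fun q : ℝ × EuclideanSpace ℝ (Fin N) => F q.1 q.2)
      (Set.Ico 0 T ×ˢ Set.univ))
    (hFlip : ∀ x : EuclideanSpace ℝ (Fin N), ∃ (K : NNReal) (r : ℝ), 0 < r ∧
      ∀ t ∈ Set.Ico (0:ℝ) T, LipschitzOnWith K (F t) (Metric.ball x r))
    (v : EuclideanSpace ℝ (Fin N)) (hv : Matrix.toEuclideanCLM (𝕜 := ℝ) A v = 0) :
    ∃ Tstar : ℝ, 0 < Tstar ∧ Tstar ≤ T ∧
      ∃ V : ℝ → EuclideanSpace ℝ (Fin N),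
        ContinuousOn V (Set.Ico 0 Tstar) ∧
        V 0 = v ∧
        (∀ t ∈ Set.Ioo (0:ℝ) Tstar, ∃ V' : EuclideanSpace ℝ (Fin N),
          HasDerivAt V V' t ∧
          t • V' + Matrix.toEuclideanCLM (𝕜 := ℝ) A (V t) = t ^ ε • F t (V t)) ∧
        (∀ W : ℝ → EuclideanSpace ℝ (Fin N),
          ContinuousOn W (Set.Ico 0 Tstar) →
          W 0 = v →
          (∀ t ∈ Set.Ioo (0:ℝ) Tstar, ∃ W' : EuclideanSpace ℝ (Fin N),
            HasDerivAt W W' t ∧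
            t • W' + Matrix.toEuclideanCLM (𝕜 := ℝ) A (W t) = t ^ ε • F t (W t)) →
          ∀ t ∈ Set.Ico (0:ℝ) Tstar, W t = V t) ∧
        ∃ C : ℝ, 0 ≤ C ∧ ∀ t ∈ Set.Ico (0:ℝ) Tstar, ‖V t - v‖ ≤ C * t ^ ε := by
  obtain ⟨M, hM⟩ := hA
  have hM' := norm_opPow_le_max _ hM
  obtain ⟨τ, hτ0, hτT, hτ1, V, hV, hbound⟩ := exists_isFuchsianSolution hM' hε hT hFcont hFlip hv
  refine ⟨τ, hτ0, hτT, V, hV.continuousOn, hV.apply_zero, hV.hasDerivAt,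
    fun W hWc hW0 hWode t ht => ?_, hbound⟩
  exact IsFuchsianSolution.eqOn hM' hε hτ1 hτT hFcont hFlip hv ⟨hWc, hW0, hWode⟩ hV ht

/-- Fuchsian ODE existence and uniqueness from the singular time t = 0
(Lemma `lem:fuchsian`). Here σ^A = exp((log σ)·A) is interpreted through the
operator exponential of the associated Euclidean continuous linear map, so that
‖σ^A‖ is the operator norm. -/
theorem fuchsian_ode_existence_uniqueness (N : ℕ) (hN : 1 ≤ N) (ε : ℝ) (hε : 0 < ε)
    (T : ℝ) (hT : 0 < T) (A : Matrix (Fin N) (Fin N) ℝ)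
    (hA : ∃ M : ℝ, ∀ σ ∈ Set.Ioo (0:ℝ) 1,
      ‖NormedSpace.exp (Real.log σ • (Matrix.toEuclideanCLM (𝕜 := ℝ) A))‖ ≤ M)
    (F : ℝ → EuclideanSpace ℝ (Fin N) → EuclideanSpace ℝ (Fin N))
    (hFcont : ContinuousOn (fun q : ℝ × EuclideanSpace ℝ (Fin N) => F q.1 q.2)
      (Set.Ico 0 T ×ˢ Set.univ))
    (hFlip : ∀ x : EuclideanSpace ℝ (Fin N), ∃ (K : NNReal) (r : ℝ), 0 < r ∧
      ∀ t ∈ Set.Ico (0:ℝ) T, LipschitzOnWith K (F t) (Metric.ball x r))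
    (v : EuclideanSpace ℝ (Fin N)) (hv : Matrix.toEuclideanCLM (𝕜 := ℝ) A v = 0) :
    ∃ Tstar : ℝ, 0 < Tstar ∧ Tstar ≤ T ∧
      ∃ V : ℝ → EuclideanSpace ℝ (Fin N),
        ContinuousOn V (Set.Ico 0 Tstar) ∧
        V 0 = v ∧
        (∀ t ∈ Set.Ioo (0:ℝ) Tstar, ∃ V' : EuclideanSpace ℝ (Fin N),
          HasDerivAt V V' t ∧
          t • V' + Matrix.toEuclideanCLM (𝕜 := ℝ) A (V t) = t ^ ε • F t (V t)) ∧
        (∀ W : ℝ → EuclideanSpace ℝ (Fin N),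
          ContinuousOn W (Set.Ico 0 Tstar) →
          W 0 = v →
          (∀ t ∈ Set.Ioo (0:ℝ) Tstar, ∃ W' : EuclideanSpace ℝ (Fin N),
            HasDerivAt W W' t ∧
            t • W' + Matrix.toEuclideanCLM (𝕜 := ℝ) A (W t) = t ^ ε • F t (W t)) →
          ∀ t ∈ Set.Ico (0:ℝ) Tstar, W t = V t) ∧
        ∃ C : ℝ, 0 ≤ C ∧ ∀ t ∈ Set.Ico (0:ℝ) Tstar, ‖V t - v‖ ≤ C * t ^ ε :=
  fuchsian_ode_existence_uniqueness_general N ε hε T hT A hA F hFcont hFlip v hv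
end

section
/- (Coercivity of the high-frequency Einstein energy.) There exist τ̊ ≥ 1 and constants 0 < c ≤ C, all depending only on D, p_1,…,p_D, p_φ, with the following property. For every λ ∈ ℤ^D \ {0}, every t > 0 with τ(t) ≥ τ̊, and all real arrays (η_i{}^j)_{1≤i,j≤D}, (κ_i{}^j)_{1≤i,j≤D} satisfying the symmetry conditions t^{−2p_a}η_a{}^c = t^{−2p_c}η_c{}^a and t^{−2p_a}(κ_a{}^c + 2p_aη_a{}^c) = t^{−2p_c}(κ_c{}^a + 2p_cη_c{}^a) for all a, c, one has c·(τ(t)^{−1}·Q_κ + τ(t)·Q_η) ≤ (ζ²/τ)∑_{i,j}κ_i{}^jκ_j{}^i + (ζ/τ)∑_{i,j}κ_i{}^jη_j{}^i + (1/(2τ) + ζ²τ)∑_{i,j}η_i{}^jη_j{}^i ≤ C·(τ(t)^{−1}·Q_κ + τ(t)·Q_η), where Q_κ := ∑_{a,b} t^{−2p_a+2p_b}(κ_a{}^b)² and Q_η := ∑_{a,b} t^{−2p_a+2p_b}(η_a{}^b)² (here ζ = ζ(t), τ = τ(t)). Moreover, for all reals φ, ψ and all t with τ(t) ≥ τ̊: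 c·(τ(t)^{−1}ψ² + τ(t)φ²) ≤ (ζ²/τ)ψ² + (ζ/τ)ψφ + (1/(2τ) + ζ²τ)φ² ≤ C·(τ(t)^{−1}ψ² + τ(t)φ²). -/
open Real Filter MeasureTheory Topology

/-- τ_λ(t) = (∑ᵢ t^(2-2pᵢ) λᵢ²)^(1/2). -/
noncomputable def tau {D : ℕ} (p : Fin D → ℝ) (lam : Fin D → ℤ) (t : ℝ) : ℝ :=
  Real.sqrt (∑ i, t ^ (2 - 2 * p i) * ((lam i : ℝ)) ^ 2)

/-- ζ_λ(t) = 2τ_λ(t)² / ∑ᵢ (2-2pᵢ) t^(2-2pᵢ) λᵢ². -/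
noncomputable def zeta {D : ℕ} (p : Fin D → ℝ) (lam : Fin D → ℤ) (t : ℝ) : ℝ :=
  2 * tau p lam t ^ 2 / ∑ i, (2 - 2 * p i) * t ^ (2 - 2 * p i) * ((lam i : ℝ)) ^ 2

/-- The weighted quadratic form Q(t, A) = ∑_{a,b} t^(-2p_a + 2p_b) (A_a{}^b)². -/
noncomputable def Qweight {D : ℕ} (p : Fin D → ℝ) (t : ℝ) (A : Fin D → Fin D → ℝ) : ℝ :=
  ∑ a, ∑ b, t ^ (-(2 * p a) + 2 * p b) * A a b ^ 2

/-- The high-frequency tensorial energy density in (η, κ) at time t. -/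
noncomputable def EtensHigh {D : ℕ} (p : Fin D → ℝ) (lam : Fin D → ℤ) (t : ℝ)
    (η κ : Fin D → Fin D → ℝ) : ℝ :=
  zeta p lam t ^ 2 / tau p lam t * (∑ i, ∑ j, κ i j * κ j i)
    + zeta p lam t / tau p lam t * (∑ i, ∑ j, κ i j * η j i)
    + (1 / (2 * tau p lam t) + zeta p lam t ^ 2 * tau p lam t) * (∑ i, ∑ j, η i j * η j i)

set_option maxHeartbeats 1000000

lemma key_ineq (τ ζ Z K X Qk Qe : ℝ) (hτ : 6 ≤ τ) (hζ1 : 1/2 ≤ ζ) (hζ2 : ζ ≤ Z)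
    (hQk : 0 ≤ Qk) (hQe : 0 ≤ Qe)
    (hK : (K - Qk)^2 ≤ 16 * (Qk * Qe)) (hX : X^2 ≤ Qk * Qe) :
    1/16 * (τ⁻¹ * Qk + τ * Qe) ≤ ζ^2/τ * K + ζ/τ * X + (1/(2*τ) + ζ^2*τ) * Qe ∧
    ζ^2/τ * K + ζ/τ * X + (1/(2*τ) + ζ^2*τ) * Qe ≤ (20*Z^2 + Z + 1) * (τ⁻¹ * Qk + τ * Qe) := by
  have hτ0 : 0 < τ := by linarith
  have hs0 : 0 < τ⁻¹ := inv_pos.mpr hτ0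
  have hs6 : τ⁻¹ ≤ 1/6 := by
    rw [show (1:ℝ)/6 = (6:ℝ)⁻¹ by norm_num]
    exact inv_anti₀ (by norm_num) hτ
  have hζ0 : 0 ≤ ζ := by linarith
  have hZ : 1/2 ≤ Z := le_trans hζ1 hζ2
  have hZ0 : 0 ≤ Z := by linarith
  have hB : 0 ≤ Qk/4 + 16*Qe := by linarith
  have hK1 : 3/4*Qk - 16*Qe ≤ K := by nlinarith [sq_nonneg (Qk/4 - 16*Qe)]
  have hK2 : K ≤ 5/4*Qk + 16*Qe := by nlinarith [sq_nonneg (Qk/4 - 16*Qe)]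
  have hζsq : 1/4 ≤ ζ^2 := by nlinarith
  have hζZ : ζ^2 ≤ Z^2 := by nlinarith
  have h0 : ζ^2*X^2 ≤ ζ^2*(Qk*Qe) := mul_le_mul_of_nonneg_left hX (sq_nonneg ζ)
  have h0' : (ζ*X)^2 ≤ ζ^2*(Qk*Qe) := by
    calc (ζ*X)^2 = ζ^2*X^2 := by ring
    _ ≤ ζ^2*(Qk*Qe) := h0
  have hX1 : -(ζ^2*Qk/2 + Qe/2) ≤ ζ*X := by
    have h2 : ζ^2*(Qk*Qe) ≤ (ζ^2*Qk/2 + Qe/2)^2 := by nlinarith [sq_nonneg (ζ^2*Qk - Qe)]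
    have hb : 0 ≤ ζ^2*Qk/2 + Qe/2 := by positivity
    nlinarith [h0', h2, hb]
  have hX2 : ζ*X ≤ Z*(Qk+Qe)/2 := by
    have h1 : (ζ*X)^2 ≤ Z^2*(Qk*Qe) :=
      le_trans h0' (mul_le_mul_of_nonneg_right hζZ (mul_nonneg hQk hQe))
    have h2 : Z^2*(Qk*Qe) ≤ (Z*(Qk+Qe)/2)^2 := by nlinarith [sq_nonneg (Z*(Qk-Qe))]
    have hb : 0 ≤ Z*(Qk+Qe)/2 := by positivity
    nlinarith [h1, h2, hb]
  have hE : ζ^2/τ*K + ζ/τ*X + (1/(2*τ) + ζ^2*τ)*Qe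
      = ζ^2*τ⁻¹*K + τ⁻¹*(ζ*X) + (τ⁻¹/2 + ζ^2*τ)*Qe := by
    field_simp
  rw [hE]
  have e1 : ζ^2*τ⁻¹*(3/4*Qk - 16*Qe) ≤ ζ^2*τ⁻¹*K :=
    mul_le_mul_of_nonneg_left hK1 (by positivity)
  have e1' : ζ^2*τ⁻¹*K ≤ ζ^2*τ⁻¹*(5/4*Qk + 16*Qe) :=
    mul_le_mul_of_nonneg_left hK2 (by positivity)
  have e2 : τ⁻¹*(-(ζ^2*Qk/2 + Qe/2)) ≤ τ⁻¹*(ζ*X) :=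
    mul_le_mul_of_nonneg_left hX1 hs0.le
  have e2' : τ⁻¹*(ζ*X) ≤ τ⁻¹*(Z*(Qk+Qe)/2) :=
    mul_le_mul_of_nonneg_left hX2 hs0.le
  have f1 : 1/4*(τ⁻¹*Qk) ≤ ζ^2*(τ⁻¹*Qk) :=
    mul_le_mul_of_nonneg_right hζsq (by positivity)
  have f2 : τ/2 ≤ τ - 16*τ⁻¹ := by linarith
  have g2 : (0:ℝ) ≤ τ/2*Qe := by positivity
  have g1 : τ/2*Qe ≤ (τ-16*τ⁻¹)*Qe := mul_le_mul_of_nonneg_right f2 hQe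
  have f3a : 1/4*(τ/2*Qe) ≤ 1/4*((τ-16*τ⁻¹)*Qe) := by linarith
  have f3b : 1/4*((τ-16*τ⁻¹)*Qe) ≤ ζ^2*((τ-16*τ⁻¹)*Qe) :=
    mul_le_mul_of_nonneg_right hζsq (by linarith)
  have f3 : 1/4*(τ/2*Qe) ≤ ζ^2*((τ - 16*τ⁻¹)*Qe) := f3a.trans f3b
  have hτQe : (0:ℝ) ≤ τ*Qe := by positivity
  have hτQk : (0:ℝ) ≤ τ⁻¹*Qk := by positivity
  constructor
  · linarith [e1, e2, f1, f3]
  · have u4 : ζ^2*τ⁻¹*(5/4*Qk + 16*Qe) ≤ Z^2*τ⁻¹*(5/4*Qk+16*Qe) := by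
      apply mul_le_mul_of_nonneg_right _ (by linarith)
      exact mul_le_mul_of_nonneg_right hζZ hs0.le
    have u5 : τ⁻¹ ≤ τ := by linarith
    have u6 : τ⁻¹*Qe ≤ τ*Qe := mul_le_mul_of_nonneg_right u5 hQe
    have u7 : ζ^2*(τ*Qe) ≤ Z^2*(τ*Qe) := mul_le_mul_of_nonneg_right hζZ hτQe
    have u8 : Z^2*(τ⁻¹*Qe) ≤ Z^2*(τ*Qe) := mul_le_mul_of_nonneg_left u6 (by positivity)
    have u9 : Z*(τ⁻¹*Qe) ≤ Z*(τ*Qe) := mul_le_mul_of_nonneg_left u6 hZ0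
    have u10 : (0:ℝ) ≤ Z^2*(τ⁻¹*Qk) := by positivity
    have u11 : (0:ℝ) ≤ Z*(τ⁻¹*Qk) := mul_nonneg hZ0 hτQk
    have u12 : (0:ℝ) ≤ Z^2*(τ*Qe) := mul_nonneg (sq_nonneg Z) hτQe
    have u13 : (0:ℝ) ≤ Z*(τ*Qe) := mul_nonneg hZ0 hτQe
    linarith [e1', e2', u4, u6, u7, u8, u9, u10, u11, u12, u13, hτQe, hτQk]

lemma unweight {t u v x y : ℝ} (ht : 0 < t) (h : t ^ (-u) * x = t ^ (-v) * y) :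
    y = t ^ (-u + v) * x := by
  have h2 : t ^ v * (t ^ (-v) * y) = y := by
    rw [← mul_assoc, ← Real.rpow_add ht]; simp
  rw [← h2, ← h, ← mul_assoc, ← Real.rpow_add ht, add_comm]

/-- Lemma `lem:einstein_energy_high_coercive`: coercivity of the high-frequency Einstein
energy, for tensors satisfying the symmetry conditions, and of the scalar-field energy. -/
theorem einstein_high_energy_coercive (D : ℕ) (hD : 2 ≤ D)
    (p : Fin D → ℝ) (pphi : ℝ)
    (hkas1 : ∑ i, p i = 1) (hkas2 : (∑ i, p i ^ 2) + 2 * pphi ^ 2 = 1)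
    (hp : ∀ i, p i < 1) :
    ∃ taumid : ℝ, 1 ≤ taumid ∧ ∃ c C : ℝ, 0 < c ∧ c ≤ C ∧
      ∀ (lam : Fin D → ℤ), lam ≠ 0 →
      ∀ t : ℝ, 0 < t → taumid ≤ tau p lam t →
        (∀ η κ : Fin D → Fin D → ℝ,
          (∀ a c' : Fin D, t ^ (-(2 * p a)) * η a c' = t ^ (-(2 * p c')) * η c' a) →
          (∀ a c' : Fin D, t ^ (-(2 * p a)) * (κ a c' + 2 * p a * η a c')
              = t ^ (-(2 * p c')) * (κ c' a + 2 * p c' * η c' a)) →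
          c * ((tau p lam t)⁻¹ * Qweight p t κ + tau p lam t * Qweight p t η) ≤
              EtensHigh p lam t η κ ∧
          EtensHigh p lam t η κ ≤
              C * ((tau p lam t)⁻¹ * Qweight p t κ + tau p lam t * Qweight p t η)) ∧
        (∀ φ ψ : ℝ,
          c * ((tau p lam t)⁻¹ * ψ ^ 2 + tau p lam t * φ ^ 2) ≤
            zeta p lam t ^ 2 / tau p lam t * ψ ^ 2 + zeta p lam t / tau p lam t * ψ * φ
              + (1 / (2 * tau p lam t) + zeta p lam t ^ 2 * tau p lam t) * φ ^ 2 ∧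
          zeta p lam t ^ 2 / tau p lam t * ψ ^ 2 + zeta p lam t / tau p lam t * ψ * φ
              + (1 / (2 * tau p lam t) + zeta p lam t ^ 2 * tau p lam t) * φ ^ 2 ≤
            C * ((tau p lam t)⁻¹ * ψ ^ 2 + tau p lam t * φ ^ 2)) := by
  have hD0 : 0 < D := by omega
  have hne : (Finset.univ : Finset (Fin D)).Nonempty := ⟨⟨0, hD0⟩, Finset.mem_univ _⟩
  set a := Finset.univ.inf' hne (fun i => 2 - 2 * p i) with ha_def
  have ha : 0 < a := by
    rw [ha_def, Finset.lt_inf'_iff]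
    exact fun i _ => by linarith [hp i]
  have ha_le : ∀ i, a ≤ 2 - 2 * p i := fun i => Finset.inf'_le _ (Finset.mem_univ i)
  have hpb : ∀ i, -1 ≤ p i := by
    intro i
    have h1 : p i ^ 2 ≤ ∑ j, p j ^ 2 :=
      Finset.single_le_sum (fun j _ => sq_nonneg (p j)) (Finset.mem_univ i)
    nlinarith [sq_nonneg pphi]
  set Z := 2 / a with hZ_def
  have hZpos : 0 < Z := by positivity
  refine ⟨6, by norm_num, 1/16, 20*Z^2 + Z + 1, by norm_num, by nlinarith, ?_⟩
  intro lam hlam t ht htau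
  set S := ∑ i, t ^ (2 - 2 * p i) * ((lam i : ℝ))^2 with hS_def
  have hterm : ∀ i, 0 ≤ t ^ (2 - 2*p i) * ((lam i:ℝ))^2 :=
    fun i => mul_nonneg (Real.rpow_nonneg ht.le _) (sq_nonneg _)
  obtain ⟨i0, hi0⟩ : ∃ i, lam i ≠ 0 := by
    by_contra h; push_neg at h; exact hlam (funext h)
  have hS : 0 < S := by
    refine Finset.sum_pos' (fun i _ => hterm i) ⟨i0, Finset.mem_univ i0, ?_⟩
    have h2 : (0:ℝ) < ((lam i0 : ℝ))^2 := by
      have : ((lam i0 : ℝ)) ≠ 0 := Int.cast_ne_zero.mpr hi0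
      positivity
    exact mul_pos (Real.rpow_pos_of_pos ht _) h2
  have hτpos : 0 < tau p lam t := Real.sqrt_pos.mpr hS
  have hτsq : tau p lam t ^ 2 = S := Real.sq_sqrt hS.le
  set dnm := ∑ i, (2 - 2*p i) * t ^ (2-2*p i) * ((lam i:ℝ))^2 with hdnm_def
  have hd1 : a * S ≤ dnm := by
    rw [hS_def, Finset.mul_sum]
    apply Finset.sum_le_sum
    intro i _
    have h := mul_le_mul_of_nonneg_right (ha_le i) (hterm i)
    nlinarith [h]
  have hd2 : dnm ≤ 4 * S := by
    rw [hS_def, Finset.mul_sum]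
    apply Finset.sum_le_sum
    intro i _
    have h2 : (2 - 2*p i) ≤ 4 := by linarith [hpb i]
    have h := mul_le_mul_of_nonneg_right h2 (hterm i)
    nlinarith [h]
  have hdpos : 0 < dnm := lt_of_lt_of_le (by positivity) hd1
  have hζ_def : zeta p lam t = 2 * S / dnm := by rw [zeta, hτsq]
  have hζ1 : 1/2 ≤ zeta p lam t := by
    rw [hζ_def, le_div_iff₀ hdpos]; linarith
  have hζ2 : zeta p lam t ≤ Z := by
    rw [hζ_def, hZ_def, div_le_div_iff₀ hdpos ha]; nlinarith
  constructor
  · -- tensor part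
    intro η κ hη hκ
    have hr2 : ∀ i j, t ^ (-(2 * p i) + 2 * p j) = t ^ (p j - p i) * t ^ (p j - p i) := by
      intro i j
      rw [← Real.rpow_add ht]
      congr 1; ring
    have hηs : ∀ i j, η j i = t ^ (-(2 * p i) + 2 * p j) * η i j :=
      fun i j => unweight ht (hη i j)
    have hκs : ∀ i j, κ j i = t ^ (-(2 * p i) + 2 * p j) * (κ i j + (2*p i - 2*p j) * η i j) := by
      intro i j
      have h1 : κ j i + 2*p j * η j i = t ^ (-(2 * p i) + 2 * p j) * (κ i j + 2*p i * η i j) :=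
        unweight ht (hκ i j)
      have h2 := hηs i j
      linear_combination h1 - 2 * p j * h2
    have hQκ : Qweight p t κ = ∑ i, ∑ j, (t ^ (p j - p i) * κ i j)^2 := by
      rw [Qweight]
      refine Finset.sum_congr rfl fun i _ => Finset.sum_congr rfl fun j _ => ?_
      rw [hr2 i j]; ring
    have hQη : Qweight p t η = ∑ i, ∑ j, (t ^ (p j - p i) * η i j)^2 := by
      rw [Qweight]
      refine Finset.sum_congr rfl fun i _ => Finset.sum_congr rfl fun j _ => ?_
      rw [hr2 i j]; ring
    have hQk0 : 0 ≤ Qweight p t κ := by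
      rw [hQκ]; positivity
    have hQe0 : 0 ≤ Qweight p t η := by
      rw [hQη]; positivity
    have hH : (∑ i, ∑ j, η i j * η j i) = Qweight p t η := by
      rw [Qweight]
      refine Finset.sum_congr rfl fun i _ => Finset.sum_congr rfl fun j _ => ?_
      rw [hηs i j]; ring
    -- K decomposition
    have hKdec : (∑ i, ∑ j, κ i j * κ j i) - Qweight p t κ
        = ∑ i, ∑ j, ((2*p i - 2*p j) * (t ^ (p j - p i) * κ i j)) * (t ^ (p j - p i) * η i j) := by
      rw [hQκ, ← Finset.sum_sub_distrib]
      refine Finset.sum_congr rfl fun i _ => ?_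
      rw [← Finset.sum_sub_distrib]
      refine Finset.sum_congr rfl fun j _ => ?_
      rw [hκs i j, hr2 i j]; ring
    have hKb : ((∑ i, ∑ j, κ i j * κ j i) - Qweight p t κ)^2
        ≤ 16 * (Qweight p t κ * Qweight p t η) := by
      rw [hKdec]
      have hc : (∑ i, ∑ j, ((2*p i - 2*p j) * (t ^ (p j - p i) * κ i j)) * (t ^ (p j - p i) * η i j))^2
          ≤ (∑ i, ∑ j, ((2*p i - 2*p j) * (t ^ (p j - p i) * κ i j))^2) * (∑ i, ∑ j, (t ^ (p j - p i) * η i j)^2) := by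
        have := Finset.sum_mul_sq_le_sq_mul_sq (Finset.univ ×ˢ Finset.univ)
          (fun q : Fin D × Fin D => (2*p q.1 - 2*p q.2) * (t ^ (p q.2 - p q.1) * κ q.1 q.2))
          (fun q : Fin D × Fin D => t ^ (p q.2 - p q.1) * η q.1 q.2)
        simpa [Fintype.sum_prod_type] using this
      have hF : (∑ i, ∑ j, ((2*p i - 2*p j) * (t ^ (p j - p i) * κ i j))^2) ≤ 16 * Qweight p t κ := by
        rw [hQκ, Finset.mul_sum]
        refine Finset.sum_le_sum fun i _ => ?_
        rw [Finset.mul_sum]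
        refine Finset.sum_le_sum fun j _ => ?_
        have hcoef : (2*p i - 2*p j)^2 ≤ 16 := by nlinarith [hp i, hp j, hpb i, hpb j]
        calc ((2*p i - 2*p j) * (t ^ (p j - p i) * κ i j))^2
            = (2*p i - 2*p j)^2 * (t ^ (p j - p i) * κ i j)^2 := by ring
          _ ≤ 16 * (t ^ (p j - p i) * κ i j)^2 := mul_le_mul_of_nonneg_right hcoef (sq_nonneg _)
      calc (∑ i, ∑ j, ((2*p i - 2*p j) * (t ^ (p j - p i) * κ i j)) * (t ^ (p j - p i) * η i j))^2
          ≤ (∑ i, ∑ j, ((2*p i - 2*p j) * (t ^ (p j - p i) * κ i j))^2) * (∑ i, ∑ j, (t ^ (p j - p i) * η i j)^2) := hc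
        _ ≤ (16 * Qweight p t κ) * (∑ i, ∑ j, (t ^ (p j - p i) * η i j)^2) := by
            apply mul_le_mul_of_nonneg_right hF
            positivity
        _ = 16 * (Qweight p t κ * Qweight p t η) := by rw [← hQη]; ring
    have hXeq : (∑ i, ∑ j, κ i j * η j i) = ∑ i, ∑ j, (t ^ (p j - p i) * κ i j) * (t ^ (p j - p i) * η i j) := by
      refine Finset.sum_congr rfl fun i _ => Finset.sum_congr rfl fun j _ => ?_
      rw [hηs i j, hr2 i j]; ring
    have hXb : (∑ i, ∑ j, κ i j * η j i)^2 ≤ Qweight p t κ * Qweight p t η := by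
      rw [hXeq, hQκ, hQη]
      have := Finset.sum_mul_sq_le_sq_mul_sq (Finset.univ ×ˢ Finset.univ)
        (fun q : Fin D × Fin D => t ^ (p q.2 - p q.1) * κ q.1 q.2)
        (fun q : Fin D × Fin D => t ^ (p q.2 - p q.1) * η q.1 q.2)
      simpa [Fintype.sum_prod_type] using this
    have key := key_ineq (tau p lam t) (zeta p lam t) Z
      (∑ i, ∑ j, κ i j * κ j i) (∑ i, ∑ j, κ i j * η j i)
      (Qweight p t κ) (Qweight p t η) htau hζ1 hζ2 hQk0 hQe0 hKb hXb
    rw [EtensHigh, hH]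
    exact key
  · -- scalar part
    intro φ ψ
    have key := key_ineq (tau p lam t) (zeta p lam t) Z (ψ^2) (ψ*φ) (ψ^2) (φ^2)
      htau hζ1 hζ2 (sq_nonneg ψ) (sq_nonneg φ)
      (by simp; positivity) (le_of_eq (by ring))
    obtain ⟨k1, k2⟩ := key
    constructor
    · calc (1:ℝ)/16 * ((tau p lam t)⁻¹ * ψ^2 + tau p lam t * φ^2)
          ≤ _ := k1
        _ = _ := by ring
    · calc zeta p lam t ^ 2 / tau p lam t * ψ ^ 2 + zeta p lam t / tau p lam t * ψ * φ
              + (1 / (2 * tau p lam t) + zeta p lam t ^ 2 * tau p lam t) * φ ^ 2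
          = zeta p lam t^2/(tau p lam t) * ψ^2 + zeta p lam t/(tau p lam t) * (ψ*φ)
              + (1/(2*tau p lam t) + zeta p lam t^2*(tau p lam t)) * φ^2 := by ring
        _ ≤ _ := k2
end

section
/- (High-frequency elliptic estimates for lapse and shift.) Let τ̊ ≥ 1 be as in the coercivity of the high-frequency Einstein energy. Let λ ∈ ℤ^D \ {0} and let (η, κ, φ, ψ, ν, X) be a λ-mode CMCSH solution of the linearized Einstein–scalar field system on (0,∞). Then there is C > 0 depending only on D, p_1,…,p_D, p_φ such that for all t > 0 with τ(t) ≥ τ̊: |tr η(t)| + |ν(t)| ≤ C·τ(t)^{−3/2}·E_high(t)^{1/2}, and (∑_{j=1}^D t^{2p_j}·X^j(t)²)^{1/2} ≤ C·t·τ(t)^{−3/2}·E_high(t)^{1/2}. -/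
open Real Filter MeasureTheory Topology

/-- A λ-mode CMCSH solution of the linearized Einstein–scalar field system on (0,∞):
the real form of the projection of the linearized system in the
constant-mean-curvature spatially-harmonic gauge onto the Fourier mode λ
(the Fourier coefficient of the shift being χ^j = i·X^j). -/
structure IsCMCSHSolution {D : ℕ} (p : Fin D → ℝ) (pphi : ℝ) (lam : Fin D → ℤ)
    (η κ : ℝ → Fin D → Fin D → ℝ) (φ ψ ν : ℝ → ℝ) (X : ℝ → Fin D → ℝ) : Prop where
  cont_nu : ContinuousOn ν (Set.Ioi 0)
  cont_X : ∀ j, ContinuousOn (fun t => X t j) (Set.Ioi 0)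
  eta_evol : ∀ t ∈ Set.Ioi (0:ℝ), ∀ i j, HasDerivAt (fun s => η s i j)
    ((κ t i j + 2 * (p i - p j) * η t i j - p i * (if i = j then 1 else 0) * ν t
      - (1/2) * (lam i : ℝ) * X t j
      - (1/2) * t ^ (2 * p i - 2 * p j) * (lam j : ℝ) * X t i) / t) t
  kappa_evol : ∀ t ∈ Set.Ioi (0:ℝ), ∀ i j, HasDerivAt (fun s => κ s i j)
    ((-(tau p lam t ^ 2) * η t i j + t ^ (2 - 2 * p j) * (lam i : ℝ) * (lam j : ℝ) * ν t
      + p i * (if i = j then 1 else 0) * ν t + (p i - p j) * (lam i : ℝ) * X t j) / t) t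
  phi_evol : ∀ t ∈ Set.Ioi (0:ℝ), HasDerivAt φ ((ψ t + pphi * ν t) / t) t
  psi_evol : ∀ t ∈ Set.Ioi (0:ℝ), HasDerivAt ψ ((-(tau p lam t ^ 2) * φ t - pphi * ν t) / t) t
  nu_elliptic : ∀ t ∈ Set.Ioi (0:ℝ),
    (1 + tau p lam t ^ 2) * ν t = tau p lam t ^ 2 * ∑ a, η t a a
  X_elliptic : ∀ t ∈ Set.Ioi (0:ℝ), ∀ j, tau p lam t ^ 2 * X t j =
    (1 - 2 * p j) * t ^ (2 - 2 * p j) * (lam j : ℝ) * ν t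
      - 4 * ∑ q, p q * t ^ (2 - 2 * p q) * (lam q : ℝ) * η t q j
      + 2 * t ^ (2 - 2 * p j) * (lam j : ℝ) * ((∑ a, p a * η t a a) - 2 * pphi * φ t)
  cmc : ∀ t ∈ Set.Ioi (0:ℝ), ∑ a, κ t a a = 0
  sh_gauge : ∀ t ∈ Set.Ioi (0:ℝ), ∀ i,
    2 * ∑ j, (lam j : ℝ) * η t i j = (lam i : ℝ) * ∑ a, η t a a
  hamiltonian : ∀ t ∈ Set.Ioi (0:ℝ),
    tau p lam t ^ 2 * (∑ a, η t a a) - 2 * (∑ a, p a * κ t a a) + 4 * pphi * ψ t = 0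
  momentum : ∀ t ∈ Set.Ioi (0:ℝ), ∀ i,
    (∑ j, (lam j : ℝ) * κ t i j)
      + (lam i : ℝ) * (-(∑ a, p a * η t a a) + 2 * pphi * φ t)
      + p i * (lam i : ℝ) * (∑ a, η t a a) = 0
  sym_eta : ∀ t ∈ Set.Ioi (0:ℝ), ∀ a c,
    t ^ (-(2 * p a)) * η t a c = t ^ (-(2 * p c)) * η t c a
  sym_kappa : ∀ t ∈ Set.Ioi (0:ℝ), ∀ a c,
    t ^ (-(2 * p a)) * (κ t a c + 2 * p a * η t a c)
      = t ^ (-(2 * p c)) * (κ t c a + 2 * p c * η t c a)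

/-- The total high-frequency energy E_high = E_{η,high} + E_{φ,high} of a λ-mode solution. -/
noncomputable def EsysHigh {D : ℕ} (p : Fin D → ℝ) (lam : Fin D → ℤ)
    (η κ : ℝ → Fin D → Fin D → ℝ) (φ ψ : ℝ → ℝ) (t : ℝ) : ℝ :=
  (zeta p lam t ^ 2 / tau p lam t * (∑ i, ∑ j, κ t i j * κ t j i)
    + zeta p lam t / tau p lam t * (∑ i, ∑ j, κ t i j * η t j i)
    + (1 / (2 * tau p lam t) + zeta p lam t ^ 2 * tau p lam t) * (∑ i, ∑ j, η t i j * η t j i))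
  + (zeta p lam t ^ 2 / tau p lam t * ψ t ^ 2 + zeta p lam t / tau p lam t * ψ t * φ t
    + (1 / (2 * tau p lam t) + zeta p lam t ^ 2 * tau p lam t) * φ t ^ 2)

lemma quad_lb (a b c x y : ℝ) (ha : 0 < a) (hc : 0 < c) (hb : b^2 ≤ 2*a*c) :
    a/2*x^2 ≤ a*x^2 + b*x*y + c*y^2 ∧ c/2*y^2 ≤ a*x^2 + b*x*y + c*y^2 := by
  constructor
  · nlinarith [sq_nonneg (a*x + b*y), mul_nonneg (sub_nonneg.mpr hb) (sq_nonneg y), ha.le]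
  · nlinarith [sq_nonneg (b*x + c*y), mul_nonneg (sub_nonneg.mpr hb) (sq_nonneg x), hc.le]

lemma coercive_pair (Z T q x y : ℝ) (hZ : 1/2 ≤ Z) (hq : -2 ≤ q) (hq' : q ≤ 2) (hT : 8*Z + 2 ≤ T) :
    1/(8*T)*x^2 ≤ Z^2/T*x^2 + (2*(Z^2/T)*q + Z/T)*x*y + (1/(2*T) + Z^2*T)*y^2 ∧
    T/8*y^2 ≤ Z^2/T*x^2 + (2*(Z^2/T)*q + Z/T)*x*y + (1/(2*T) + Z^2*T)*y^2 := by
  have hZ0 : 0 < Z := by linarith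
  have hT0 : 0 < T := by linarith
  have key : (2*Z*q+1)^2 ≤ 2*Z^2*T^2 := by
    have h1 : (2*Z*q+1)^2 ≤ (4*Z+1)^2 := by
      nlinarith [mul_nonneg (mul_nonneg hZ0.le hZ0.le) (by nlinarith : (0:ℝ) ≤ 4 - q^2),
        mul_nonneg hZ0.le (by linarith : (0:ℝ) ≤ 2 - q)]
    have h2 : (8*Z+2)^2 ≤ T^2 := by nlinarith
    have h3 : 2*Z^2*(8*Z+2)^2 ≤ 2*Z^2*T^2 :=
      mul_le_mul_of_nonneg_left h2 (by positivity)
    nlinarith [sq_nonneg (4*Z+1), h1, h3]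
  have hb : (2*(Z^2/T)*q + Z/T)^2 ≤ 2*(Z^2/T)*(1/(2*T) + Z^2*T) := by
    have hTne : T ≠ 0 := ne_of_gt hT0
    have e1 : (2*(Z^2/T)*q + Z/T)^2 = (2*Z*q+1)^2 * (Z^2/T^2) := by field_simp
    have e2 : 2*(Z^2/T)*(1/(2*T) + Z^2*T) = Z^2/T^2 + 2*Z^4 := by field_simp
    rw [e1, e2]
    have h3 : (2*Z*q+1)^2*(Z^2/T^2) ≤ (2*Z^2*T^2)*(Z^2/T^2) :=
      mul_le_mul_of_nonneg_right key (by positivity)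
    have e3 : (2*Z^2*T^2)*(Z^2/T^2) = 2*Z^4 := by field_simp
    rw [e3] at h3
    have h4 : (0:ℝ) ≤ Z^2/T^2 := by positivity
    linarith
  have ha : 0 < Z^2/T := by positivity
  have hc : 0 < 1/(2*T) + Z^2*T := by positivity
  obtain ⟨hx, hy⟩ := quad_lb (Z^2/T) (2*(Z^2/T)*q + Z/T) (1/(2*T)+Z^2*T) x y ha hc hb
  constructor
  · refine le_trans ?_ hx
    have h5 : 1/(8*T) ≤ (Z^2/T)/2 := by
      rw [show (Z^2/T)/2 = Z^2/(2*T) by ring, div_le_div_iff₀ (by positivity) (by positivity)]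
      nlinarith [mul_le_mul_of_nonneg_right (show (1:ℝ)/4 ≤ Z^2 by nlinarith) hT0.le]
    exact mul_le_mul_of_nonneg_right h5 (sq_nonneg x)
  · refine le_trans ?_ hy
    have h5 : T/8 ≤ (1/(2*T)+Z^2*T)/2 := by
      have h6 : 0 < 1/(2*T) := by positivity
      nlinarith [mul_le_mul_of_nonneg_right (show (1:ℝ)/4 ≤ Z^2 by nlinarith) hT0.le]
    exact mul_le_mul_of_nonneg_right h5 (sq_nonneg y)

set_option maxHeartbeats 4000000 in
/-- Proposition `prop:einstein_high_elliptic`: high-frequency elliptic estimates for the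
linearized lapse and shift, for τ(t) ≥ τ̊ with τ̊ as in the coercivity of the
high-frequency Einstein energy. -/
theorem einstein_high_freq_elliptic_estimates (D : ℕ) (hD : 2 ≤ D)
    (p : Fin D → ℝ) (pphi : ℝ)
    (hkas1 : ∑ i, p i = 1) (hkas2 : (∑ i, p i ^ 2) + 2 * pphi ^ 2 = 1)
    (hp : ∀ i, p i < 1) :
    ∃ taumid : ℝ, 1 ≤ taumid ∧ ∃ C : ℝ, 0 < C ∧
      ∀ (lam : Fin D → ℤ), lam ≠ 0 →
      ∀ (η κ : ℝ → Fin D → Fin D → ℝ) (φ ψ ν : ℝ → ℝ) (X : ℝ → Fin D → ℝ),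
        IsCMCSHSolution p pphi lam η κ φ ψ ν X →
      ∀ t : ℝ, 0 < t → taumid ≤ tau p lam t →
        |∑ a, η t a a| + |ν t| ≤
          C * tau p lam t ^ (-(3/2 : ℝ)) * Real.sqrt (EsysHigh p lam η κ φ ψ t) ∧
        Real.sqrt (∑ j, t ^ (2 * p j) * X t j ^ 2) ≤
          C * t * tau p lam t ^ (-(3/2 : ℝ)) * Real.sqrt (EsysHigh p lam η κ φ ψ t) := by
  classical
  have hDpos : 0 < D := by omega
  haveI : Nonempty (Fin D) := ⟨⟨0, hDpos⟩⟩
  set m := Finset.univ.inf' Finset.univ_nonempty (fun i => 2 - 2*p i) with hmdef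
  have hm_le : ∀ i, m ≤ 2 - 2*p i := fun i => Finset.inf'_le _ (Finset.mem_univ i)
  have hm_pos : 0 < m := by
    obtain ⟨i, -, hi⟩ := Finset.exists_mem_eq_inf' (Finset.univ_nonempty) (fun i => 2 - 2*p i)
    rw [hmdef, hi]; linarith [hp i]
  clear_value m
  have hZm_pos : 0 < 2/m := by positivity
  refine ⟨8*(2/m) + 2, by linarith, 100*((D:ℝ)+3)^2, by positivity, ?_⟩
  intro lam _hlam η κ φ ψ ν X s t ht hTmid
  have htmem : t ∈ Set.Ioi (0:ℝ) := Set.mem_Ioi.mpr ht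
  have hDR : (2:ℝ) ≤ (D:ℝ) := by exact_mod_cast hD
  -- basic Kasner exponent bounds
  have hpsq : ∀ i, p i ^ 2 ≤ 1 := by
    intro i
    have h1 : p i ^ 2 ≤ ∑ j, p j ^ 2 :=
      Finset.single_le_sum (fun j _ => sq_nonneg (p j)) (Finset.mem_univ i)
    nlinarith [sq_nonneg pphi]
  have hpl : ∀ i, -1 ≤ p i := fun i => by nlinarith [hpsq i]
  have hpu : ∀ i, p i ≤ 1 := fun i => by nlinarith [hpsq i]
  have hpabs : ∀ i, |p i| ≤ 1 := fun i => by rw [abs_le]; exact ⟨hpl i, hpu i⟩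
  have hpphisq : pphi^2 ≤ 1 := by
    have h1 : (0:ℝ) ≤ ∑ j, p j ^2 := Finset.sum_nonneg fun j _ => sq_nonneg _
    nlinarith
  have hpphiabs : |pphi| ≤ 1 := by
    rw [abs_le]; constructor <;> nlinarith [hpphisq]
  -- T and E
  set T := tau p lam t with hTdef
  set E := EsysHigh p lam η κ φ ψ t with hEdef
  have hw : ∀ i, 0 ≤ t ^ (2-2*p i) * ((lam i:ℝ))^2 := fun i =>
    mul_nonneg (Real.rpow_pos_of_pos ht _).le (sq_nonneg _)
  have hT2 : T^2 = ∑ i, t ^ (2-2*p i) * ((lam i:ℝ))^2 := by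
    rw [hTdef]; simp only [tau]; exact Real.sq_sqrt (Finset.sum_nonneg fun i _ => hw i)
  clear_value T E
  have hT1 : 1 ≤ T := le_trans (by linarith) hTmid
  have hT0 : 0 < T := by linarith
  have hTne : T ≠ 0 := ne_of_gt hT0
  have hT2pos : 0 < T^2 := by positivity
  -- denominator and Z
  set dnm := ∑ i, (2 - 2*p i) * t ^ (2-2*p i) * ((lam i:ℝ))^2 with hdnmdef
  have hdlow : m * T^2 ≤ dnm := by
    rw [hT2, Finset.mul_sum, hdnmdef]
    refine Finset.sum_le_sum fun i _ => ?_
    calc m * (t^(2-2*p i) * (lam i:ℝ)^2)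
        ≤ (2-2*p i) * (t^(2-2*p i)*(lam i:ℝ)^2) :=
          mul_le_mul_of_nonneg_right (hm_le i) (hw i)
      _ = (2-2*p i) * t^(2-2*p i)*(lam i:ℝ)^2 := by ring
  have hdhigh : dnm ≤ 4 * T^2 := by
    rw [hT2, Finset.mul_sum, hdnmdef]
    refine Finset.sum_le_sum fun i _ => ?_
    calc (2-2*p i) * t^(2-2*p i)*(lam i:ℝ)^2
        = (2-2*p i) * (t^(2-2*p i)*(lam i:ℝ)^2) := by ring
      _ ≤ 4 * (t^(2-2*p i)*(lam i:ℝ)^2) :=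
          mul_le_mul_of_nonneg_right (by linarith [hpl i]) (hw i)
  clear_value dnm
  have hdpos : 0 < dnm := lt_of_lt_of_le (by positivity) hdlow
  set Z := zeta p lam t with hZdef
  have hZeq : Z = 2*T^2/dnm := by
    rw [hZdef]; simp only [zeta]; rw [hTdef, hdnmdef]
  clear_value Z
  have hZlow : 1/2 ≤ Z := by
    rw [hZeq, le_div_iff₀ hdpos]; linarith
  have hZhigh : Z ≤ 2/m := by
    rw [hZeq, div_le_div_iff₀ hdpos hm_pos]; linarith [hdlow]
  have hZ0 : 0 < Z := by linarith
  have hT8 : 8*Z + 2 ≤ T := by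
    have h1 : 8*Z + 2 ≤ 8*(2/m)+2 := by linarith
    linarith [hTmid]
  -- rpow helpers
  have hpow : ∀ x y : ℝ, t ^ x * t ^ y = t ^ (x+y) := fun x y => (Real.rpow_add ht x y).symm
  have hmt : ∀ x : ℝ, t * t^x = t^(x+1) := fun x => by
    rw [Real.rpow_add_one (ne_of_gt ht), mul_comm]
  -- symmetric variables H, K
  set H : Fin D → Fin D → ℝ := fun i j => t ^ (p j - p i) * η t i j with hHdef
  set K : Fin D → Fin D → ℝ := fun i j => t ^ (p j - p i) * κ t i j with hKdef
  clear_value H K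
  have hflip : ∀ (g : Fin D → Fin D → ℝ),
      (∀ a c, t^(-(2*p a)) * g a c = t^(-(2*p c)) * g c a) →
      ∀ i j, g j i = t^(2*p j - 2*p i) * g i j := by
    intro g hg i j
    calc g j i = (t^(2*p j) * t^(-(2*p j))) * g j i := by
          rw [hpow, show 2*p j + -(2*p j) = 0 by ring, Real.rpow_zero, one_mul]
      _ = t^(2*p j) * (t^(-(2*p j)) * g j i) := by ring
      _ = t^(2*p j) * (t^(-(2*p i)) * g i j) := by rw [← hg i j]
      _ = t^(2*p j - 2*p i) * g i j := by
          rw [← mul_assoc, hpow, show 2*p j + -(2*p i) = 2*p j - 2*p i by ring]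
  have hηflip : ∀ i j, η t j i = t^(2*p j - 2*p i) * η t i j :=
    hflip (fun a c => η t a c) (fun a c => s.sym_eta t htmem a c)
  have hκflip : ∀ i j, κ t j i + 2*p j*η t j i = t^(2*p j-2*p i) * (κ t i j + 2*p i*η t i j) :=
    hflip (fun a c => κ t a c + 2*p a*η t a c) (fun a c => s.sym_kappa t htmem a c)
  have hHsym : ∀ i j, H j i = H i j := by
    intro i j
    simp only [hHdef]
    rw [hηflip i j, ← mul_assoc, hpow, show p i - p j + (2*p j - 2*p i) = p j - p i by ring]
  have hKflip : ∀ i j, K j i = K i j + 2*(p i - p j)*(H i j) := by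
    intro i j
    have h2 : κ t j i = t^(2*p j-2*p i)*(κ t i j + 2*p i*η t i j) - 2*p j*η t j i := by
      linarith [hκflip i j]
    have h3 : t ^ (p i - p j) * η t j i = t ^ (p j - p i) * η t i j := by
      rw [hηflip i j, ← mul_assoc, hpow, show p i - p j + (2*p j - 2*p i) = p j - p i by ring]
    simp only [hKdef, hHdef]
    calc t^(p i - p j) * κ t j i
        = t^(p i-p j) * (t^(2*p j-2*p i)*(κ t i j + 2*p i*η t i j))
            - 2*p j*(t^(p i-p j) * η t j i) := by rw [h2]; ring
      _ = t^(p j - p i)*(κ t i j + 2*p i*η t i j) - 2*p j*(t^(p j-p i)*η t i j) := by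
          rw [← mul_assoc, hpow, show p i - p j + (2*p j-2*p i) = p j - p i by ring, h3]
      _ = t^(p j-p i)*κ t i j + 2*(p i - p j)*(t^(p j-p i)*η t i j) := by ring
  have hzero : ∀ (g h : ℝ) (i j : Fin D), (t^(p j - p i)*g)*(t^(p i - p j)*h) = g*h := by
    intro g h i j
    rw [show (t^(p j - p i)*g)*(t^(p i - p j)*h) = (t^(p j-p i)*t^(p i-p j))*(g*h) by ring,
      hpow, show (p j-p i)+(p i-p j) = 0 by ring, Real.rpow_zero, one_mul]
  have hKK : ∀ i j, κ t i j * κ t j i = K i j^2 + 2*(p i - p j)*(K i j*H i j) := by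
    intro i j
    have h1 : K i j * K j i = κ t i j * κ t j i := by simp only [hKdef]; exact hzero _ _ i j
    rw [← h1, hKflip i j]; ring
  have hKH : ∀ i j, κ t i j * η t j i = K i j * H i j := by
    intro i j
    have h1 : K i j * H j i = κ t i j * η t j i := by
      simp only [hKdef, hHdef]; exact hzero _ _ i j
    rw [← h1, hHsym i j]
  have hHH : ∀ i j, η t i j * η t j i = H i j^2 := by
    intro i j
    have h1 : H i j * H j i = η t i j * η t j i := by simp only [hHdef]; exact hzero _ _ i j
    rw [← h1, hHsym i j]; ring
  -- energy decomposition
  set F : Fin D → Fin D → ℝ := fun i j =>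
    Z^2/T*(K i j)^2 + (2*(Z^2/T)*(p i - p j) + Z/T)*(K i j)*(H i j)
      + (1/(2*T) + Z^2*T)*(H i j)^2 with hFdef
  set Fφ : ℝ := Z^2/T*(ψ t)^2 + (Z/T)*(ψ t)*(φ t) + (1/(2*T) + Z^2*T)*(φ t)^2 with hFφdef
  clear_value F Fφ
  have hEdecomp : E = (∑ i, ∑ j, F i j) + Fφ := by
    rw [hEdef]; simp only [EsysHigh]
    rw [← hTdef, ← hZdef]
    have hκκ : (∑ i, ∑ j, κ t i j * κ t j i)
        = ∑ i, ∑ j, (K i j^2 + 2*(p i - p j)*(K i j*H i j)) :=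
      Finset.sum_congr rfl fun i _ => Finset.sum_congr rfl fun j _ => hKK i j
    have hκη : (∑ i, ∑ j, κ t i j * η t j i) = ∑ i, ∑ j, K i j * H i j :=
      Finset.sum_congr rfl fun i _ => Finset.sum_congr rfl fun j _ => hKH i j
    have hηη : (∑ i, ∑ j, η t i j * η t j i) = ∑ i, ∑ j, H i j^2 :=
      Finset.sum_congr rfl fun i _ => Finset.sum_congr rfl fun j _ => hHH i j
    rw [hκκ, hκη, hηη]
    have hsum : ∑ i, ∑ j, F i j
        = Z^2/T * (∑ i, ∑ j, (K i j^2 + 2*(p i-p j)*(K i j*H i j)))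
          + Z/T * (∑ i, ∑ j, K i j*H i j) + (1/(2*T)+Z^2*T) * (∑ i, ∑ j, H i j^2) := by
      rw [Finset.mul_sum, Finset.mul_sum, Finset.mul_sum, ← Finset.sum_add_distrib,
        ← Finset.sum_add_distrib]
      refine Finset.sum_congr rfl fun i _ => ?_
      rw [Finset.mul_sum, Finset.mul_sum, Finset.mul_sum, ← Finset.sum_add_distrib,
        ← Finset.sum_add_distrib]
      refine Finset.sum_congr rfl fun j _ => ?_
      simp only [hFdef]; ring
    rw [hsum, hFφdef]
  -- coercivity
  have hFc : ∀ i j, 1/(8*T)*(K i j)^2 ≤ F i j ∧ T/8*(H i j)^2 ≤ F i j := by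
    intro i j
    have h1 := coercive_pair Z T (p i - p j) (K i j) (H i j) hZlow
      (by linarith [hpl i, hpu j]) (by linarith [hpu i, hpl j]) hT8
    simpa only [hFdef] using h1
  have hFφc : 1/(8*T)*(ψ t)^2 ≤ Fφ ∧ T/8*(φ t)^2 ≤ Fφ := by
    have h1 := coercive_pair Z T 0 (ψ t) (φ t) hZlow (by norm_num) (by norm_num) hT8
    have e : Z^2/T*(ψ t)^2 + (2*(Z^2/T)*0 + Z/T)*(ψ t)*(φ t) + (1/(2*T)+Z^2*T)*(φ t)^2 = Fφ := by
      rw [hFφdef]; ring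
    rw [e] at h1; exact h1
  have hFnn : ∀ i j, 0 ≤ F i j := fun i j =>
    le_trans (by positivity) (hFc i j).1
  have hFφnn : 0 ≤ Fφ := le_trans (by positivity) hFφc.1
  have hEF : ∀ i j, F i j ≤ E := by
    intro i j
    have h1 : F i j ≤ ∑ j', F i j' :=
      Finset.single_le_sum (fun j' _ => hFnn i j') (Finset.mem_univ j)
    have h2 : (∑ j', F i j') ≤ ∑ i', ∑ j', F i' j' :=
      Finset.single_le_sum (f := fun i' => ∑ j', F i' j')
        (fun i' _ => Finset.sum_nonneg fun j' _ => hFnn i' j') (Finset.mem_univ i)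
    rw [hEdecomp]; linarith
  have hEFφ : Fφ ≤ E := by
    have h2 : (0:ℝ) ≤ ∑ i', ∑ j', F i' j' :=
      Finset.sum_nonneg fun i' _ => Finset.sum_nonneg fun j' _ => hFnn i' j'
    rw [hEdecomp]; linarith
  have hEnn : 0 ≤ E := le_trans hFφnn hEFφ
  -- square-root bounds
  set sE := Real.sqrt E with hsEdef
  set sT := Real.sqrt T with hsTdef
  have hsT2 : sT^2 = T := Real.sq_sqrt hT0.le
  have hsT0 : 0 < sT := Real.sqrt_pos.mpr hT0
  have hsEnn : 0 ≤ sE := Real.sqrt_nonneg _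
  set B := Real.sqrt 8 * sT * sE with hBdef
  set B' := Real.sqrt 8 * sE / sT with hB'def
  have hBnn : 0 ≤ B := by positivity
  have hB'nn : 0 ≤ B' := by positivity
  have sqrt8TE : Real.sqrt (8*T*E) = B := by
    rw [Real.sqrt_mul (by positivity : (0:ℝ) ≤ 8*T), Real.sqrt_mul (by norm_num : (0:ℝ) ≤ 8)]
  have sqrt8ET : Real.sqrt (8/T*E) = B' := by
    rw [show (8:ℝ)/T*E = 8*E/T by ring, Real.sqrt_div (by positivity : (0:ℝ) ≤ 8*E),
      Real.sqrt_mul (by norm_num : (0:ℝ) ≤ 8)]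
  clear_value sE sT B B'
  have habs_of_sq : ∀ {x M : ℝ}, x^2 ≤ M → |x| ≤ Real.sqrt M := by
    intro x M h
    calc |x| = Real.sqrt (x^2) := (Real.sqrt_sq_eq_abs x).symm
      _ ≤ Real.sqrt M := Real.sqrt_le_sqrt h
  have hfromK : ∀ x : ℝ, 1/(8*T)*x^2 ≤ E → |x| ≤ B := by
    intro x hx
    have h3 := mul_le_mul_of_nonneg_left hx (by positivity : (0:ℝ) ≤ 8*T)
    have h1 : x^2 ≤ 8*T*E := by
      calc x^2 = 8*T*(1/(8*T)*x^2) := by field_simp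
        _ ≤ 8*T*E := h3
    rw [← sqrt8TE]; exact habs_of_sq h1
  have hfromH : ∀ x : ℝ, T/8*x^2 ≤ E → |x| ≤ B' := by
    intro x hx
    have h3 := mul_le_mul_of_nonneg_left hx (by positivity : (0:ℝ) ≤ 8/T)
    have h1 : x^2 ≤ 8/T*E := by
      calc x^2 = 8/T*(T/8*x^2) := by field_simp
        _ ≤ 8/T*E := h3
    rw [← sqrt8ET]; exact habs_of_sq h1
  have hKabs : ∀ i j, |K i j| ≤ B := fun i j => hfromK _ (le_trans (hFc i j).1 (hEF i j))
  have hHabs : ∀ i j, |H i j| ≤ B' := fun i j => hfromH _ (le_trans (hFc i j).2 (hEF i j))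
  have hψabs : |ψ t| ≤ B := hfromK _ (le_trans hFφc.1 hEFφ)
  have hφabs : |φ t| ≤ B' := hfromH _ (le_trans hFφc.2 hEFφ)
  have hKdiag : ∀ a, K a a = κ t a a := by
    intro a; simp only [hKdef, sub_self, Real.rpow_zero, one_mul]
  have hHdiag : ∀ a, H a a = η t a a := by
    intro a; simp only [hHdef, sub_self, Real.rpow_zero, one_mul]
  have hκdiag_abs : ∀ a, |κ t a a| ≤ B := fun a => by rw [← hKdiag a]; exact hKabs a a
  have hηdiag_abs : ∀ a, |η t a a| ≤ B' := fun a => by rw [← hHdiag a]; exact hHabs a a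
  have hsum1 : |∑ a, p a * κ t a a| ≤ (D:ℝ) * B := by
    calc |∑ a, p a * κ t a a| ≤ ∑ a, |p a * κ t a a| := Finset.abs_sum_le_sum_abs _ _
      _ ≤ ∑ _a : Fin D, B := by
          refine Finset.sum_le_sum fun a _ => ?_
          rw [abs_mul]
          calc |p a| * |κ t a a| ≤ 1 * B :=
                mul_le_mul (hpabs a) (hκdiag_abs a) (abs_nonneg _) zero_le_one
            _ = B := one_mul B
      _ = (D:ℝ) * B := by
          rw [Finset.sum_const, Finset.card_univ, Fintype.card_fin, nsmul_eq_mul]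
  have hsum2 : |∑ a, p a * η t a a| ≤ (D:ℝ) * B' := by
    calc |∑ a, p a * η t a a| ≤ ∑ a, |p a * η t a a| := Finset.abs_sum_le_sum_abs _ _
      _ ≤ ∑ _a : Fin D, B' := by
          refine Finset.sum_le_sum fun a _ => ?_
          rw [abs_mul]
          calc |p a| * |η t a a| ≤ 1 * B' :=
                mul_le_mul (hpabs a) (hηdiag_abs a) (abs_nonneg _) zero_le_one
            _ = B' := one_mul B'
      _ = (D:ℝ) * B' := by
          rw [Finset.sum_const, Finset.card_univ, Fintype.card_fin, nsmul_eq_mul]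
  -- trace estimate
  have hham := s.hamiltonian t htmem
  rw [← hTdef] at hham
  have htrbound : |∑ a, η t a a| ≤ (2*(D:ℝ)+4)*B/T^2 := by
    have h1 : (∑ a, η t a a) = (2*(∑ a, p a * κ t a a) - 4*pphi*ψ t)/T^2 := by
      rw [eq_div_iff (ne_of_gt hT2pos)]; linarith [hham]
    rw [h1, abs_div, abs_of_pos hT2pos]
    refine (div_le_div_iff_of_pos_right hT2pos).mpr ?_
    have h2 : |2*(∑ a, p a*κ t a a) - 4*pphi*ψ t|
        ≤ |2*(∑ a, p a*κ t a a)| + |4*pphi*ψ t| := abs_sub _ _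
    have h3 : |2*(∑ a, p a*κ t a a)| ≤ 2*((D:ℝ)*B) := by
      rw [abs_mul, abs_two]
      exact mul_le_mul_of_nonneg_left hsum1 (by norm_num)
    have h4 : |4*pphi*ψ t| ≤ 4*B := by
      rw [abs_mul, abs_mul, show |(4:ℝ)| = 4 by norm_num]
      calc 4 * |pphi| * |ψ t| ≤ 4*1*B := by
            refine mul_le_mul ?_ hψabs (abs_nonneg _) (by norm_num)
            linarith [hpphiabs]
        _ = 4*B := by ring
    linarith
  have hνtr : |ν t| ≤ |∑ a, η t a a| := by
    have h := s.nu_elliptic t htmem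
    rw [← hTdef] at h
    have h1 : ν t = T^2*(∑ a, η t a a)/(1+T^2) := by
      rw [eq_div_iff (by positivity : (1:ℝ)+T^2 ≠ 0)]; linarith
    rw [h1, abs_div, abs_of_pos (by positivity : (0:ℝ) < 1+T^2), abs_mul, abs_of_pos hT2pos,
      div_le_iff₀ (by positivity : (0:ℝ) < 1+T^2)]
    linarith [abs_nonneg (∑ a, η t a a)]
  -- rpow arithmetic
  have hRP : T ^ (-(3/2:ℝ)) = sT/T^2 := by
    rw [show (-(3/2:ℝ)) = 1/2 + (-2:ℝ) by norm_num, Real.rpow_add hT0,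
      Real.rpow_neg hT0.le, Real.rpow_two, ← Real.sqrt_eq_rpow, ← hsTdef]
    ring
  have h8le3 : Real.sqrt 8 ≤ 3 := by
    calc Real.sqrt 8 ≤ Real.sqrt 9 := Real.sqrt_le_sqrt (by norm_num)
      _ = 3 := by
        rw [show (9:ℝ) = 3^2 by norm_num, Real.sqrt_sq (by norm_num : (0:ℝ) ≤ 3)]
  have h8nn : (0:ℝ) ≤ Real.sqrt 8 := Real.sqrt_nonneg 8
  refine ⟨?_, ?_⟩
  · -- lapse estimate
    have h1 : |∑ a, η t a a| + |ν t| ≤ 2*((2*(D:ℝ)+4)*B/T^2) := by linarith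
    have h2 : 2*((2*(D:ℝ)+4)*B/T^2) = ((4*(D:ℝ)+8)*Real.sqrt 8) * (sT*sE/T^2) := by
      rw [hBdef]; ring
    have h4 : (4*(D:ℝ)+8)*Real.sqrt 8 ≤ 100*((D:ℝ)+3)^2 := by
      calc (4*(D:ℝ)+8)*Real.sqrt 8 ≤ (4*(D:ℝ)+8)*3 :=
            mul_le_mul_of_nonneg_left h8le3 (by positivity)
        _ ≤ 100*((D:ℝ)+3)^2 := by linarith [sq_nonneg ((D:ℝ)), hDR]
    have h5 : (0:ℝ) ≤ sT*sE/T^2 :=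
      div_nonneg (mul_nonneg hsT0.le hsEnn) hT2pos.le
    calc |∑ a, η t a a| + |ν t| ≤ ((4*(D:ℝ)+8)*Real.sqrt 8) * (sT*sE/T^2) := by
          rw [← h2]; exact h1
      _ ≤ (100*((D:ℝ)+3)^2) * (sT*sE/T^2) := mul_le_mul_of_nonneg_right h4 h5
      _ = 100*((D:ℝ)+3)^2 * T^(-(3/2:ℝ)) * sE := by rw [hRP]; ring
  · -- shift estimate
    set u : Fin D → ℝ := fun q => t ^ (1 - p q) * (lam q:ℝ) with hudef
    set Y : Fin D → ℝ := fun j => t ^ (p j) * X t j with hYdef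
    clear_value u Y
    have hu2 : ∀ q, (u q)^2 = t^(2-2*p q)*((lam q:ℝ))^2 := by
      intro q
      simp only [hudef]
      rw [mul_pow]
      congr 1
      rw [pow_two, hpow, show (1-p q)+(1-p q) = 2-2*p q by ring]
    have huabs : ∀ q, |u q| ≤ T := by
      intro q
      have h1 : (u q)^2 ≤ T^2 := by
        rw [hu2 q, hT2]
        exact Finset.single_le_sum (fun i _ => hw i) (Finset.mem_univ q)
      calc |u q| = Real.sqrt ((u q)^2) := (Real.sqrt_sq_eq_abs _).symm
        _ ≤ Real.sqrt (T^2) := Real.sqrt_le_sqrt h1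
        _ = T := Real.sqrt_sq hT0.le
    have htu : ∀ q, |t*(u q)| ≤ t*T := by
      intro q
      rw [abs_mul, abs_of_pos ht]
      exact mul_le_mul_of_nonneg_left (huabs q) ht.le
    have hνabs : |ν t| ≤ (2*(D:ℝ)+4)*B' := by
      have h0 : B/T^2 ≤ B' := by
        rw [hBdef, hB'def, div_le_div_iff₀ hT2pos hsT0]
        rw [show Real.sqrt 8*sT*sE*sT = Real.sqrt 8*sE*(sT^2) by ring, hsT2]
        have h1 : T ≤ T^2 := by
          calc T = T*1 := by ring
            _ ≤ T*T := mul_le_mul_of_nonneg_left hT1 hT0.le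
            _ = T^2 := by ring
        exact mul_le_mul_of_nonneg_left h1 (mul_nonneg h8nn hsEnn)
      calc |ν t| ≤ |∑ a, η t a a| := hνtr
        _ ≤ (2*(D:ℝ)+4)*B/T^2 := htrbound
        _ = (2*(D:ℝ)+4)*(B/T^2) := by ring
        _ ≤ (2*(D:ℝ)+4)*B' := mul_le_mul_of_nonneg_left h0 (by positivity)
    have hYeq : ∀ j, T^2 * Y j
        = (1-2*p j)*(t*(u j))*(ν t) - 4*(∑ q, p q*(t*(u q))*(H q j))
          + 2*(t*(u j))*((∑ a, p a*η t a a) - 2*pphi*(φ t)) := by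
      intro j
      have hX := s.X_elliptic t htmem j
      rw [← hTdef] at hX
      have e0 : T^2 * Y j = t^(p j) * (T^2 * X t j) := by simp only [hYdef]; ring
      have eterm : ∀ q, p q*(t*(u q))*(H q j)
          = t^(p j) * (p q * t^(2-2*p q) * (lam q:ℝ) * η t q j) := by
        intro q
        simp only [hudef, hHdef]
        calc p q*(t*(t^(1-p q)*(lam q:ℝ)))*(t^(p j - p q)*η t q j)
            = (t*(t^(1-p q)*t^(p j-p q)))*(p q*(lam q:ℝ)*η t q j) := by ring
          _ = (t*t^((1-p q)+(p j-p q)))*(p q*(lam q:ℝ)*η t q j) := by rw [hpow]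
          _ = t^(((1-p q)+(p j-p q))+1)*(p q*(lam q:ℝ)*η t q j) := by rw [hmt]
          _ = t^(p j + (2-2*p q))*(p q*(lam q:ℝ)*η t q j) := by
              rw [show ((1-p q)+(p j-p q))+1 = p j + (2-2*p q) by ring]
          _ = (t^(p j)*t^(2-2*p q))*(p q*(lam q:ℝ)*η t q j) := by rw [hpow]
          _ = t^(p j) * (p q * t^(2-2*p q) * (lam q:ℝ) * η t q j) := by ring
      have eterm1 : (1-2*p j)*(t*(u j))*(ν t)
          = t^(p j)*((1-2*p j)*t^(2-2*p j)*(lam j:ℝ)*(ν t)) := by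
        simp only [hudef]
        calc (1-2*p j)*(t*(t^(1-p j)*(lam j:ℝ)))*(ν t)
            = (t*t^(1-p j))*((1-2*p j)*(lam j:ℝ)*(ν t)) := by ring
          _ = t^((1-p j)+1)*((1-2*p j)*(lam j:ℝ)*(ν t)) := by rw [hmt]
          _ = t^(p j+(2-2*p j))*((1-2*p j)*(lam j:ℝ)*(ν t)) := by
              rw [show (1-p j)+1 = p j+(2-2*p j) by ring]
          _ = (t^(p j)*t^(2-2*p j))*((1-2*p j)*(lam j:ℝ)*(ν t)) := by rw [hpow]
          _ = t^(p j)*((1-2*p j)*t^(2-2*p j)*(lam j:ℝ)*(ν t)) := by ring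
      have eterm3 : 2*(t*(u j))*((∑ a, p a*η t a a) - 2*pphi*(φ t))
          = t^(p j)*(2*t^(2-2*p j)*(lam j:ℝ)*((∑ a, p a*η t a a) - 2*pphi*(φ t))) := by
        simp only [hudef]
        calc 2*(t*(t^(1-p j)*(lam j:ℝ)))*((∑ a, p a*η t a a) - 2*pphi*(φ t))
            = (t*t^(1-p j))*(2*(lam j:ℝ)*((∑ a, p a*η t a a) - 2*pphi*(φ t))) := by ring
          _ = t^((1-p j)+1)*(2*(lam j:ℝ)*((∑ a, p a*η t a a) - 2*pphi*(φ t))) := by rw [hmt]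
          _ = t^(p j+(2-2*p j))*(2*(lam j:ℝ)*((∑ a, p a*η t a a) - 2*pphi*(φ t))) := by
              rw [show (1-p j)+1 = p j+(2-2*p j) by ring]
          _ = (t^(p j)*t^(2-2*p j))*(2*(lam j:ℝ)*((∑ a, p a*η t a a) - 2*pphi*(φ t))) := by
              rw [hpow]
          _ = t^(p j)*(2*t^(2-2*p j)*(lam j:ℝ)*((∑ a, p a*η t a a) - 2*pphi*(φ t))) := by ring
      have esum : (∑ q, t^(p j)*(p q*t^(2-2*p q)*(lam q:ℝ)*η t q j))
          = ∑ q, p q*(t*(u q))*(H q j) :=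
        Finset.sum_congr rfl fun q _ => by rw [eterm q]
      have esplit : t^(p j) * ((1-2*p j)*t^(2-2*p j)*(lam j:ℝ)*ν t
            - 4*∑ q, p q*t^(2-2*p q)*(lam q:ℝ)*η t q j
            + 2*t^(2-2*p j)*(lam j:ℝ)*((∑ a, p a*η t a a) - 2*pphi*φ t))
          = t^(p j)*((1-2*p j)*t^(2-2*p j)*(lam j:ℝ)*(ν t))
            - 4*(∑ q, t^(p j)*(p q*t^(2-2*p q)*(lam q:ℝ)*η t q j))
            + t^(p j)*(2*t^(2-2*p j)*(lam j:ℝ)*((∑ a, p a*η t a a) - 2*pphi*(φ t))) := by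
        rw [← Finset.mul_sum]; ring
      rw [e0, hX, esplit, esum, ← eterm1, ← eterm3]
    set Mb := (12*(D:ℝ)+16)*t*B'/T with hMbdef
    clear_value Mb
    have hMbnn : 0 ≤ Mb := by
      rw [hMbdef]
      exact div_nonneg (mul_nonneg (mul_nonneg (by positivity) ht.le) hB'nn) hT0.le
    have hYabs : ∀ j, |Y j| ≤ Mb := by
      intro j
      have hA1 : |(1-2*p j)*(t*(u j))*(ν t)| ≤ 3*(t*T)*((2*(D:ℝ)+4)*B') := by
        rw [abs_mul, abs_mul]
        have h2 : |1-2*p j| ≤ 3 := by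
          rw [abs_le]; constructor <;> linarith [hpl j, hpu j]
        refine mul_le_mul (mul_le_mul h2 (htu j) (abs_nonneg _) (by norm_num)) hνabs
          (abs_nonneg _) ?_
        positivity
      have hS : |∑ q, p q*(t*(u q))*(H q j)| ≤ (D:ℝ)*(t*T*B') := by
        calc |∑ q, p q*(t*(u q))*(H q j)| ≤ ∑ q, |p q*(t*(u q))*(H q j)| :=
              Finset.abs_sum_le_sum_abs _ _
          _ ≤ ∑ _q : Fin D, t*T*B' := by
              refine Finset.sum_le_sum fun q _ => ?_
              rw [abs_mul, abs_mul]
              calc |p q| * |t*(u q)| * |H q j| ≤ 1*(t*T)*B' :=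
                    mul_le_mul (mul_le_mul (hpabs q) (htu q) (abs_nonneg _) zero_le_one)
                      (hHabs q j) (abs_nonneg _) (by positivity)
                _ = t*T*B' := by ring
          _ = (D:ℝ)*(t*T*B') := by
              rw [Finset.sum_const, Finset.card_univ, Fintype.card_fin, nsmul_eq_mul]
      have hA3 : |2*(t*(u j))*((∑ a, p a*η t a a) - 2*pphi*(φ t))|
          ≤ 2*(t*T)*((D:ℝ)*B' + 2*B') := by
        rw [abs_mul, abs_mul, show |(2:ℝ)| = 2 by norm_num]
        have h5 : |(∑ a, p a*η t a a) - 2*pphi*(φ t)| ≤ (D:ℝ)*B' + 2*B' := by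
          have h7 : |2*pphi*(φ t)| ≤ 2*B' := by
            rw [abs_mul, abs_mul, show |(2:ℝ)| = 2 by norm_num]
            calc 2 * |pphi| * |φ t| ≤ 2*1*B' := by
                  refine mul_le_mul ?_ hφabs (abs_nonneg _) (by norm_num)
                  linarith [hpphiabs]
              _ = 2*B' := by ring
          calc |(∑ a, p a*η t a a) - 2*pphi*(φ t)|
              ≤ |∑ a, p a*η t a a| + |2*pphi*(φ t)| := abs_sub _ _
            _ ≤ (D:ℝ)*B' + 2*B' := by linarith [hsum2]
        refine mul_le_mul (mul_le_mul le_rfl (htu j) (abs_nonneg _) (by norm_num)) h5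
          (abs_nonneg _) ?_
        positivity
      have h1 : |T^2*Y j| ≤ (12*(D:ℝ)+16)*(t*T*B') := by
        rw [hYeq j]
        have htri : |(1-2*p j)*(t*(u j))*(ν t) - 4*(∑ q, p q*(t*(u q))*(H q j))
              + 2*(t*(u j))*((∑ a, p a*η t a a) - 2*pphi*(φ t))|
            ≤ |(1-2*p j)*(t*(u j))*(ν t)| + 4 * |∑ q, p q*(t*(u q))*(H q j)|
              + |2*(t*(u j))*((∑ a, p a*η t a a) - 2*pphi*(φ t))| := by
          have t1 := abs_add_le ((1-2*p j)*(t*(u j))*(ν t) - 4*(∑ q, p q*(t*(u q))*(H q j)))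
            (2*(t*(u j))*((∑ a, p a*η t a a) - 2*pphi*(φ t)))
          have t2 := abs_sub ((1-2*p j)*(t*(u j))*(ν t)) (4*(∑ q, p q*(t*(u q))*(H q j)))
          have t3 : |4*(∑ q, p q*(t*(u q))*(H q j))| = 4 * |∑ q, p q*(t*(u q))*(H q j)| := by
            rw [abs_mul, show |(4:ℝ)| = 4 by norm_num]
          linarith
        calc |(1-2*p j)*(t*(u j))*(ν t) - 4*(∑ q, p q*(t*(u q))*(H q j))
              + 2*(t*(u j))*((∑ a, p a*η t a a) - 2*pphi*(φ t))|
            ≤ |(1-2*p j)*(t*(u j))*(ν t)| + 4 * |∑ q, p q*(t*(u q))*(H q j)|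
              + |2*(t*(u j))*((∑ a, p a*η t a a) - 2*pphi*(φ t))| := htri
          _ ≤ 3*(t*T)*((2*(D:ℝ)+4)*B') + 4*((D:ℝ)*(t*T*B')) + 2*(t*T)*((D:ℝ)*B' + 2*B') := by
              linarith
          _ = (12*(D:ℝ)+16)*(t*T*B') := by ring
      have h2 : T^2 * |Y j| ≤ T^2*Mb := by
        have e : T^2*Mb = (12*(D:ℝ)+16)*(t*T*B') := by
          rw [hMbdef]; field_simp
        rw [e]
        calc T^2 * |Y j| = |T^2*Y j| := by rw [abs_mul, abs_of_pos hT2pos]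
          _ ≤ _ := h1
      exact le_of_mul_le_mul_left h2 hT2pos
    have hterm : ∀ j, t^(2*p j)*(X t j)^2 = (Y j)^2 := by
      intro j
      simp only [hYdef]
      rw [mul_pow]
      have e : (t^(p j))^2 = t^(2*p j) := by
        rw [pow_two, hpow, show p j + p j = 2*p j by ring]
      rw [e]
    have hsumY : (∑ j, t^(2*p j)*(X t j)^2) ≤ (D:ℝ)*Mb^2 := by
      calc (∑ j, t^(2*p j)*(X t j)^2) = ∑ j, (Y j)^2 :=
            Finset.sum_congr rfl fun j _ => hterm j
        _ ≤ ∑ _j : Fin D, Mb^2 := by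
            refine Finset.sum_le_sum fun j _ => ?_
            rw [← sq_abs (Y j)]
            exact pow_le_pow_left₀ (abs_nonneg _) (hYabs j) 2
        _ = (D:ℝ)*Mb^2 := by
            rw [Finset.sum_const, Finset.card_univ, Fintype.card_fin, nsmul_eq_mul]
    have h9 : sT/T^2 = 1/(sT*T) := by
      rw [div_eq_div_iff (ne_of_gt hT2pos) (by positivity : (sT*T) ≠ 0),
        show sT*(sT*T) = sT^2*T by ring, hsT2]
      ring
    have h6 : (D:ℝ)*(12*(D:ℝ)+16)*Real.sqrt 8 ≤ 100*((D:ℝ)+3)^2 := by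
      calc (D:ℝ)*(12*(D:ℝ)+16)*Real.sqrt 8 ≤ (D:ℝ)*(12*(D:ℝ)+16)*3 :=
            mul_le_mul_of_nonneg_left h8le3 (by positivity)
        _ ≤ 100*((D:ℝ)+3)^2 := by linarith [sq_nonneg ((D:ℝ)), hDR]
    calc Real.sqrt (∑ j, t^(2*p j)*(X t j)^2) ≤ Real.sqrt ((D:ℝ)*Mb^2) :=
          Real.sqrt_le_sqrt hsumY
      _ = Real.sqrt (D:ℝ)*Mb := by
          rw [Real.sqrt_mul (by positivity : (0:ℝ) ≤ (D:ℝ)), Real.sqrt_sq hMbnn]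
      _ ≤ (D:ℝ)*Mb := by
          refine mul_le_mul_of_nonneg_right ?_ hMbnn
          have hDD : (D:ℝ) ≤ (D:ℝ)^2 := by
            calc (D:ℝ) = (D:ℝ)*1 := by ring
              _ ≤ (D:ℝ)*(D:ℝ) := mul_le_mul_of_nonneg_left (by linarith) (by positivity)
              _ = (D:ℝ)^2 := by ring
          calc Real.sqrt (D:ℝ) ≤ Real.sqrt ((D:ℝ)^2) := Real.sqrt_le_sqrt hDD
            _ = (D:ℝ) := Real.sqrt_sq (by positivity)
      _ = ((D:ℝ)*(12*(D:ℝ)+16)*Real.sqrt 8) * (t*sE/(sT*T)) := by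
          rw [hMbdef, hB'def]; ring
      _ ≤ (100*((D:ℝ)+3)^2) * (t*sE/(sT*T)) := by
          refine mul_le_mul_of_nonneg_right h6 ?_
          exact div_nonneg (mul_nonneg ht.le hsEnn) (mul_nonneg hsT0.le hT0.le)
      _ = 100*((D:ℝ)+3)^2 * t * T^(-(3/2:ℝ)) * sE := by
          rw [hRP, h9]; ring
end

section
/- (Low-frequency derivative estimates under subcriticality.) Assume the exponents are δ-subcritical for some δ > 0. Let λ ∈ ℤ^D \ {0} and let (η, κ, φ, ψ, ν) be a λ-mode CMCTC solution of the linearized Einstein–scalar field system on (0, t_{λ*}]. Then there is C > 0 depending only on D, p_1,…,p_D, p_φ and δ such that for every t ∈ (0, t_{λ*}] and all indices 1 ≤ i, j ≤ D: t_{λ*}^{−p_i+p_j}·|t·(κ_i{}^j)′(t)| + t_{λ*}^{−p_i+p_j}·|t·(Υ̃_i{}^j)′(t)| + |t·ψ′(t)| + |t·φ̃′(t)| ≤ C·(t/t_{λ*})^δ·E_{λ,low}(t)^{1/2}. -/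
open Real Filter MeasureTheory Topology

/-- A λ-mode CMCTC solution of the linearized Einstein–scalar field system on the
interval `I`: the projection of the linearized system in the constant-mean-curvature
transported-coordinate gauge (vanishing shift) onto the Fourier mode λ. -/
structure IsCMCTCSolution {D : ℕ} (p : Fin D → ℝ) (pphi : ℝ) (lam : Fin D → ℤ)
    (η κ : ℝ → Fin D → Fin D → ℝ) (φ ψ ν : ℝ → ℝ) (I : Set ℝ) : Prop where
  cont_nu : ContinuousOn ν I
  eta_evol : ∀ t ∈ I, ∀ i j, HasDerivAt (fun s => η s i j)
    ((κ t i j + 2 * (p i - p j) * η t i j - p i * (if i = j then 1 else 0) * ν t) / t) t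
  kappa_evol : ∀ t ∈ I, ∀ i j, HasDerivAt (fun s => κ s i j)
    ((-(tau p lam t ^ 2) * η t i j
      - t ^ (2 - 2 * p j) * (lam i : ℝ) * (lam j : ℝ) * (∑ a, η t a a)
      + (∑ a, t ^ (2 - 2 * p a) * (lam i : ℝ) * (lam a : ℝ) * η t a j)
      + t ^ (2 - 2 * p j) * (lam j : ℝ) * (∑ b, (lam b : ℝ) * η t i b)
      + t ^ (2 - 2 * p j) * (lam i : ℝ) * (lam j : ℝ) * ν t
      + p i * (if i = j then 1 else 0) * ν t) / t) t
  phi_evol : ∀ t ∈ I, HasDerivAt φ ((ψ t + pphi * ν t) / t) t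
  psi_evol : ∀ t ∈ I, HasDerivAt ψ ((-(tau p lam t ^ 2) * φ t - pphi * ν t) / t) t
  nu_elliptic : ∀ t ∈ I, (1 + tau p lam t ^ 2) * ν t =
    2 * tau p lam t ^ 2 * (∑ a, η t a a)
      - 2 * ∑ a, ∑ i, t ^ (2 - 2 * p a) * (lam a : ℝ) * (lam i : ℝ) * η t a i
  cmc : ∀ t ∈ I, ∑ a, κ t a a = 0
  hamiltonian : ∀ t ∈ I,
    2 * tau p lam t ^ 2 * (∑ a, η t a a)
      - 2 * (∑ a, ∑ i, t ^ (2 - 2 * p a) * (lam a : ℝ) * (lam i : ℝ) * η t a i)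
      - 2 * (∑ a, p a * κ t a a) + 4 * pphi * ψ t = 0
  momentum : ∀ t ∈ I, ∀ i,
    (∑ j, (lam j : ℝ) * κ t i j)
      + (lam i : ℝ) * (-(∑ a, p a * η t a a) + 2 * pphi * φ t)
      + p i * (lam i : ℝ) * (∑ a, η t a a) = 0
  sym_eta : ∀ t ∈ I, ∀ a c,
    t ^ (-(2 * p a)) * η t a c = t ^ (-(2 * p c)) * η t c a
  sym_kappa : ∀ t ∈ I, ∀ a c,
    t ^ (-(2 * p a)) * (κ t a c + 2 * p a * η t a c)
      = t ^ (-(2 * p c)) * (κ t c a + 2 * p c * η t c a)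

/-- G_i{}^j(t) = ∫_t^{t_{λ*}} s^{2pᵢ-2pⱼ} ds/s. -/
noncomputable def Gfun {D : ℕ} (p : Fin D → ℝ) (tstar : ℝ) (i j : Fin D) (t : ℝ) : ℝ :=
  ∫ s in t..tstar, s ^ (2 * p i - 2 * p j - 1)

/-- The renormalized quantity Υ̃_i{}^j(t) = η_i{}^j(t) + G_i{}^j(t)·κ_j{}^i(t). -/
noncomputable def UpsT {D : ℕ} (p : Fin D → ℝ) (tstar : ℝ)
    (η κ : ℝ → Fin D → Fin D → ℝ) (t : ℝ) (i j : Fin D) : ℝ :=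
  η t i j + Gfun p tstar i j t * κ t j i

/-- The renormalized scalar field φ̃(t) = φ(t) + log(t_{λ*}/t)·ψ(t). -/
noncomputable def phiT (φ ψ : ℝ → ℝ) (tstar t : ℝ) : ℝ :=
  φ t + Real.log (tstar / t) * ψ t

/-- The low-frequency energy E_{λ,low} of the linearized Einstein–scalar field system. -/
noncomputable def ElowSys {D : ℕ} (p : Fin D → ℝ) (tstar : ℝ)
    (η κ : ℝ → Fin D → Fin D → ℝ) (φ ψ : ℝ → ℝ) (t : ℝ) : ℝ :=
  (∑ i, ∑ j, tstar ^ (-(2 * p i) + 2 * p j)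
      * ((κ t i j) ^ 2 + (UpsT p tstar η κ t i j) ^ 2))
    + ψ t ^ 2 + phiT φ ψ tstar t ^ 2


lemma log_le_aux {ε x : ℝ} (hε : 0 < ε) (hx : 1 ≤ x) : Real.log x ≤ (1/ε) * x ^ ε := by
  have hx0 : 0 < x := lt_of_lt_of_le one_pos hx
  have h1 : Real.log (x ^ ε) = ε * Real.log x := Real.log_rpow hx0 ε
  have h2 : Real.log (x ^ ε) ≤ x ^ ε - 1 := Real.log_le_sub_one_of_pos (Real.rpow_pos_of_pos hx0 ε)
  have h3 : ε * Real.log x ≤ x ^ ε := by nlinarith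
  rw [div_mul_eq_mul_div, one_mul, le_div_iff₀ hε]
  nlinarith

lemma rpow_intervalIntegrable {t T : ℝ} (r : ℝ) (ht : 0 < t) (hT : 0 < T) :
    IntervalIntegrable (fun s : ℝ => s ^ r) volume t T := by
  apply ContinuousOn.intervalIntegrable
  intro x hx
  have hx0 : 0 < x := by
    rcases Set.mem_uIcc.mp hx with h | h
    · exact lt_of_lt_of_le ht h.1
    · exact lt_of_lt_of_le hT h.1
  exact ((Real.continuousAt_rpow_const x r (Or.inl hx0.ne')).continuousWithinAt)

lemma Gfun_hasDerivAt {D : ℕ} (p : Fin D → ℝ) {tstar t : ℝ} (ht : 0 < t) (hT : 0 < tstar)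
    (i j : Fin D) :
    HasDerivAt (Gfun p tstar i j) (-(t ^ (2 * p i - 2 * p j - 1))) t := by
  have hf := rpow_intervalIntegrable (2 * p i - 2 * p j - 1) ht hT
  have hmeas : StronglyMeasurableAtFilter (fun s : ℝ => s ^ (2 * p i - 2 * p j - 1)) (𝓝 t) := by
    apply ContinuousOn.stronglyMeasurableAtFilter (s := Set.Ioi (0:ℝ)) isOpen_Ioi _ t ht
    intro x hx
    exact (Real.continuousAt_rpow_const x _ (Or.inl (ne_of_gt hx))).continuousWithinAt
  have hcont : ContinuousAt (fun s : ℝ => s ^ (2 * p i - 2 * p j - 1)) t :=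
    Real.continuousAt_rpow_const t _ (Or.inl ht.ne')
  exact intervalIntegral.integral_hasDerivAt_left hf hmeas hcont

lemma Gfun_nonneg {D : ℕ} (p : Fin D → ℝ) {tstar t : ℝ} (ht : 0 < t) (hts : t ≤ tstar)
    (i j : Fin D) : 0 ≤ Gfun p tstar i j t := by
  apply intervalIntegral.integral_nonneg hts
  intro x hx
  exact Real.rpow_nonneg (le_trans ht.le hx.1) _

lemma Gfun_le {D : ℕ} (p : Fin D → ℝ) {tstar t : ℝ} (ht : 0 < t) (hts : t ≤ tstar)
    (i j : Fin D) :
    Gfun p tstar i j t ≤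
      max (t ^ (2 * p i - 2 * p j)) (tstar ^ (2 * p i - 2 * p j)) * Real.log (tstar / t) := by
  have hT : 0 < tstar := lt_of_lt_of_le ht hts
  set α := 2 * p i - 2 * p j with hα
  have key : ∀ x ∈ Set.Icc t tstar, x ^ (α - 1) ≤ (max (t ^ α) (tstar ^ α)) * x⁻¹ := by
    intro x hx
    have hx0 : 0 < x := lt_of_lt_of_le ht hx.1
    have h1 : x ^ (α - 1) = x ^ α * x⁻¹ := by
      rw [← Real.rpow_neg_one x, ← Real.rpow_add hx0]; ring_nf
    rw [h1]
    apply mul_le_mul_of_nonneg_right _ (inv_nonneg.mpr hx0.le)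
    rcases le_or_gt 0 α with hα0 | hα0
    · exact le_max_of_le_right (Real.rpow_le_rpow hx0.le hx.2 hα0)
    · exact le_max_of_le_left (Real.rpow_le_rpow_of_nonpos ht hx.1 hα0.le)
  calc Gfun p tstar i j t ≤ ∫ s in t..tstar, (max (t ^ α) (tstar ^ α)) * s⁻¹ := by
        apply intervalIntegral.integral_mono_on hts (rpow_intervalIntegrable _ ht hT) _ key
        exact (intervalIntegral.intervalIntegrable_inv (fun x hx => by
          rcases Set.mem_uIcc.mp hx with h | h
          · exact (lt_of_lt_of_le ht h.1).ne'
          · exact (lt_of_lt_of_le hT h.1).ne') continuousOn_id).const_mul _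
    _ = (max (t ^ α) (tstar ^ α)) * Real.log (tstar / t) := by
        rw [intervalIntegral.integral_const_mul, integral_inv_of_pos ht hT]

lemma abs6 (x1 x2 x3 x4 x5 x6 : ℝ) :
    |x1 + x2 + x3 - x4 + x5 + x6| ≤ |x1| + |x2| + |x3| + |x4| + |x5| + |x6| := by
  calc |x1 + x2 + x3 - x4 + x5 + x6| ≤ |x1 + x2 + x3 - x4 + x5| + |x6| := abs_add_le _ _
    _ ≤ |x1 + x2 + x3 - x4| + |x5| + |x6| := by linarith [abs_add_le (x1 + x2 + x3 - x4) x5]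
    _ ≤ |x1 + x2 + x3| + |x4| + |x5| + |x6| := by linarith [abs_sub (x1 + x2 + x3) x4]
    _ ≤ |x1 + x2| + |x3| + |x4| + |x5| + |x6| := by linarith [abs_add_le (x1 + x2) x3]
    _ ≤ |x1| + |x2| + |x3| + |x4| + |x5| + |x6| := by linarith [abs_add_le x1 x2]

set_option maxHeartbeats 2000000

/-- Proposition `prop:einstein_low_der`: low-frequency derivative estimates for the
linearized Einstein–scalar field system in CMCTC gauge, under δ-subcriticality. -/
theorem einstein_low_freq_derivative_estimates (D : ℕ) (hD : 2 ≤ D)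
    (p : Fin D → ℝ) (pphi : ℝ)
    (hkas1 : ∑ i, p i = 1) (hkas2 : (∑ i, p i ^ 2) + 2 * pphi ^ 2 = 1)
    (hp : ∀ i, p i < 1)
    (δ : ℝ) (hδ : 0 < δ)
    (hsub : ∀ i j k : Fin D, j ≠ k → δ ≤ 1 + p i - p j - p k) :
    ∃ C : ℝ, 0 < C ∧
      ∀ (lam : Fin D → ℤ), lam ≠ 0 →
      ∀ tstar : ℝ, 0 < tstar → tstar ≤ 1 → tau p lam tstar = 1 →
      ∀ (η κ : ℝ → Fin D → Fin D → ℝ) (φ ψ ν : ℝ → ℝ),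
        IsCMCTCSolution p pphi lam η κ φ ψ ν (Set.Ioc 0 tstar) →
      ∀ t ∈ Set.Ioc (0:ℝ) tstar, ∀ i j : Fin D,
        ∃ dk dU dps dph : ℝ,
          HasDerivAt (fun s => κ s i j) dk t ∧
          HasDerivAt (fun s => UpsT p tstar η κ s i j) dU t ∧
          HasDerivAt ψ dps t ∧
          HasDerivAt (phiT φ ψ tstar) dph t ∧
          tstar ^ (-(p i) + p j) * |t * dk| + tstar ^ (-(p i) + p j) * |t * dU|
              + |t * dps| + |t * dph| ≤
            C * (t / tstar) ^ δ * Real.sqrt (ElowSys p tstar η κ φ ψ t) := by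
  classical
  have hD1 : (1:ℝ) ≤ D := by
    have : (1:ℕ) ≤ D := by omega
    exact_mod_cast this
  have hD0 : (0:ℝ) < D := lt_of_lt_of_le one_pos hD1
  have hDD : 4 * (D:ℝ) + 8 * (D:ℝ)^2 ≤ 12 * (D:ℝ)^2 := by nlinarith
  -- derived exponent facts
  have hF1 : ∀ c : Fin D, δ ≤ 1 - p c := by
    intro c
    obtain ⟨k, hk⟩ : ∃ k : Fin D, k ≠ c :=
      Fintype.exists_ne_of_one_lt_card (by rw [Fintype.card_fin]; omega) c
    have := hsub k c k (Ne.symm hk)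
    linarith
  have hpabs : ∀ c : Fin D, |p c| ≤ 1 := by
    intro c
    have h1 : p c ^ 2 ≤ ∑ i, p i ^ 2 :=
      Finset.single_le_sum (fun i _ => sq_nonneg (p i)) (Finset.mem_univ c)
    have h2 : p c ^ 2 ≤ 1 := by nlinarith [sq_nonneg pphi]
    have := Real.abs_le_sqrt h2
    rwa [Real.sqrt_one] at this
  have hpphi : |pphi| ≤ 1 := by
    have h1 : (0:ℝ) ≤ ∑ i, p i ^ 2 := Finset.sum_nonneg (fun i _ => sq_nonneg (p i))
    have h2 : pphi ^ 2 ≤ 1 := by nlinarith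
    have := Real.abs_le_sqrt h2
    rwa [Real.sqrt_one] at this
  set C0 : ℝ := 1 + 2/δ with hC0def
  have hC0 : 0 < C0 := by positivity
  set Cν : ℝ := 4 * (D:ℝ)^2 * C0 with hCνdef
  have hCν : 0 < Cν := by positivity
  set Cκ : ℝ := 12 * (D:ℝ)^2 * C0 with hCκdef
  have hCκ : 0 < Cκ := by positivity
  refine ⟨Cκ + (Cν + (2/δ) * Cκ) + ((D:ℝ) * C0 + Cν) + (Cν + (2/δ) * ((D:ℝ) * C0 + Cν)),
    by positivity, ?_⟩
  intro lam _hlam tstar hts0 _hts1 htau η κ φ ψ ν hsol t htmem i j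
  obtain ⟨ht0, htle⟩ := htmem
  have htmem' : t ∈ Set.Ioc (0:ℝ) tstar := ⟨ht0, htle⟩
  set E := ElowSys p tstar η κ φ ψ t with hEdef
  set S := Real.sqrt E with hSdef
  have hS0 : 0 ≤ S := Real.sqrt_nonneg _
  set σ := t / tstar with hσdef
  have hσ0 : 0 < σ := div_pos ht0 hts0
  have hσ1 : σ ≤ 1 := (div_le_one hts0).mpr htle
  have hσn : ∀ e : ℝ, 0 ≤ σ ^ e := fun e => (Real.rpow_pos_of_pos hσ0 e).le
  have htsn : ∀ e : ℝ, 0 ≤ tstar ^ e := fun e => (Real.rpow_pos_of_pos hts0 e).le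
  have htn : ∀ e : ℝ, 0 ≤ t ^ e := fun e => (Real.rpow_pos_of_pos ht0 e).le
  have hσpow : ∀ a b : ℝ, b ≤ a → σ ^ a ≤ σ ^ b := fun a b h =>
    Real.rpow_le_rpow_of_exponent_ge hσ0 hσ1 h
  have hone : ∀ e : ℝ, e ≤ 0 → 1 ≤ σ ^ e := by
    intro e he
    have := hσpow 0 e he
    rwa [Real.rpow_zero] at this
  have hsumb : ∀ (f : Fin D → ℝ) (K : ℝ), (∀ x, f x ≤ K) → ∑ x, f x ≤ (D:ℝ) * K := by
    intro f K h
    calc ∑ x, f x ≤ ∑ _x : Fin D, K := Finset.sum_le_sum (fun x _ => h x)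
      _ = (D:ℝ) * K := by
          rw [Finset.sum_const, Finset.card_univ, Fintype.card_fin, nsmul_eq_mul]
  -- energy bounds
  have hsingle : ∀ a b : Fin D,
      tstar ^ (-(2 * p a) + 2 * p b) * ((κ t a b) ^ 2 + (UpsT p tstar η κ t a b) ^ 2) ≤ E := by
    intro a b
    have hnn : ∀ a' b' : Fin D,
        0 ≤ tstar ^ (-(2 * p a') + 2 * p b') * ((κ t a' b') ^ 2 + (UpsT p tstar η κ t a' b') ^ 2) :=
      fun a' b' => mul_nonneg (htsn _) (by positivity)
    have h1 : tstar ^ (-(2 * p a) + 2 * p b) * ((κ t a b) ^ 2 + (UpsT p tstar η κ t a b) ^ 2)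
        ≤ ∑ b', tstar ^ (-(2 * p a) + 2 * p b') * ((κ t a b') ^ 2 + (UpsT p tstar η κ t a b') ^ 2) :=
      Finset.single_le_sum (fun b' _ => hnn a b') (Finset.mem_univ b)
    have h2 : (∑ b', tstar ^ (-(2 * p a) + 2 * p b') * ((κ t a b') ^ 2 + (UpsT p tstar η κ t a b') ^ 2))
        ≤ ∑ a', ∑ b', tstar ^ (-(2 * p a') + 2 * p b') * ((κ t a' b') ^ 2 + (UpsT p tstar η κ t a' b') ^ 2) :=
      Finset.single_le_sum (fun a' _ => Finset.sum_nonneg (fun b' _ => hnn a' b')) (Finset.mem_univ a)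
    have h3 : E = (∑ a', ∑ b', tstar ^ (-(2 * p a') + 2 * p b')
        * ((κ t a' b') ^ 2 + (UpsT p tstar η κ t a' b') ^ 2)) + ψ t ^ 2 + phiT φ ψ tstar t ^ 2 := rfl
    nlinarith [sq_nonneg (ψ t), sq_nonneg (phiT φ ψ tstar t)]
  have hw2 : ∀ a b : Fin D, tstar ^ (-(2 * p a) + 2 * p b)
      = tstar ^ (p b - p a) * tstar ^ (p b - p a) := by
    intro a b
    rw [← Real.rpow_add hts0]
    congr 1; ring
  have hKab : ∀ a b : Fin D, tstar ^ (p b - p a) * |κ t a b| ≤ S := by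
    intro a b
    have h1 : (tstar ^ (p b - p a) * κ t a b) ^ 2 ≤ E := by
      have := hsingle a b
      rw [hw2 a b] at this
      nlinarith [sq_nonneg (UpsT p tstar η κ t a b), htsn (p b - p a)]
    have h2 := Real.abs_le_sqrt h1
    rwa [abs_mul, abs_of_nonneg (htsn (p b - p a))] at h2
  have hUab : ∀ a b : Fin D, tstar ^ (p b - p a) * |UpsT p tstar η κ t a b| ≤ S := by
    intro a b
    have h1 : (tstar ^ (p b - p a) * UpsT p tstar η κ t a b) ^ 2 ≤ E := by
      have := hsingle a b
      rw [hw2 a b] at this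
      nlinarith [sq_nonneg (κ t a b), htsn (p b - p a)]
    have h2 := Real.abs_le_sqrt h1
    rwa [abs_mul, abs_of_nonneg (htsn (p b - p a))] at h2
  have hpsiS : |ψ t| ≤ S := by
    apply Real.abs_le_sqrt
    have h3 : E = (∑ a', ∑ b', tstar ^ (-(2 * p a') + 2 * p b')
        * ((κ t a' b') ^ 2 + (UpsT p tstar η κ t a' b') ^ 2)) + ψ t ^ 2 + phiT φ ψ tstar t ^ 2 := rfl
    have h4 : 0 ≤ ∑ a', ∑ b', tstar ^ (-(2 * p a') + 2 * p b')
        * ((κ t a' b') ^ 2 + (UpsT p tstar η κ t a' b') ^ 2) :=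
      Finset.sum_nonneg (fun a' _ => Finset.sum_nonneg (fun b' _ =>
        mul_nonneg (htsn _) (by positivity)))
    nlinarith [sq_nonneg (phiT φ ψ tstar t)]
  have hphiTS : |phiT φ ψ tstar t| ≤ S := by
    apply Real.abs_le_sqrt
    have h3 : E = (∑ a', ∑ b', tstar ^ (-(2 * p a') + 2 * p b')
        * ((κ t a' b') ^ 2 + (UpsT p tstar η κ t a' b') ^ 2)) + ψ t ^ 2 + phiT φ ψ tstar t ^ 2 := rfl
    have h4 : 0 ≤ ∑ a', ∑ b', tstar ^ (-(2 * p a') + 2 * p b')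
        * ((κ t a' b') ^ 2 + (UpsT p tstar η κ t a' b') ^ 2) :=
      Finset.sum_nonneg (fun a' _ => Finset.sum_nonneg (fun b' _ =>
        mul_nonneg (htsn _) (by positivity)))
    nlinarith [sq_nonneg (ψ t)]
  -- lambda bounds
  have hsum1 : (∑ c, tstar ^ (2 - 2 * p c) * ((lam c : ℝ)) ^ 2) = 1 := by
    have h := htau
    unfold tau at h
    exact Real.sqrt_eq_one.mp h
  have hlamb : ∀ c : Fin D, |(lam c : ℝ)| ≤ tstar ^ (p c - 1) := by
    intro c
    have h1 : tstar ^ (2 - 2 * p c) * ((lam c : ℝ)) ^ 2 ≤ 1 := by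
      rw [← hsum1]
      exact Finset.single_le_sum (f := fun c' => tstar ^ (2 - 2 * p c') * ((lam c' : ℝ)) ^ 2)
        (fun c' _ => mul_nonneg (htsn _) (sq_nonneg _)) (Finset.mem_univ c)
    have hinv : tstar ^ (2 * p c - 2) * tstar ^ (2 - 2 * p c) = 1 := by
      rw [← Real.rpow_add hts0]; norm_num
    have h3 : ((lam c : ℝ)) ^ 2 ≤ tstar ^ (2 * p c - 2) := by
      have hpos := Real.rpow_pos_of_pos hts0 (2 - 2 * p c)
      have hpos2 := Real.rpow_pos_of_pos hts0 (2 * p c - 2)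
      nlinarith
    have h4 : tstar ^ (2 * p c - 2) = (tstar ^ (p c - 1)) ^ 2 := by
      rw [sq, ← Real.rpow_add hts0]; congr 1; ring
    have h5 := Real.abs_le_sqrt (h4 ▸ h3)
    rwa [Real.sqrt_sq (htsn _)] at h5
  have hcoef : ∀ c d : Fin D,
      t ^ (2 - 2 * p c) * |(lam c : ℝ)| * |(lam d : ℝ)|
        ≤ σ ^ (2 - 2 * p c) * tstar ^ (p d - p c) := by
    intro c d
    have htt : t ^ (2 - 2 * p c) = σ ^ (2 - 2 * p c) * tstar ^ (2 - 2 * p c) := by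
      rw [← Real.mul_rpow hσ0.le hts0.le]
      congr 1
      rw [hσdef]
      exact (div_mul_cancel₀ t hts0.ne').symm
    calc t ^ (2 - 2 * p c) * |(lam c : ℝ)| * |(lam d : ℝ)|
        ≤ t ^ (2 - 2 * p c) * tstar ^ (p c - 1) * tstar ^ (p d - 1) := by
          apply mul_le_mul (mul_le_mul_of_nonneg_left (hlamb c) (htn _)) (hlamb d)
            (abs_nonneg _) (mul_nonneg (htn _) (htsn _))
      _ = σ ^ (2 - 2 * p c) * tstar ^ ((2 - 2 * p c) + (p c - 1) + (p d - 1)) := by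
          rw [htt, Real.rpow_add hts0, Real.rpow_add hts0]; ring
      _ = σ ^ (2 - 2 * p c) * tstar ^ (p d - p c) := by
          congr 1; congr 1; ring
  -- log bound
  have htt1 : 1 ≤ tstar / t := (one_le_div ht0).mpr htle
  have hlog : Real.log (tstar / t) ≤ (2/δ) * σ ^ (-(δ/2)) := by
    have h1 := log_le_aux (ε := δ/2) (by positivity) htt1
    have h2 : (tstar / t) ^ (δ/2) = σ ^ (-(δ/2)) := by
      rw [Real.rpow_neg hσ0.le, ← Real.inv_rpow hσ0.le]
      congr 1
      rw [hσdef, inv_div]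
    rw [h2] at h1
    calc Real.log (tstar / t) ≤ (1/(δ/2)) * σ ^ (-(δ/2)) := h1
      _ = (2/δ) * σ ^ (-(δ/2)) := by rw [one_div_div]
  have hlog0 : 0 ≤ Real.log (tstar / t) := Real.log_nonneg htt1
  -- G bounds
  have hGnn : ∀ a b : Fin D, 0 ≤ Gfun p tstar a b t := fun a b => Gfun_nonneg p ht0 htle a b
  have hgab : ∀ a b : Fin D,
      tstar ^ (2 * (p b - p a)) * Gfun p tstar a b t
        ≤ (2/δ) * σ ^ (min (2 * (p a - p b)) 0 - δ/2) := by
    intro a b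
    have hG := Gfun_le p ht0 htle a b
    have hmax : tstar ^ (2 * (p b - p a)) * max (t ^ (2 * p a - 2 * p b)) (tstar ^ (2 * p a - 2 * p b))
        ≤ σ ^ (min (2 * (p a - p b)) 0) := by
      rcases le_or_gt 0 (2 * p a - 2 * p b) with h | h
      · have hm : max (t ^ (2 * p a - 2 * p b)) (tstar ^ (2 * p a - 2 * p b))
            = tstar ^ (2 * p a - 2 * p b) := max_eq_right (Real.rpow_le_rpow ht0.le htle h)
        rw [hm, ← Real.rpow_add hts0, min_eq_right (by linarith), Real.rpow_zero,
          show 2 * (p b - p a) + (2 * p a - 2 * p b) = 0 by ring, Real.rpow_zero]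
      · have hm : max (t ^ (2 * p a - 2 * p b)) (tstar ^ (2 * p a - 2 * p b))
            = t ^ (2 * p a - 2 * p b) :=
          max_eq_left (Real.rpow_le_rpow_of_nonpos ht0 htle h.le)
        have ht' : t ^ (2 * p a - 2 * p b) = σ ^ (2 * p a - 2 * p b) * tstar ^ (2 * p a - 2 * p b) := by
          rw [← Real.mul_rpow hσ0.le hts0.le]
          congr 1
          rw [hσdef]
          exact (div_mul_cancel₀ t hts0.ne').symm
        rw [hm, ht', min_eq_left (by linarith)]
        apply le_of_eq
        calc tstar ^ (2 * (p b - p a)) * (σ ^ (2 * p a - 2 * p b) * tstar ^ (2 * p a - 2 * p b))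
            = σ ^ (2 * p a - 2 * p b) * tstar ^ (2 * (p b - p a) + (2 * p a - 2 * p b)) := by
              rw [Real.rpow_add hts0]; ring
          _ = σ ^ (2 * (p a - p b)) := by
              rw [show 2 * (p b - p a) + (2 * p a - 2 * p b) = 0 by ring, Real.rpow_zero,
                mul_one]
              congr 1; ring
    calc tstar ^ (2 * (p b - p a)) * Gfun p tstar a b t
        ≤ tstar ^ (2 * (p b - p a))
            * (max (t ^ (2 * p a - 2 * p b)) (tstar ^ (2 * p a - 2 * p b)) * Real.log (tstar / t)) :=
          mul_le_mul_of_nonneg_left hG (htsn _)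
      _ = (tstar ^ (2 * (p b - p a)) * max (t ^ (2 * p a - 2 * p b)) (tstar ^ (2 * p a - 2 * p b)))
            * Real.log (tstar / t) := by ring
      _ ≤ σ ^ (min (2 * (p a - p b)) 0) * ((2/δ) * σ ^ (-(δ/2))) := by
          apply mul_le_mul hmax hlog hlog0 (hσn _)
      _ = (2/δ) * σ ^ (min (2 * (p a - p b)) 0 - δ/2) := by
          rw [show min (2 * (p a - p b)) 0 - δ/2 = min (2 * (p a - p b)) 0 + (-(δ/2)) by ring,
            Real.rpow_add hσ0]
          ring
  -- eta bound
  have hηb : ∀ a b : Fin D, |η t a b|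
      ≤ tstar ^ (p a - p b) * (C0 * σ ^ (min (2 * (p a - p b)) 0 - δ/2) * S) := by
    intro a b
    have hid : η t a b = UpsT p tstar η κ t a b - Gfun p tstar a b t * κ t b a := by
      unfold UpsT; ring
    have h5 : tstar ^ (p b - p a) * |η t a b| ≤ C0 * σ ^ (min (2 * (p a - p b)) 0 - δ/2) * S := by
      have htri : |η t a b| ≤ |UpsT p tstar η κ t a b| + Gfun p tstar a b t * |κ t b a| := by
        rw [hid]
        calc |UpsT p tstar η κ t a b - Gfun p tstar a b t * κ t b a|
            ≤ |UpsT p tstar η κ t a b| + |Gfun p tstar a b t * κ t b a| := abs_sub _ _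
          _ = |UpsT p tstar η κ t a b| + Gfun p tstar a b t * |κ t b a| := by
              rw [abs_mul, abs_of_nonneg (hGnn a b)]
      have hsplitw : tstar ^ (p b - p a) = tstar ^ (2 * (p b - p a)) * tstar ^ (p a - p b) := by
        rw [← Real.rpow_add hts0]; congr 1; ring
      calc tstar ^ (p b - p a) * |η t a b|
          ≤ tstar ^ (p b - p a) * (|UpsT p tstar η κ t a b| + Gfun p tstar a b t * |κ t b a|) :=
            mul_le_mul_of_nonneg_left htri (htsn _)
        _ = tstar ^ (p b - p a) * |UpsT p tstar η κ t a b|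
              + (tstar ^ (2 * (p b - p a)) * Gfun p tstar a b t) * (tstar ^ (p a - p b) * |κ t b a|) := by
            rw [hsplitw]; ring
        _ ≤ S + ((2/δ) * σ ^ (min (2 * (p a - p b)) 0 - δ/2)) * S := by
            apply add_le_add (hUab a b)
            apply mul_le_mul (hgab a b) (hKab b a)
              (mul_nonneg (htsn _) (abs_nonneg _))
              (by positivity)
        _ ≤ σ ^ (min (2 * (p a - p b)) 0 - δ/2) * S + ((2/δ) * σ ^ (min (2 * (p a - p b)) 0 - δ/2)) * S := by
            have h1 : 1 ≤ σ ^ (min (2 * (p a - p b)) 0 - δ/2) :=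
              hone _ (by
                have := min_le_right (2 * (p a - p b)) (0:ℝ)
                linarith)
            nlinarith
        _ = C0 * σ ^ (min (2 * (p a - p b)) 0 - δ/2) * S := by rw [hC0def]; ring
    have hcancelw : tstar ^ (p a - p b) * tstar ^ (p b - p a) = 1 := by
      rw [← Real.rpow_add hts0]; norm_num
    calc |η t a b| = tstar ^ (p a - p b) * (tstar ^ (p b - p a) * |η t a b|) := by
          rw [← mul_assoc, hcancelw, one_mul]
      _ ≤ tstar ^ (p a - p b) * (C0 * σ ^ (min (2 * (p a - p b)) 0 - δ/2) * S) :=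
          mul_le_mul_of_nonneg_left h5 (htsn _)
  -- the key term bound
  have key : ∀ i' j' c d a b : Fin D,
      (p j' - p i') + (p d - p c) + (p a - p b) = 0 →
      2 * max (p i' - p j') 0 + 2 * δ ≤ (2 - 2 * p c) + min (2 * (p a - p b)) 0 →
      tstar ^ (p j' - p i') * (t ^ (2 - 2 * p c) * |(lam c : ℝ)| * |(lam d : ℝ)| * |η t a b|)
        ≤ C0 * σ ^ (2 * max (p i' - p j') 0 + 3 * δ/2) * S := by
    intro i' j' c d a b hbal hexp
    calc tstar ^ (p j' - p i') * (t ^ (2 - 2 * p c) * |(lam c : ℝ)| * |(lam d : ℝ)| * |η t a b|)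
        ≤ tstar ^ (p j' - p i') * ((σ ^ (2 - 2 * p c) * tstar ^ (p d - p c))
            * (tstar ^ (p a - p b) * (C0 * σ ^ (min (2 * (p a - p b)) 0 - δ/2) * S))) := by
          apply mul_le_mul_of_nonneg_left _ (htsn _)
          exact mul_le_mul (hcoef c d) (hηb a b) (abs_nonneg _)
            (mul_nonneg (hσn _) (htsn _))
      _ = tstar ^ ((p j' - p i') + (p d - p c) + (p a - p b))
            * (C0 * (σ ^ (2 - 2 * p c) * σ ^ (min (2 * (p a - p b)) 0 - δ/2)) * S) := by
          rw [Real.rpow_add hts0, Real.rpow_add hts0]; ring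
      _ = C0 * σ ^ ((2 - 2 * p c) + (min (2 * (p a - p b)) 0 - δ/2)) * S := by
          rw [hbal, Real.rpow_zero, one_mul, Real.rpow_add hσ0]
      _ ≤ C0 * σ ^ (2 * max (p i' - p j') 0 + 3 * δ/2) * S := by
          apply mul_le_mul_of_nonneg_right
            (mul_le_mul_of_nonneg_left (hσpow _ _ (by linarith)) hC0.le) hS0
  have keyν : ∀ c d a b : Fin D,
      (p d - p c) + (p a - p b) = 0 →
      2 * δ ≤ (2 - 2 * p c) + min (2 * (p a - p b)) 0 →
      t ^ (2 - 2 * p c) * |(lam c : ℝ)| * |(lam d : ℝ)| * |η t a b|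
        ≤ C0 * σ ^ (3 * δ/2) * S := by
    intro c d a b hbal hexp
    calc t ^ (2 - 2 * p c) * |(lam c : ℝ)| * |(lam d : ℝ)| * |η t a b|
        ≤ (σ ^ (2 - 2 * p c) * tstar ^ (p d - p c))
            * (tstar ^ (p a - p b) * (C0 * σ ^ (min (2 * (p a - p b)) 0 - δ/2) * S)) :=
          mul_le_mul (hcoef c d) (hηb a b) (abs_nonneg _) (mul_nonneg (hσn _) (htsn _))
      _ = tstar ^ ((p d - p c) + (p a - p b))
            * (C0 * (σ ^ (2 - 2 * p c) * σ ^ (min (2 * (p a - p b)) 0 - δ/2)) * S) := by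
          rw [Real.rpow_add hts0]; ring
      _ = C0 * σ ^ ((2 - 2 * p c) + (min (2 * (p a - p b)) 0 - δ/2)) * S := by
          rw [hbal, Real.rpow_zero, one_mul, Real.rpow_add hσ0]
      _ ≤ C0 * σ ^ (3 * δ/2) * S := by
          apply mul_le_mul_of_nonneg_right
            (mul_le_mul_of_nonneg_left (hσpow _ _ (by linarith)) hC0.le) hS0
  -- nu bound
  have hτ2 : tau p lam t ^ 2 = ∑ c, t ^ (2 - 2 * p c) * ((lam c : ℝ)) ^ 2 :=
    Real.sq_sqrt (Finset.sum_nonneg fun c _ => mul_nonneg (htn _) (sq_nonneg _))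
  have habs3 : ∀ (e v w z : ℝ), |t ^ e * v * w * z| = t ^ e * |v| * |w| * |z| := by
    intro e v w z
    rw [abs_mul, abs_mul, abs_mul, abs_of_nonneg (htn e)]
  have hν : |ν t| ≤ Cν * σ ^ (3 * δ/2) * S := by
    have helli := hsol.nu_elliptic t htmem'
    have hτn : (0:ℝ) ≤ tau p lam t ^ 2 := sq_nonneg _
    have h1 : |ν t| ≤ |(1 + tau p lam t ^ 2) * ν t| := by
      rw [abs_mul, abs_of_nonneg (by linarith : (0:ℝ) ≤ 1 + tau p lam t ^ 2)]
      nlinarith [abs_nonneg (ν t)]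
    rw [helli] at h1
    have hS1 : ∀ c a : Fin D,
        t ^ (2 - 2 * p c) * ((lam c : ℝ)) ^ 2 * |η t a a| ≤ C0 * σ ^ (3 * δ/2) * S := by
      intro c a
      have he : t ^ (2 - 2 * p c) * ((lam c : ℝ)) ^ 2 * |η t a a|
          = t ^ (2 - 2 * p c) * |(lam c : ℝ)| * |(lam c : ℝ)| * |η t a a| := by
        rw [← sq_abs ((lam c : ℝ))]; ring
      rw [he]
      apply keyν c c a a (by ring)
      rw [show 2 * (p a - p a) = (0:ℝ) by ring, min_self]
      linarith [hF1 c]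
    have hS2 : ∀ a c : Fin D,
        t ^ (2 - 2 * p a) * |(lam a : ℝ)| * |(lam c : ℝ)| * |η t a c|
          ≤ C0 * σ ^ (3 * δ/2) * S := by
      intro a c
      apply keyν a c a c (by ring)
      rcases le_total (p a) (p c) with h | h
      · rw [min_eq_left (by linarith)]; linarith [hF1 c]
      · rw [min_eq_right (by linarith)]; linarith [hF1 a]
    have hA : |tau p lam t ^ 2 * (∑ a, η t a a)| ≤ (D:ℝ) * ((D:ℝ) * (C0 * σ ^ (3 * δ/2) * S)) := by
      rw [hτ2, Finset.sum_mul]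
      apply le_trans (Finset.abs_sum_le_sum_abs _ _)
      apply hsumb
      intro c
      rw [Finset.mul_sum]
      apply le_trans (Finset.abs_sum_le_sum_abs _ _)
      apply hsumb
      intro a
      have he2 : |t ^ (2 - 2 * p c) * ((lam c : ℝ)) ^ 2 * η t a a|
          = t ^ (2 - 2 * p c) * ((lam c : ℝ)) ^ 2 * |η t a a| := by
        rw [abs_mul, abs_of_nonneg (mul_nonneg (htn _) (sq_nonneg _))]
      rw [he2]
      exact hS1 c a
    have hB : |∑ a, ∑ c, t ^ (2 - 2 * p a) * (lam a : ℝ) * (lam c : ℝ) * η t a c|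
        ≤ (D:ℝ) * ((D:ℝ) * (C0 * σ ^ (3 * δ/2) * S)) := by
      apply le_trans (Finset.abs_sum_le_sum_abs _ _)
      apply hsumb
      intro a
      apply le_trans (Finset.abs_sum_le_sum_abs _ _)
      apply hsumb
      intro c
      rw [habs3]
      exact hS2 a c
    have h2 : |2 * tau p lam t ^ 2 * (∑ a, η t a a)
        - 2 * ∑ a, ∑ c, t ^ (2 - 2 * p a) * (lam a : ℝ) * (lam c : ℝ) * η t a c|
        ≤ 2 * ((D:ℝ) * ((D:ℝ) * (C0 * σ ^ (3 * δ/2) * S)))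
          + 2 * ((D:ℝ) * ((D:ℝ) * (C0 * σ ^ (3 * δ/2) * S))) := by
      apply le_trans (abs_sub _ _)
      have e1 : |2 * tau p lam t ^ 2 * (∑ a, η t a a)|
          = 2 * |tau p lam t ^ 2 * (∑ a, η t a a)| := by
        rw [mul_assoc, abs_mul, abs_two]
      have e2 : |2 * ∑ a, ∑ c, t ^ (2 - 2 * p a) * (lam a : ℝ) * (lam c : ℝ) * η t a c|
          = 2 * |∑ a, ∑ c, t ^ (2 - 2 * p a) * (lam a : ℝ) * (lam c : ℝ) * η t a c| := by
        rw [abs_mul, abs_two]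
      rw [e1, e2]
      linarith [hA, hB]
    have h3 : 2 * ((D:ℝ) * ((D:ℝ) * (C0 * σ ^ (3 * δ/2) * S)))
        + 2 * ((D:ℝ) * ((D:ℝ) * (C0 * σ ^ (3 * δ/2) * S))) = Cν * σ ^ (3 * δ/2) * S := by
      rw [hCνdef]; ring
    linarith [h1, h2]
  -- the kappa RHS numerator
  set W : Fin D → Fin D → ℝ := fun i' j' =>
    -(tau p lam t ^ 2) * η t i' j'
      - t ^ (2 - 2 * p j') * (lam i' : ℝ) * (lam j' : ℝ) * (∑ a, η t a a)
      + (∑ a, t ^ (2 - 2 * p a) * (lam i' : ℝ) * (lam a : ℝ) * η t a j')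
      + t ^ (2 - 2 * p j') * (lam j' : ℝ) * (∑ b, (lam b : ℝ) * η t i' b)
      + t ^ (2 - 2 * p j') * (lam i' : ℝ) * (lam j' : ℝ) * ν t
      + p i' * (if i' = j' then 1 else 0) * ν t with hWdef
  have hsplit : ∀ (f : Fin D → ℝ) (i0 : Fin D),
      (∑ a, f a) = f i0 + ∑ a, (if a = i0 then 0 else f a) := by
    intro f i0
    have hpt : ∀ a, f a = (if a = i0 then f i0 else 0) + (if a = i0 then 0 else f a) := by
      intro a; by_cases h : a = i0 <;> simp [h]
    calc (∑ a, f a)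
        = ∑ a, ((if a = i0 then f i0 else 0) + (if a = i0 then 0 else f a)) :=
          Finset.sum_congr rfl (fun a _ => hpt a)
      _ = (∑ a, if a = i0 then f i0 else 0) + ∑ a, (if a = i0 then 0 else f a) :=
          Finset.sum_add_distrib
      _ = f i0 + ∑ a, (if a = i0 then 0 else f a) := by
          rw [Finset.sum_ite_eq' Finset.univ i0 (fun _ => f i0)]
          simp
  have hRnn : ∀ x : ℝ, 0 ≤ C0 * σ ^ x * S :=
    fun x => mul_nonneg (mul_nonneg hC0.le (hσn _)) hS0
  have hW : ∀ i' j' : Fin D, tstar ^ (p j' - p i') * |W i' j'|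
      ≤ Cκ * σ ^ (2 * max (p i' - p j') 0 + 3 * δ/2) * S := by
    intro i' j'
    have hX : ∀ c : Fin D, tstar ^ (p j' - p i') *
        |(-(t ^ (2 - 2 * p c) * ((lam c : ℝ)) ^ 2 * η t i' j')
          + (if c = i' then t ^ (2 - 2 * p i') * ((lam i' : ℝ)) ^ 2 * η t i' j' else 0)
          + (if c = j' then t ^ (2 - 2 * p j') * ((lam j' : ℝ)) ^ 2 * η t i' j' else 0))|
        ≤ C0 * σ ^ (2 * max (p i' - p j') 0 + 3 * δ/2) * S := by
      intro c
      by_cases hci : c = i'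
      · by_cases hcj : c = j'
        · subst hci; subst hcj
          simp only [eq_self_iff_true, if_true]
          have hXv : -(t ^ (2 - 2 * p c) * ((lam c : ℝ)) ^ 2 * η t c c)
              + t ^ (2 - 2 * p c) * ((lam c : ℝ)) ^ 2 * η t c c
              + t ^ (2 - 2 * p c) * ((lam c : ℝ)) ^ 2 * η t c c
              = t ^ (2 - 2 * p c) * (lam c : ℝ) * (lam c : ℝ) * η t c c := by ring
          rw [hXv, habs3]
          apply key c c c c c c (by ring)
          rw [show 2 * (p c - p c) = (0:ℝ) by ring, min_self,
            show max (p c - p c) 0 = 0 by rw [sub_self, max_self]]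
          linarith [hF1 c]
        · subst hci
          simp only [eq_self_iff_true, if_true, if_neg hcj]
          have hXv : -(t ^ (2 - 2 * p c) * ((lam c : ℝ)) ^ 2 * η t c j')
              + t ^ (2 - 2 * p c) * ((lam c : ℝ)) ^ 2 * η t c j' + 0 = 0 := by ring
          rw [hXv, abs_zero, mul_zero]
          exact hRnn _
      · by_cases hcj : c = j'
        · subst hcj
          simp only [eq_self_iff_true, if_true, if_neg hci]
          have hXv : -(t ^ (2 - 2 * p c) * ((lam c : ℝ)) ^ 2 * η t i' c)
              + 0 + t ^ (2 - 2 * p c) * ((lam c : ℝ)) ^ 2 * η t i' c = 0 := by ring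
          rw [hXv, abs_zero, mul_zero]
          exact hRnn _
        · rw [if_neg hci, if_neg hcj]
          have hXv : -(t ^ (2 - 2 * p c) * ((lam c : ℝ)) ^ 2 * η t i' j') + 0 + 0
              = -(t ^ (2 - 2 * p c) * (lam c : ℝ) * (lam c : ℝ) * η t i' j') := by ring
          rw [hXv, abs_neg, habs3]
          apply key i' j' c c i' j' (by ring)
          rcases le_total (p i') (p j') with h | h
          · rw [max_eq_right (by linarith), min_eq_left (by linarith)]
            linarith [hsub i' j' c (Ne.symm hcj)]
          · rw [max_eq_left (by linarith), min_eq_right (by linarith)]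
            linarith [hsub j' i' c (Ne.symm hci)]
    have hT3 : ∀ a : Fin D, tstar ^ (p j' - p i') *
        |(if a = i' then 0 else t ^ (2 - 2 * p a) * (lam i' : ℝ) * (lam a : ℝ) * η t a j')|
        ≤ C0 * σ ^ (2 * max (p i' - p j') 0 + 3 * δ/2) * S := by
      intro a
      by_cases h : a = i'
      · rw [if_pos h, abs_zero, mul_zero]; exact hRnn _
      · rw [if_neg h, show t ^ (2 - 2 * p a) * (lam i' : ℝ) * (lam a : ℝ) * η t a j'
            = t ^ (2 - 2 * p a) * (lam a : ℝ) * (lam i' : ℝ) * η t a j' by ring, habs3]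
        apply key i' j' a i' a j' (by ring)
        rcases le_total (p i') (p j') with hm | hm <;> rcases le_total (p a) (p j') with h1 | h1
        · rw [max_eq_right (by linarith), min_eq_left (by linarith)]; linarith [hF1 j']
        · rw [max_eq_right (by linarith), min_eq_right (by linarith)]; linarith [hF1 a]
        · rw [max_eq_left (by linarith), min_eq_left (by linarith)]; linarith [hF1 i']
        · rw [max_eq_left (by linarith), min_eq_right (by linarith)]
          linarith [hsub j' i' a (Ne.symm h)]
    have hT4 : ∀ b : Fin D, tstar ^ (p j' - p i') *
        |(if b = j' then 0 else t ^ (2 - 2 * p j') * (lam j' : ℝ) * (lam b : ℝ) * η t i' b)|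
        ≤ C0 * σ ^ (2 * max (p i' - p j') 0 + 3 * δ/2) * S := by
      intro b
      by_cases h : b = j'
      · rw [if_pos h, abs_zero, mul_zero]; exact hRnn _
      · rw [if_neg h, habs3]
        apply key i' j' j' b i' b (by ring)
        rcases le_total (p i') (p j') with hm | hm <;> rcases le_total (p i') (p b) with h1 | h1
        · rw [max_eq_right (by linarith), min_eq_left (by linarith)]
          linarith [hsub i' j' b (Ne.symm h)]
        · rw [max_eq_right (by linarith), min_eq_right (by linarith)]; linarith [hF1 j']
        · rw [max_eq_left (by linarith), min_eq_left (by linarith)]; linarith [hF1 b]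
        · rw [max_eq_left (by linarith), min_eq_right (by linarith)]; linarith [hF1 i']
    have hT2 : ∀ a : Fin D, tstar ^ (p j' - p i') *
        |t ^ (2 - 2 * p j') * (lam i' : ℝ) * (lam j' : ℝ) * η t a a|
        ≤ C0 * σ ^ (2 * max (p i' - p j') 0 + 3 * δ/2) * S := by
      intro a
      rw [show t ^ (2 - 2 * p j') * (lam i' : ℝ) * (lam j' : ℝ) * η t a a
          = t ^ (2 - 2 * p j') * (lam j' : ℝ) * (lam i' : ℝ) * η t a a by ring, habs3]
      apply key i' j' j' i' a a (by ring)
      rw [show 2 * (p a - p a) = (0:ℝ) by ring, min_self]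
      rcases le_total (p i') (p j') with hm | hm
      · rw [max_eq_right (by linarith)]; linarith [hF1 j']
      · rw [max_eq_left (by linarith)]; linarith [hF1 i']
    have hexp5 : 2 * max (p i' - p j') 0 + 3 * δ/2 ≤ (2 - 2 * p j') + 3 * δ/2 := by
      rcases le_total (p i') (p j') with hm | hm
      · rw [max_eq_right (by linarith)]; linarith [hF1 j']
      · rw [max_eq_left (by linarith)]; linarith [hp i']
    have hV1 : tstar ^ (p j' - p i') * |t ^ (2 - 2 * p j') * (lam i' : ℝ) * (lam j' : ℝ) * ν t|
        ≤ Cν * σ ^ (2 * max (p i' - p j') 0 + 3 * δ/2) * S := by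
      rw [show t ^ (2 - 2 * p j') * (lam i' : ℝ) * (lam j' : ℝ) * ν t
          = t ^ (2 - 2 * p j') * (lam j' : ℝ) * (lam i' : ℝ) * ν t by ring, habs3]
      calc tstar ^ (p j' - p i') * (t ^ (2 - 2 * p j') * |(lam j' : ℝ)| * |(lam i' : ℝ)| * |ν t|)
          ≤ tstar ^ (p j' - p i')
              * ((σ ^ (2 - 2 * p j') * tstar ^ (p i' - p j')) * (Cν * σ ^ (3 * δ/2) * S)) := by
            apply mul_le_mul_of_nonneg_left _ (htsn _)
            exact mul_le_mul (hcoef j' i') hν (abs_nonneg _) (mul_nonneg (hσn _) (htsn _))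
        _ = tstar ^ ((p j' - p i') + (p i' - p j'))
              * (Cν * (σ ^ (2 - 2 * p j') * σ ^ (3 * δ/2)) * S) := by
            rw [Real.rpow_add hts0]; ring
        _ = Cν * σ ^ ((2 - 2 * p j') + 3 * δ/2) * S := by
            rw [show (p j' - p i') + (p i' - p j') = (0:ℝ) by ring, Real.rpow_zero, one_mul,
              Real.rpow_add hσ0]
        _ ≤ Cν * σ ^ (2 * max (p i' - p j') 0 + 3 * δ/2) * S :=
            mul_le_mul_of_nonneg_right
              (mul_le_mul_of_nonneg_left (hσpow _ _ hexp5) hCν.le) hS0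
    have hV2 : tstar ^ (p j' - p i') * |p i' * (if i' = j' then 1 else 0) * ν t|
        ≤ Cν * σ ^ (2 * max (p i' - p j') 0 + 3 * δ/2) * S := by
      by_cases h : i' = j'
      · subst h
        have hw0 : tstar ^ (p i' - p i') = 1 := by rw [sub_self, Real.rpow_zero]
        have hm0 : 2 * max (p i' - p i') 0 + 3 * δ/2 = 3 * δ/2 := by
          rw [sub_self, max_self]; ring
        rw [if_pos rfl, hw0, hm0, one_mul]
        calc |p i' * 1 * ν t| = |p i'| * |ν t| := by rw [mul_one, abs_mul]
          _ ≤ 1 * (Cν * σ ^ (3 * δ/2) * S) :=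
              mul_le_mul (hpabs i') hν (abs_nonneg _) zero_le_one
          _ = Cν * σ ^ (3 * δ/2) * S := one_mul _
      · rw [if_neg h, mul_zero, zero_mul, abs_zero, mul_zero]
        exact mul_nonneg (mul_nonneg hCν.le (hσn _)) hS0
    -- decomposition identity
    have hWval : W i' j' =
        -(tau p lam t ^ 2) * η t i' j'
          - t ^ (2 - 2 * p j') * (lam i' : ℝ) * (lam j' : ℝ) * (∑ a, η t a a)
          + (∑ a, t ^ (2 - 2 * p a) * (lam i' : ℝ) * (lam a : ℝ) * η t a j')
          + t ^ (2 - 2 * p j') * (lam j' : ℝ) * (∑ b, (lam b : ℝ) * η t i' b)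
          + t ^ (2 - 2 * p j') * (lam i' : ℝ) * (lam j' : ℝ) * ν t
          + p i' * (if i' = j' then 1 else 0) * ν t := rfl
    have h3 : (∑ a, t ^ (2 - 2 * p a) * (lam i' : ℝ) * (lam a : ℝ) * η t a j')
        = t ^ (2 - 2 * p i') * (lam i' : ℝ) * (lam i' : ℝ) * η t i' j'
          + ∑ a, (if a = i' then 0 else t ^ (2 - 2 * p a) * (lam i' : ℝ) * (lam a : ℝ) * η t a j') :=
      hsplit _ i'
    have h4 : (∑ b, (lam b : ℝ) * η t i' b)
        = (lam j' : ℝ) * η t i' j' + ∑ b, (if b = j' then 0 else (lam b : ℝ) * η t i' b) :=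
      hsplit _ j'
    have h5 : t ^ (2 - 2 * p j') * (lam j' : ℝ) * (∑ b, (if b = j' then 0 else (lam b : ℝ) * η t i' b))
        = ∑ b, (if b = j' then 0 else t ^ (2 - 2 * p j') * (lam j' : ℝ) * (lam b : ℝ) * η t i' b) := by
      rw [Finset.mul_sum]
      apply Finset.sum_congr rfl
      intro b _
      by_cases h : b = j'
      · simp [h]
      · simp only [if_neg h]; ring
    have h6 : -(∑ c, t ^ (2 - 2 * p c) * ((lam c : ℝ)) ^ 2) * η t i' j'
        = -(∑ c, t ^ (2 - 2 * p c) * ((lam c : ℝ)) ^ 2 * η t i' j') := by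
      rw [neg_mul, Finset.sum_mul]
    have h7 : t ^ (2 - 2 * p j') * (lam i' : ℝ) * (lam j' : ℝ) * (∑ a, η t a a)
        = ∑ a, t ^ (2 - 2 * p j') * (lam i' : ℝ) * (lam j' : ℝ) * η t a a :=
      Finset.mul_sum _ _ _
    have h8 : (∑ c, (-(t ^ (2 - 2 * p c) * ((lam c : ℝ)) ^ 2 * η t i' j')
        + (if c = i' then t ^ (2 - 2 * p i') * ((lam i' : ℝ)) ^ 2 * η t i' j' else 0)
        + (if c = j' then t ^ (2 - 2 * p j') * ((lam j' : ℝ)) ^ 2 * η t i' j' else 0)))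
        = -(∑ c, t ^ (2 - 2 * p c) * ((lam c : ℝ)) ^ 2 * η t i' j')
          + t ^ (2 - 2 * p i') * ((lam i' : ℝ)) ^ 2 * η t i' j'
          + t ^ (2 - 2 * p j') * ((lam j' : ℝ)) ^ 2 * η t i' j' := by
      rw [Finset.sum_add_distrib, Finset.sum_add_distrib,
        Finset.sum_ite_eq' Finset.univ i'
          (fun _ => t ^ (2 - 2 * p i') * ((lam i' : ℝ)) ^ 2 * η t i' j'),
        Finset.sum_ite_eq' Finset.univ j'
          (fun _ => t ^ (2 - 2 * p j') * ((lam j' : ℝ)) ^ 2 * η t i' j')]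
      simp [Finset.sum_neg_distrib]
    have hdec : W i' j' =
        (∑ c, (-(t ^ (2 - 2 * p c) * ((lam c : ℝ)) ^ 2 * η t i' j')
          + (if c = i' then t ^ (2 - 2 * p i') * ((lam i' : ℝ)) ^ 2 * η t i' j' else 0)
          + (if c = j' then t ^ (2 - 2 * p j') * ((lam j' : ℝ)) ^ 2 * η t i' j' else 0)))
        + (∑ a, (if a = i' then 0 else t ^ (2 - 2 * p a) * (lam i' : ℝ) * (lam a : ℝ) * η t a j'))
        + (∑ b, (if b = j' then 0 else t ^ (2 - 2 * p j') * (lam j' : ℝ) * (lam b : ℝ) * η t i' b))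
        - (∑ a, t ^ (2 - 2 * p j') * (lam i' : ℝ) * (lam j' : ℝ) * η t a a)
        + t ^ (2 - 2 * p j') * (lam i' : ℝ) * (lam j' : ℝ) * ν t
        + p i' * (if i' = j' then 1 else 0) * ν t := by
      rw [hWval, h3, h4, h8]
      linear_combination (-(η t i' j')) * hτ2 + h6 + h5 - h7
    have habs6' : |W i' j'| ≤
        (∑ c, |(-(t ^ (2 - 2 * p c) * ((lam c : ℝ)) ^ 2 * η t i' j')
          + (if c = i' then t ^ (2 - 2 * p i') * ((lam i' : ℝ)) ^ 2 * η t i' j' else 0)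
          + (if c = j' then t ^ (2 - 2 * p j') * ((lam j' : ℝ)) ^ 2 * η t i' j' else 0))|)
        + (∑ a, |(if a = i' then 0 else t ^ (2 - 2 * p a) * (lam i' : ℝ) * (lam a : ℝ) * η t a j')|)
        + (∑ b, |(if b = j' then 0 else t ^ (2 - 2 * p j') * (lam j' : ℝ) * (lam b : ℝ) * η t i' b)|)
        + (∑ a, |t ^ (2 - 2 * p j') * (lam i' : ℝ) * (lam j' : ℝ) * η t a a|)
        + |t ^ (2 - 2 * p j') * (lam i' : ℝ) * (lam j' : ℝ) * ν t|
        + |p i' * (if i' = j' then 1 else 0) * ν t| := by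
      rw [hdec]
      apply le_trans (abs6 _ _ _ _ _ _)
      have g1 := Finset.abs_sum_le_sum_abs
        (fun c => (-(t ^ (2 - 2 * p c) * ((lam c : ℝ)) ^ 2 * η t i' j')
          + (if c = i' then t ^ (2 - 2 * p i') * ((lam i' : ℝ)) ^ 2 * η t i' j' else 0)
          + (if c = j' then t ^ (2 - 2 * p j') * ((lam j' : ℝ)) ^ 2 * η t i' j' else 0))) Finset.univ
      have g2 := Finset.abs_sum_le_sum_abs
        (fun a => (if a = i' then 0 else t ^ (2 - 2 * p a) * (lam i' : ℝ) * (lam a : ℝ) * η t a j')) Finset.univ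
      have g3 := Finset.abs_sum_le_sum_abs
        (fun b => (if b = j' then 0 else t ^ (2 - 2 * p j') * (lam j' : ℝ) * (lam b : ℝ) * η t i' b)) Finset.univ
      have g4 := Finset.abs_sum_le_sum_abs
        (fun a => t ^ (2 - 2 * p j') * (lam i' : ℝ) * (lam j' : ℝ) * η t a a) Finset.univ
      linarith
    calc tstar ^ (p j' - p i') * |W i' j'|
        ≤ tstar ^ (p j' - p i') * ((∑ c, |(-(t ^ (2 - 2 * p c) * ((lam c : ℝ)) ^ 2 * η t i' j')
            + (if c = i' then t ^ (2 - 2 * p i') * ((lam i' : ℝ)) ^ 2 * η t i' j' else 0)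
            + (if c = j' then t ^ (2 - 2 * p j') * ((lam j' : ℝ)) ^ 2 * η t i' j' else 0))|)
          + (∑ a, |(if a = i' then 0 else t ^ (2 - 2 * p a) * (lam i' : ℝ) * (lam a : ℝ) * η t a j')|)
          + (∑ b, |(if b = j' then 0 else t ^ (2 - 2 * p j') * (lam j' : ℝ) * (lam b : ℝ) * η t i' b)|)
          + (∑ a, |t ^ (2 - 2 * p j') * (lam i' : ℝ) * (lam j' : ℝ) * η t a a|)
          + |t ^ (2 - 2 * p j') * (lam i' : ℝ) * (lam j' : ℝ) * ν t|
          + |p i' * (if i' = j' then 1 else 0) * ν t|) :=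
          mul_le_mul_of_nonneg_left habs6' (htsn _)
      _ = (∑ c, tstar ^ (p j' - p i') * |(-(t ^ (2 - 2 * p c) * ((lam c : ℝ)) ^ 2 * η t i' j')
            + (if c = i' then t ^ (2 - 2 * p i') * ((lam i' : ℝ)) ^ 2 * η t i' j' else 0)
            + (if c = j' then t ^ (2 - 2 * p j') * ((lam j' : ℝ)) ^ 2 * η t i' j' else 0))|)
          + (∑ a, tstar ^ (p j' - p i') * |(if a = i' then 0 else t ^ (2 - 2 * p a) * (lam i' : ℝ) * (lam a : ℝ) * η t a j')|)
          + (∑ b, tstar ^ (p j' - p i') * |(if b = j' then 0 else t ^ (2 - 2 * p j') * (lam j' : ℝ) * (lam b : ℝ) * η t i' b)|)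
          + (∑ a, tstar ^ (p j' - p i') * |t ^ (2 - 2 * p j') * (lam i' : ℝ) * (lam j' : ℝ) * η t a a|)
          + tstar ^ (p j' - p i') * |t ^ (2 - 2 * p j') * (lam i' : ℝ) * (lam j' : ℝ) * ν t|
          + tstar ^ (p j' - p i') * |p i' * (if i' = j' then 1 else 0) * ν t| := by
          rw [← Finset.mul_sum, ← Finset.mul_sum, ← Finset.mul_sum, ← Finset.mul_sum]
          ring
      _ ≤ (D:ℝ) * (C0 * σ ^ (2 * max (p i' - p j') 0 + 3 * δ/2) * S)
          + (D:ℝ) * (C0 * σ ^ (2 * max (p i' - p j') 0 + 3 * δ/2) * S)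
          + (D:ℝ) * (C0 * σ ^ (2 * max (p i' - p j') 0 + 3 * δ/2) * S)
          + (D:ℝ) * (C0 * σ ^ (2 * max (p i' - p j') 0 + 3 * δ/2) * S)
          + Cν * σ ^ (2 * max (p i' - p j') 0 + 3 * δ/2) * S
          + Cν * σ ^ (2 * max (p i' - p j') 0 + 3 * δ/2) * S := by
          apply add_le_add
          apply add_le_add
          apply add_le_add
          apply add_le_add
          apply add_le_add
          · exact hsumb _ _ hX
          · exact hsumb _ _ hT3
          · exact hsumb _ _ hT4
          · exact hsumb _ _ hT2
          · exact hV1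
          · exact hV2
      _ ≤ Cκ * σ ^ (2 * max (p i' - p j') 0 + 3 * δ/2) * S := by
          have hy : 0 ≤ σ ^ (2 * max (p i' - p j') 0 + 3 * δ/2) * S := mul_nonneg (hσn _) hS0
          calc (D:ℝ) * (C0 * σ ^ (2 * max (p i' - p j') 0 + 3 * δ/2) * S)
              + (D:ℝ) * (C0 * σ ^ (2 * max (p i' - p j') 0 + 3 * δ/2) * S)
              + (D:ℝ) * (C0 * σ ^ (2 * max (p i' - p j') 0 + 3 * δ/2) * S)
              + (D:ℝ) * (C0 * σ ^ (2 * max (p i' - p j') 0 + 3 * δ/2) * S)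
              + Cν * σ ^ (2 * max (p i' - p j') 0 + 3 * δ/2) * S
              + Cν * σ ^ (2 * max (p i' - p j') 0 + 3 * δ/2) * S
              = ((4 * (D:ℝ) + 8 * (D:ℝ)^2) * C0) * (σ ^ (2 * max (p i' - p j') 0 + 3 * δ/2) * S) := by
                rw [hCνdef]; ring
            _ ≤ ((12 * (D:ℝ)^2) * C0) * (σ ^ (2 * max (p i' - p j') 0 + 3 * δ/2) * S) :=
                mul_le_mul_of_nonneg_right (mul_le_mul_of_nonneg_right hDD hC0.le) hy
            _ = Cκ * σ ^ (2 * max (p i' - p j') 0 + 3 * δ/2) * S := by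
                rw [hCκdef]; ring
  -- symmetry cancellation
  have e0 : ∀ A B : ℝ, t ^ (-(2 * p i)) * A = t ^ (-(2 * p j)) * B →
      A = t ^ (2 * p i - 2 * p j) * B := by
    intro A B h
    have h' := congrArg (HMul.hMul (t ^ (2 * p i))) h
    rwa [← mul_assoc, ← mul_assoc, ← Real.rpow_add ht0, ← Real.rpow_add ht0,
      show 2 * p i + -(2 * p i) = (0:ℝ) by ring, Real.rpow_zero, one_mul,
      show 2 * p i + -(2 * p j) = 2 * p i - 2 * p j by ring] at h'
  have h1sym : κ t i j + 2 * p i * η t i j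
      = t ^ (2 * p i - 2 * p j) * (κ t j i + 2 * p j * η t j i) :=
    e0 _ _ (hsol.sym_kappa t htmem' i j)
  have h2sym : η t i j = t ^ (2 * p i - 2 * p j) * η t j i :=
    e0 _ _ (hsol.sym_eta t htmem' i j)
  have hcancel : κ t i j + 2 * (p i - p j) * η t i j - t ^ (2 * p i - 2 * p j) * κ t j i = 0 := by
    linear_combination h1sym - 2 * p j * h2sym
  -- the derivatives
  refine ⟨W i j / t,
    (κ t i j + 2 * (p i - p j) * η t i j - p i * (if i = j then 1 else 0) * ν t) / t
      + ((-(t ^ (2 * p i - 2 * p j - 1))) * κ t j i + Gfun p tstar i j t * (W j i / t)),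
    (-(tau p lam t ^ 2) * φ t - pphi * ν t) / t,
    (ψ t + pphi * ν t) / t
      + (-t⁻¹ * ψ t + Real.log (tstar / t) * ((-(tau p lam t ^ 2) * φ t - pphi * ν t) / t)),
    ?_, ?_, ?_, ?_, ?_⟩
  · exact hsol.kappa_evol t htmem' i j
  · exact (hsol.eta_evol t htmem' i j).add
      ((Gfun_hasDerivAt p ht0 hts0 i j).mul (hsol.kappa_evol t htmem' j i))
  · exact hsol.psi_evol t htmem'
  · have hlogd : HasDerivAt (fun s : ℝ => Real.log (tstar / s)) (-t⁻¹) t := by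
      have h1 : HasDerivAt (fun s : ℝ => Real.log tstar - Real.log s) (0 - t⁻¹) t :=
        (hasDerivAt_const t (Real.log tstar)).sub (Real.hasDerivAt_log ht0.ne')
      have h2 : (fun s : ℝ => Real.log (tstar / s)) =ᶠ[𝓝 t]
          (fun s : ℝ => Real.log tstar - Real.log s) := by
        filter_upwards [lt_mem_nhds ht0] with s hs
        rw [Real.log_div hts0.ne' (ne_of_gt hs)]
      have h3 := h1.congr_of_eventuallyEq h2
      simpa using h3
    exact (hsol.phi_evol t htmem').add (hlogd.mul (hsol.psi_evol t htmem'))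
  -- the estimate
  have hq1 : t * (W i j / t) = W i j := by field_simp
  have hrp : t ^ (2 * p i - 2 * p j - 1) * t = t ^ (2 * p i - 2 * p j) := by
    rw [← Real.rpow_add_one ht0.ne' (2 * p i - 2 * p j - 1)]
    congr 1; ring
  have htdU : t * ((κ t i j + 2 * (p i - p j) * η t i j - p i * (if i = j then 1 else 0) * ν t) / t
      + ((-(t ^ (2 * p i - 2 * p j - 1))) * κ t j i + Gfun p tstar i j t * (W j i / t)))
      = -(p i * (if i = j then 1 else 0) * ν t) + Gfun p tstar i j t * W j i := by
    have e1 : t * ((κ t i j + 2 * (p i - p j) * η t i j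
        - p i * (if i = j then 1 else 0) * ν t) / t)
        = κ t i j + 2 * (p i - p j) * η t i j - p i * (if i = j then 1 else 0) * ν t := by
      field_simp
    have e2 : t * (Gfun p tstar i j t * (W j i / t)) = Gfun p tstar i j t * W j i := by
      field_simp
    have e3 : t * ((-(t ^ (2 * p i - 2 * p j - 1))) * κ t j i)
        = -(t ^ (2 * p i - 2 * p j) * κ t j i) := by
      rw [← hrp]; ring
    calc t * ((κ t i j + 2 * (p i - p j) * η t i j - p i * (if i = j then 1 else 0) * ν t) / t
        + ((-(t ^ (2 * p i - 2 * p j - 1))) * κ t j i + Gfun p tstar i j t * (W j i / t)))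
        = t * ((κ t i j + 2 * (p i - p j) * η t i j
            - p i * (if i = j then 1 else 0) * ν t) / t)
          + t * ((-(t ^ (2 * p i - 2 * p j - 1))) * κ t j i)
          + t * (Gfun p tstar i j t * (W j i / t)) := by ring
      _ = (κ t i j + 2 * (p i - p j) * η t i j - p i * (if i = j then 1 else 0) * ν t)
          + -(t ^ (2 * p i - 2 * p j) * κ t j i) + Gfun p tstar i j t * W j i := by
          rw [e1, e2, e3]
      _ = -(p i * (if i = j then 1 else 0) * ν t) + Gfun p tstar i j t * W j i := by
          linear_combination hcancel
  have hq3 : t * ((-(tau p lam t ^ 2) * φ t - pphi * ν t) / t)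
      = -(tau p lam t ^ 2) * φ t - pphi * ν t := by field_simp
  have htdph : t * ((ψ t + pphi * ν t) / t
      + (-t⁻¹ * ψ t + Real.log (tstar / t) * ((-(tau p lam t ^ 2) * φ t - pphi * ν t) / t)))
      = pphi * ν t + Real.log (tstar / t) * (-(tau p lam t ^ 2) * φ t - pphi * ν t) := by
    field_simp; ring
  -- part 1
  have part1 : tstar ^ (p j - p i) * |W i j| ≤ Cκ * σ ^ δ * S := by
    calc tstar ^ (p j - p i) * |W i j|
        ≤ Cκ * σ ^ (2 * max (p i - p j) 0 + 3 * δ/2) * S := hW i j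
      _ ≤ Cκ * σ ^ δ * S := by
          apply mul_le_mul_of_nonneg_right (mul_le_mul_of_nonneg_left
            (hσpow _ _ (by
              have := le_max_right (p i - p j) (0:ℝ)
              linarith)) hCκ.le) hS0
  -- part 2
  have hpart2a : tstar ^ (p j - p i) * |p i * (if i = j then 1 else 0) * ν t|
      ≤ Cν * σ ^ δ * S := by
    by_cases h : i = j
    · subst h
      rw [if_pos rfl, sub_self, Real.rpow_zero, one_mul]
      calc |p i * 1 * ν t| = |p i| * |ν t| := by rw [mul_one, abs_mul]
        _ ≤ 1 * (Cν * σ ^ (3 * δ/2) * S) :=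
            mul_le_mul (hpabs i) hν (abs_nonneg _) zero_le_one
        _ = Cν * σ ^ (3 * δ/2) * S := one_mul _
        _ ≤ Cν * σ ^ δ * S :=
            mul_le_mul_of_nonneg_right (mul_le_mul_of_nonneg_left
              (hσpow _ _ (by linarith)) hCν.le) hS0
    · rw [if_neg h, mul_zero, zero_mul, abs_zero, mul_zero]
      exact mul_nonneg (mul_nonneg hCν.le (hσn _)) hS0
  have hpart2b : tstar ^ (p j - p i) * (Gfun p tstar i j t * |W j i|)
      ≤ (2/δ) * Cκ * σ ^ δ * S := by
    have hsplitw : tstar ^ (p j - p i) = tstar ^ (2 * (p j - p i)) * tstar ^ (p i - p j) := by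
      rw [← Real.rpow_add hts0]; congr 1; ring
    have hmm : min (2 * (p i - p j)) 0 - δ/2 + (2 * max (p j - p i) 0 + 3 * δ/2) = δ := by
      rcases le_total (p i) (p j) with h | h
      · rw [min_eq_left (by linarith), max_eq_left (by linarith)]; ring
      · rw [min_eq_right (by linarith), max_eq_right (by linarith)]; ring
    calc tstar ^ (p j - p i) * (Gfun p tstar i j t * |W j i|)
        = (tstar ^ (2 * (p j - p i)) * Gfun p tstar i j t) * (tstar ^ (p i - p j) * |W j i|) := by
          rw [hsplitw]; ring
      _ ≤ ((2/δ) * σ ^ (min (2 * (p i - p j)) 0 - δ/2))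
            * (Cκ * σ ^ (2 * max (p j - p i) 0 + 3 * δ/2) * S) :=
          mul_le_mul (hgab i j) (hW j i) (mul_nonneg (htsn _) (abs_nonneg _))
            (mul_nonneg (by positivity) (hσn _))
      _ = (2/δ) * Cκ * (σ ^ (min (2 * (p i - p j)) 0 - δ/2)
            * σ ^ (2 * max (p j - p i) 0 + 3 * δ/2)) * S := by ring
      _ = (2/δ) * Cκ * σ ^ δ * S := by rw [← Real.rpow_add hσ0, hmm]
  have part2 : tstar ^ (p j - p i)
      * |(-(p i * (if i = j then 1 else 0) * ν t) + Gfun p tstar i j t * W j i)|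
      ≤ (Cν + (2/δ) * Cκ) * σ ^ δ * S := by
    have htri : |(-(p i * (if i = j then 1 else 0) * ν t) + Gfun p tstar i j t * W j i)|
        ≤ |p i * (if i = j then 1 else 0) * ν t| + Gfun p tstar i j t * |W j i| := by
      calc |(-(p i * (if i = j then 1 else 0) * ν t) + Gfun p tstar i j t * W j i)|
          ≤ |(-(p i * (if i = j then 1 else 0) * ν t))| + |Gfun p tstar i j t * W j i| :=
            abs_add_le _ _
        _ = |p i * (if i = j then 1 else 0) * ν t| + Gfun p tstar i j t * |W j i| := by
            rw [abs_neg, abs_mul (Gfun p tstar i j t) (W j i), abs_of_nonneg (hGnn i j)]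
    calc tstar ^ (p j - p i)
        * |(-(p i * (if i = j then 1 else 0) * ν t) + Gfun p tstar i j t * W j i)|
        ≤ tstar ^ (p j - p i)
          * (|p i * (if i = j then 1 else 0) * ν t| + Gfun p tstar i j t * |W j i|) :=
          mul_le_mul_of_nonneg_left htri (htsn _)
      _ = tstar ^ (p j - p i) * |p i * (if i = j then 1 else 0) * ν t|
          + tstar ^ (p j - p i) * (Gfun p tstar i j t * |W j i|) := by ring
      _ ≤ Cν * σ ^ δ * S + (2/δ) * Cκ * σ ^ δ * S := add_le_add hpart2a hpart2b
      _ = (Cν + (2/δ) * Cκ) * σ ^ δ * S := by ring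
  -- part 3
  have hφb : |φ t| ≤ C0 * σ ^ (-(δ/2)) * S := by
    have hid : φ t = phiT φ ψ tstar t - Real.log (tstar / t) * ψ t := by
      unfold phiT; ring
    have h1 : |φ t| ≤ |phiT φ ψ tstar t| + |Real.log (tstar / t) * ψ t| := by
      rw [hid]; exact abs_sub _ _
    rw [abs_mul, abs_of_nonneg hlog0] at h1
    have h2 : Real.log (tstar / t) * |ψ t| ≤ ((2/δ) * σ ^ (-(δ/2))) * S :=
      mul_le_mul hlog hpsiS (abs_nonneg _) (by positivity)
    have h3 : |phiT φ ψ tstar t| ≤ σ ^ (-(δ/2)) * S := by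
      have h4 : (1:ℝ) ≤ σ ^ (-(δ/2)) := hone _ (by linarith)
      calc |phiT φ ψ tstar t| ≤ S := hphiTS
        _ = 1 * S := (one_mul S).symm
        _ ≤ σ ^ (-(δ/2)) * S := mul_le_mul_of_nonneg_right h4 hS0
    calc |φ t| ≤ σ ^ (-(δ/2)) * S + ((2/δ) * σ ^ (-(δ/2))) * S := by linarith
      _ = C0 * σ ^ (-(δ/2)) * S := by rw [hC0def]; ring
  have hτ2b : tau p lam t ^ 2 ≤ (D:ℝ) * σ ^ (2 * δ) := by
    rw [hτ2]
    apply hsumb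
    intro c
    have h1 : t ^ (2 - 2 * p c) * ((lam c : ℝ)) ^ 2
        = t ^ (2 - 2 * p c) * |(lam c : ℝ)| * |(lam c : ℝ)| := by
      rw [← sq_abs ((lam c : ℝ))]; ring
    rw [h1]
    calc t ^ (2 - 2 * p c) * |(lam c : ℝ)| * |(lam c : ℝ)|
        ≤ σ ^ (2 - 2 * p c) * tstar ^ (p c - p c) := hcoef c c
      _ = σ ^ (2 - 2 * p c) := by rw [sub_self, Real.rpow_zero, mul_one]
      _ ≤ σ ^ (2 * δ) := hσpow _ _ (by linarith [hF1 c])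
  have hpsirhs : |(-(tau p lam t ^ 2) * φ t - pphi * ν t)|
      ≤ ((D:ℝ) * C0 + Cν) * σ ^ (3 * δ/2) * S := by
    have h1 : |(-(tau p lam t ^ 2) * φ t - pphi * ν t)|
        ≤ tau p lam t ^ 2 * |φ t| + |pphi| * |ν t| := by
      have h1a : |(-(tau p lam t ^ 2) * φ t - pphi * ν t)|
          ≤ |(-(tau p lam t ^ 2)) * φ t| + |pphi * ν t| := abs_sub _ _
      have h1b : |(-(tau p lam t ^ 2)) * φ t| = tau p lam t ^ 2 * |φ t| := by
        rw [abs_mul, abs_neg, abs_of_nonneg (sq_nonneg (tau p lam t))]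
      have h1c : |pphi * ν t| = |pphi| * |ν t| := abs_mul _ _
      rw [h1b, h1c] at h1a
      exact h1a
    have h2 : tau p lam t ^ 2 * |φ t| ≤ ((D:ℝ) * σ ^ (2 * δ)) * (C0 * σ ^ (-(δ/2)) * S) :=
      mul_le_mul hτ2b hφb (abs_nonneg _) (mul_nonneg hD0.le (hσn _))
    have h3 : |pphi| * |ν t| ≤ 1 * (Cν * σ ^ (3 * δ/2) * S) :=
      mul_le_mul hpphi hν (abs_nonneg _) zero_le_one
    have h4 : ((D:ℝ) * σ ^ (2 * δ)) * (C0 * σ ^ (-(δ/2)) * S)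
        = (D:ℝ) * C0 * σ ^ (3 * δ/2) * S := by
      rw [show (3:ℝ) * δ/2 = 2 * δ + -(δ/2) by ring, Real.rpow_add hσ0]; ring
    calc |(-(tau p lam t ^ 2) * φ t - pphi * ν t)|
        ≤ tau p lam t ^ 2 * |φ t| + |pphi| * |ν t| := h1
      _ ≤ (D:ℝ) * C0 * σ ^ (3 * δ/2) * S + Cν * σ ^ (3 * δ/2) * S := by
          rw [← h4]; linarith [h2, h3]
      _ = ((D:ℝ) * C0 + Cν) * σ ^ (3 * δ/2) * S := by ring
  have part3 : |(-(tau p lam t ^ 2) * φ t - pphi * ν t)| ≤ ((D:ℝ) * C0 + Cν) * σ ^ δ * S := by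
    calc |(-(tau p lam t ^ 2) * φ t - pphi * ν t)|
        ≤ ((D:ℝ) * C0 + Cν) * σ ^ (3 * δ/2) * S := hpsirhs
      _ ≤ ((D:ℝ) * C0 + Cν) * σ ^ δ * S := by
          apply mul_le_mul_of_nonneg_right (mul_le_mul_of_nonneg_left
            (hσpow _ _ (by linarith)) (by positivity)) hS0
  -- part 4
  have part4 : |pphi * ν t + Real.log (tstar / t) * (-(tau p lam t ^ 2) * φ t - pphi * ν t)|
      ≤ (Cν + (2/δ) * ((D:ℝ) * C0 + Cν)) * σ ^ δ * S := by
    have h1 : |pphi * ν t + Real.log (tstar / t) * (-(tau p lam t ^ 2) * φ t - pphi * ν t)|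
        ≤ |pphi * ν t|
          + Real.log (tstar / t) * |(-(tau p lam t ^ 2) * φ t - pphi * ν t)| := by
      calc |pphi * ν t + Real.log (tstar / t) * (-(tau p lam t ^ 2) * φ t - pphi * ν t)|
          ≤ |pphi * ν t| + |Real.log (tstar / t)
              * (-(tau p lam t ^ 2) * φ t - pphi * ν t)| := abs_add_le _ _
        _ = |pphi * ν t| + Real.log (tstar / t)
              * |(-(tau p lam t ^ 2) * φ t - pphi * ν t)| := by
            rw [abs_mul (Real.log (tstar / t)) (-(tau p lam t ^ 2) * φ t - pphi * ν t),
              abs_of_nonneg hlog0]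
    have h2 : |pphi * ν t| ≤ 1 * (Cν * σ ^ (3 * δ/2) * S) := by
      rw [abs_mul]
      exact mul_le_mul hpphi hν (abs_nonneg _) zero_le_one
    have h3 : Real.log (tstar / t) * |(-(tau p lam t ^ 2) * φ t - pphi * ν t)|
        ≤ ((2/δ) * σ ^ (-(δ/2))) * (((D:ℝ) * C0 + Cν) * σ ^ (3 * δ/2) * S) :=
      mul_le_mul hlog hpsirhs (abs_nonneg _) (by positivity)
    have h4 : ((2/δ) * σ ^ (-(δ/2))) * (((D:ℝ) * C0 + Cν) * σ ^ (3 * δ/2) * S)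
        = (2/δ) * ((D:ℝ) * C0 + Cν) * σ ^ δ * S := by
      rw [show (δ:ℝ) = -(δ/2) + 3 * δ/2 by ring, Real.rpow_add hσ0]; ring
    have h5 : Cν * σ ^ (3 * δ/2) * S ≤ Cν * σ ^ δ * S :=
      mul_le_mul_of_nonneg_right (mul_le_mul_of_nonneg_left
        (hσpow _ _ (by linarith)) hCν.le) hS0
    calc |pphi * ν t + Real.log (tstar / t) * (-(tau p lam t ^ 2) * φ t - pphi * ν t)|
        ≤ 1 * (Cν * σ ^ (3 * δ/2) * S)
          + ((2/δ) * σ ^ (-(δ/2))) * (((D:ℝ) * C0 + Cν) * σ ^ (3 * δ/2) * S) := by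
          linarith [h1, h2, h3]
      _ = Cν * σ ^ (3 * δ/2) * S + (2/δ) * ((D:ℝ) * C0 + Cν) * σ ^ δ * S := by
          rw [h4]; ring
      _ ≤ Cν * σ ^ δ * S + (2/δ) * ((D:ℝ) * C0 + Cν) * σ ^ δ * S := by linarith [h5]
      _ = (Cν + (2/δ) * ((D:ℝ) * C0 + Cν)) * σ ^ δ * S := by ring
  -- assembly
  rw [show -(p i) + p j = p j - p i by ring, hq1, htdU, hq3, htdph]
  calc tstar ^ (p j - p i) * |W i j|
      + tstar ^ (p j - p i)
        * |(-(p i * (if i = j then 1 else 0) * ν t) + Gfun p tstar i j t * W j i)|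
      + |(-(tau p lam t ^ 2) * φ t - pphi * ν t)|
      + |pphi * ν t + Real.log (tstar / t) * (-(tau p lam t ^ 2) * φ t - pphi * ν t)|
      ≤ Cκ * σ ^ δ * S + (Cν + (2/δ) * Cκ) * σ ^ δ * S + ((D:ℝ) * C0 + Cν) * σ ^ δ * S
        + (Cν + (2/δ) * ((D:ℝ) * C0 + Cν)) * σ ^ δ * S :=
      add_le_add (add_le_add (add_le_add part1 part2) part3) part4
    _ = (Cκ + (Cν + (2/δ) * Cκ) + ((D:ℝ) * C0 + Cν) + (Cν + (2/δ) * ((D:ℝ) * C0 + Cν)))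
        * σ ^ δ * S := by ring
end
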